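/- arXiv:1610.05199 — 10 statements merged into one kernel-verified Lean document; each statement's English description precedes it below -/
import Mathlib

section
/- The net-based and partition-based chaining functionals are equivalent: for every metric space (X,d) and every T ⊆ X one has γ₂*(T) ≤ γ₂(T), and there is a universal constant C such that γ₂(T) ≤ C·γ₂*(T). -/
open scoped ENNReal NNReal
open EMetric Set

noncomputable section

universe u

/-- Diameter of a set with respect to an extended distance function `D`. -/
def eDiam {X : Type u} (D : X → X → ℝ≥0∞) (A : Set X) : ℝ≥0∞ :=
  ⨆ x ∈ A, ⨆ y ∈ A, D x y

/-- Entropy numbers: `entN D n A` is the infimum over sets `S` of cardinality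
less than `2^(2^n)` of `sup_{x ∈ A} D(x, S)`. -/
def entN {X : Type u} (D : X → X → ℝ≥0∞) (n : ℕ) (A : Set X) : ℝ≥0∞ :=
  ⨅ (S : Finset X) (_ : S.card < 2 ^ 2 ^ n), ⨆ x ∈ A, ⨅ y ∈ S, D x y

/-- An admissible sequence of a set `T`: an increasing (refining) sequence of
partitions of `T`, the `n`-th one having fewer than `2^(2^n)` pieces.
`piece n x` is the element of the `n`-th partition containing `x`. -/
structure Admissible {X : Type u} (T : Set X) where
  piece : ℕ → X → Set X
  self_mem : ∀ n, ∀ x ∈ T, x ∈ piece n x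
  subset_base : ∀ n, ∀ x ∈ T, piece n x ⊆ T
  partition : ∀ n, ∀ x ∈ T, ∀ y ∈ T, y ∈ piece n x → piece n y = piece n x
  finite_pieces : ∀ n, {A : Set X | ∃ x ∈ T, piece n x = A}.Finite
  card_pieces : ∀ n, {A : Set X | ∃ x ∈ T, piece n x = A}.ncard < 2 ^ 2 ^ n
  nested : ∀ n, ∀ x ∈ T, piece (n + 1) x ⊆ piece n x

/-- The chaining functional `γ_{α,p}(T)` with respect to the extended distance `D`. -/
def gammaF {X : Type u} (D : X → X → ℝ≥0∞) (α p : ℝ) (T : Set X) : ℝ≥0∞ :=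
  ⨅ P : Admissible T,
    (⨆ x ∈ T, ∑' n : ℕ, ((2 : ℝ≥0∞) ^ ((n : ℝ) / α) * eDiam D (P.piece n x)) ^ p) ^ p⁻¹

/-- The net-based chaining functional `γ₂*(T)`: infimum over sequences of sets
`T_n ⊆ X` with `|T_n| < 2^(2^n)` of `sup_{x∈T} Σ_n 2^{n/2} d(x,T_n)`. -/
def gammaStar {X : Type u} [MetricSpace X] (T : Set X) : ℝ≥0∞ :=
  ⨅ (S : ℕ → Finset X) (_ : ∀ n, (S n).card < 2 ^ 2 ^ n),
    ⨆ x ∈ T, ∑' n : ℕ, (2 : ℝ≥0∞) ^ ((n : ℝ) / 2) * ⨅ y ∈ S n, edist x y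

/-!
Given an admissible sequence, one point chosen in each piece of `𝒜 n` gives a net `T n` with
`d(x, T n) ≤ diam (A n x)`; hence `γ₂* ≤ γ₂`.

Conversely, let `S k` be nets with `∑ₖ 2^{k/2} d(x, S k) ≤ V` on `T`. At scale `k` label `x` by
its nearest point in `S k` and by the largest level `j ≤ 2k` with `d(x, S k) ≤ 2⁻ʲ V`. Points
with the same label are within `2 · 2⁻ʲ V` of each other, which is at most `4 d(x, S k)` when
`j < 2k` (maximality of `j`) and at most `2 · 2^{-2k} V` otherwise. Partitioning `T` at stage `n`
by the labels at all scales `k < n - 1` is admissible, and the two bounds sum to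
`∑ₙ 2^{n/2} diam (A n x) ≤ 22 V`.
-/

open Metric

lemma gammaF_one {X : Type*} (D : X → X → ℝ≥0∞) (α : ℝ) (T : Set X) :
    gammaF D α 1 T =
      ⨅ P : Admissible T, ⨆ x ∈ T, ∑' n : ℕ, (2 : ℝ≥0∞) ^ ((n : ℝ) / α) * eDiam D (P.piece n x) := by
  simp [gammaF]

namespace Admissible

variable {X : Type*} {T : Set X}

lemma exists_small_finset_mem_piece (P : Admissible T) (n : ℕ) :
    ∃ R : Finset X, R.card < 2 ^ 2 ^ n ∧ ∀ x ∈ T, ∃ y ∈ R, y ∈ P.piece n x := by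
  classical
  rcases isEmpty_or_nonempty X with hX | hX
  · exact ⟨∅, by positivity, fun x => isEmptyElim x⟩
  set rep : Set X → X := fun A => Classical.epsilon (· ∈ A)
  have hfin := (P.finite_pieces n).image rep
  refine ⟨hfin.toFinset, ?_, fun x hx => ⟨rep (P.piece n x), ?_, ?_⟩⟩
  · rw [← Set.ncard_eq_toFinset_card _ hfin]
    exact (Set.ncard_image_le (P.finite_pieces n)).trans_lt (P.card_pieces n)
  · exact hfin.mem_toFinset.2 ⟨_, ⟨x, hx, rfl⟩, rfl⟩
  · exact Classical.epsilon_spec ⟨x, P.self_mem n x hx⟩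

lemma pieces_subset_image_fibers {β : Type*} (key : X → β) (F : Finset β)
    (hF : ∀ x ∈ T, key x ∈ F) :
    {A : Set X | ∃ x ∈ T, {z ∈ T | key z = key x} = A} ⊆
      (fun v => {z ∈ T | key z = v}) '' (F : Set β) := by
  rintro A ⟨x, hx, rfl⟩
  exact ⟨key x, hF x hx, rfl⟩

def ofFibers {β : ℕ → Type*} (key : ∀ n, X → β n)
    (refines : ∀ n x y, key (n + 1) x = key (n + 1) y → key n x = key n y)
    (small : ∀ n, ∃ F : Finset (β n), F.card < 2 ^ 2 ^ n ∧ ∀ x ∈ T, key n x ∈ F) :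
    Admissible T where
  piece n x := {z ∈ T | key n z = key n x}
  self_mem _ _ hx := ⟨hx, rfl⟩
  subset_base _ _ _ _ hz := hz.1
  partition _ _ _ _ _ hy := by simp only [hy.2]
  finite_pieces n := by
    obtain ⟨F, -, hF⟩ := small n
    exact (F.finite_toSet.image _).subset (pieces_subset_image_fibers _ F hF)
  card_pieces n := by
    obtain ⟨F, hcard, hF⟩ := small n
    calc _ ≤ ((fun v => {z ∈ T | key n z = v}) '' (F : Set (β n))).ncard :=
          Set.ncard_le_ncard (pieces_subset_image_fibers _ F hF) (F.finite_toSet.image _)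
      _ ≤ F.card := (Set.ncard_image_le F.finite_toSet).trans_eq (Set.ncard_coe_finset F)
      _ < 2 ^ 2 ^ n := hcard
  nested n _ _ _ hz := ⟨hz.1, refines n _ _ hz.2⟩

end Admissible

theorem gammaStar_le_gammaF {X : Type*} [MetricSpace X] (T : Set X) :
    gammaStar T ≤ gammaF (edist : X → X → ℝ≥0∞) 2 1 T := by
  rw [gammaF_one]
  refine le_iInf fun P => ?_
  choose R hRcard hR using P.exists_small_finset_mem_piece
  refine (iInf₂_le R hRcard).trans (iSup₂_mono fun x hx => ENNReal.tsum_le_tsum fun n => ?_)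
  obtain ⟨y, hyR, hy⟩ := hR n x hx
  gcongr
  exact (iInf₂_le y hyR).trans (edist_le_ediam_of_mem (P.self_mem n x hx) hy)

lemma two_mul_add_one_le_two_pow_two_pow (k : ℕ) : 2 * k + 1 ≤ 2 ^ 2 ^ k :=
  calc 2 * k + 1 ≤ 2 ^ (k + 1) := by rw [pow_succ]; have := k.lt_two_pow_self; omega
    _ ≤ 2 ^ 2 ^ k := Nat.pow_le_pow_right two_pos k.lt_two_pow_self

lemma two_pow_two_pow_mul_self (k : ℕ) : 2 ^ 2 ^ k * 2 ^ 2 ^ k = 2 ^ 2 ^ (k + 1) := by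
  rw [← pow_add, ← two_mul, ← pow_succ']

lemma prod_range_pred_lt_two_pow_two_pow (a : ℕ → ℕ) (ha : ∀ k, a k < 2 ^ 2 ^ (k + 1)) :
    ∀ n, ∏ k ∈ Finset.range (n - 1), a k < 2 ^ 2 ^ n
  | 0 => by simp
  | 1 => by simp
  | n + 2 => by
    rw [show n + 2 - 1 = n + 1 by omega, Finset.prod_range_succ, ← two_pow_two_pow_mul_self]
    exact Nat.mul_lt_mul'' (prod_range_pred_lt_two_pow_two_pow a ha (n + 1)) (ha n)

lemma one_le_two_rpow_half (k : ℕ) : (1 : ℝ≥0∞) ≤ 2 ^ ((k : ℝ) / 2) :=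
  ENNReal.rpow_zero (x := 2) ▸ ENNReal.rpow_le_rpow_of_exponent_le one_le_two (by positivity)

lemma two_rpow_half_add_two (k : ℕ) :
    (2 : ℝ≥0∞) ^ (((k + 2 : ℕ) : ℝ) / 2) = 2 * 2 ^ ((k : ℝ) / 2) := by
  rw [show ((k + 2 : ℕ) : ℝ) / 2 = 1 + (k : ℝ) / 2 by push_cast; ring,
    ENNReal.rpow_add _ _ two_ne_zero ENNReal.ofNat_ne_top, ENNReal.rpow_one]

lemma two_rpow_half_mul_inv_two_pow_le (k : ℕ) :
    (2 : ℝ≥0∞) ^ ((k : ℝ) / 2) * 2⁻¹ ^ (2 * k) ≤ 2⁻¹ ^ k := by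
  simp only [← ENNReal.rpow_natCast, ← ENNReal.rpow_neg_one, ← ENNReal.rpow_mul,
    ← ENNReal.rpow_add _ _ two_ne_zero ENNReal.ofNat_ne_top]
  exact ENNReal.rpow_le_rpow_of_exponent_le one_le_two (by push_cast; linarith [k.cast_nonneg (α := ℝ)])

section NetPartition

variable {X : Type*} [MetricSpace X] (S : ℕ → Finset X) (hS : ∀ k, (S k).Nonempty)

def netNearest (k : ℕ) (x : X) : X :=
  ((S k).finite_toSet.isCompact.exists_infEDist_eq_edist (hS k) x).choose

lemma netNearest_mem (k : ℕ) (x : X) : netNearest S hS k x ∈ S k :=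
  ((S k).finite_toSet.isCompact.exists_infEDist_eq_edist (hS k) x).choose_spec.1

lemma infEDist_eq_edist_netNearest (k : ℕ) (x : X) :
    infEDist x (S k) = edist x (netNearest S hS k x) :=
  ((S k).finite_toSet.isCompact.exists_infEDist_eq_edist (hS k) x).choose_spec.2

def netLevel (V : ℝ≥0∞) (k : ℕ) (x : X) : ℕ :=
  Nat.findGreatest (fun j => infEDist x (S k) ≤ 2⁻¹ ^ j * V) (2 * k)

lemma netLevel_le (V : ℝ≥0∞) (k : ℕ) (x : X) : netLevel S V k x ≤ 2 * k :=
  Nat.findGreatest_le _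

lemma infEDist_le_netLevel {V : ℝ≥0∞} {k : ℕ} {x : X} (hV : infEDist x (S k) ≤ V) :
    infEDist x (S k) ≤ 2⁻¹ ^ netLevel S V k x * V :=
  Nat.findGreatest_spec (P := fun j => infEDist x (S k) ≤ 2⁻¹ ^ j * V) (Nat.zero_le _)
    (by simpa using hV)

lemma inv_two_pow_netLevel_le {V : ℝ≥0∞} {k : ℕ} {x : X} (hk : netLevel S V k x < 2 * k) :
    2⁻¹ ^ netLevel S V k x * V ≤ 2 * infEDist x (S k) := by
  have hnext : 2⁻¹ ^ (netLevel S V k x + 1) * V < infEDist x (S k) :=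
    not_le.1 (Nat.findGreatest_is_greatest (Nat.lt_succ_self _) hk)
  calc 2⁻¹ ^ netLevel S V k x * V = 2 * (2⁻¹ ^ (netLevel S V k x + 1) * V) := by
        rw [pow_succ', ← mul_assoc, ← mul_assoc,
          ENNReal.mul_inv_cancel two_ne_zero ENNReal.ofNat_ne_top, one_mul]
    _ ≤ 2 * infEDist x (S k) := by gcongr

/-- Only the scales `k < n - 1` enter, so that the number of keys, at most
`∏_{k < n - 1} |S k| (2k + 1)`, stays below `2 ^ 2 ^ n`. -/
def netKey (V : ℝ≥0∞) (n : ℕ) (x : X) : Fin (n - 1) → X × ℕ :=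
  fun k => (netNearest S hS k x, netLevel S V k x)

lemma netKey_small (hcard : ∀ k, (S k).card < 2 ^ 2 ^ k)
    (V : ℝ≥0∞) (n : ℕ) :
    ∃ F : Finset (Fin (n - 1) → X × ℕ), F.card < 2 ^ 2 ^ n ∧ ∀ x, netKey S hS V n x ∈ F := by
  classical
  refine ⟨Fintype.piFinset fun k : Fin (n - 1) => S k ×ˢ Finset.range (2 * k + 1), ?_,
    fun x => Fintype.mem_piFinset.2 fun k => Finset.mem_product.2
      ⟨netNearest_mem S hS k x, Finset.mem_range.2 (Nat.lt_succ_of_le (netLevel_le S V k x))⟩⟩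
  simp only [Fintype.card_piFinset, Finset.card_product, Finset.card_range]
  rw [Fin.prod_univ_eq_prod_range (fun k => (S k).card * (2 * k + 1))]
  refine prod_range_pred_lt_two_pow_two_pow _ (fun k => ?_) n
  calc (S k).card * (2 * k + 1) < 2 ^ 2 ^ k * 2 ^ 2 ^ k :=
        Nat.mul_lt_mul_of_lt_of_le (hcard k) (two_mul_add_one_le_two_pow_two_pow k) (by positivity)
    _ = 2 ^ 2 ^ (k + 1) := two_pow_two_pow_mul_self k

def netAdmissible (T : Set X) (hcard : ∀ k, (S k).card < 2 ^ 2 ^ k)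
    (V : ℝ≥0∞) : Admissible T :=
  Admissible.ofFibers (netKey S hS V)
    (fun n _ _ h => funext fun k => congrFun h (Fin.castLE (by omega) k))
    (fun n => (netKey_small S hS hcard V n).imp fun _ hF => ⟨hF.1, fun x _ => hF.2 x⟩)

end NetPartition

section NetEstimates

variable {X : Type*} [MetricSpace X] {S : ℕ → Finset X} {T : Set X} {V : ℝ≥0∞}

lemma two_rpow_half_mul_netLevel_le (k : ℕ) (x : X) :
    (2 : ℝ≥0∞) ^ ((k : ℝ) / 2) * (2 * (2⁻¹ ^ netLevel S V k x * V)) ≤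
      4 * ((2 : ℝ≥0∞) ^ ((k : ℝ) / 2) * infEDist x (S k)) + 2 * (2⁻¹ ^ k * V) := by
  rcases (netLevel_le S V k x).lt_or_eq with hk | hk
  · calc _ ≤ (2 : ℝ≥0∞) ^ ((k : ℝ) / 2) * (2 * (2 * infEDist x (S k))) := by
          gcongr _ * (2 * ?_); exact inv_two_pow_netLevel_le S hk
      _ = 4 * ((2 : ℝ≥0∞) ^ ((k : ℝ) / 2) * infEDist x (S k)) := by ring
      _ ≤ _ := le_self_add
  · calc _ = 2 * ((2 : ℝ≥0∞) ^ ((k : ℝ) / 2) * 2⁻¹ ^ (2 * k) * V) := by rw [hk]; ring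
      _ ≤ 2 * (2⁻¹ ^ k * V) := by gcongr; exact two_rpow_half_mul_inv_two_pow_le k
      _ ≤ _ := le_add_self

variable (hV : ∀ x ∈ T, ∑' k : ℕ, (2 : ℝ≥0∞) ^ ((k : ℝ) / 2) * infEDist x (S k) ≤ V)
include hV

lemma infEDist_le_of_tsum_le (k : ℕ) {x : X} (hx : x ∈ T) : infEDist x (S k) ≤ V :=
  calc infEDist x (S k) ≤ (2 : ℝ≥0∞) ^ ((k : ℝ) / 2) * infEDist x (S k) :=
        le_mul_of_one_le_left' (one_le_two_rpow_half k)
    _ ≤ V := (ENNReal.le_tsum k).trans (hV x hx)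

lemma ediam_le_of_tsum_le (hS : (S 0).Nonempty) (hcard : (S 0).card < 2) : ediam T ≤ 2 * V := by
  obtain ⟨t, ht⟩ : ∃ t, S 0 = {t} := Finset.card_eq_one.1 (by have := hS.card_pos; omega)
  have hdist : ∀ x ∈ T, edist x t ≤ V := fun x hx => by
    simpa [ht] using infEDist_le_of_tsum_le hV 0 hx
  refine ediam_le_iff.2 fun x hx y hy => ?_
  calc edist x y ≤ edist x t + edist y t := edist_triangle_right _ _ _
    _ ≤ V + V := add_le_add (hdist x hx) (hdist y hy)
    _ = 2 * V := (two_mul V).symm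

variable (hS : ∀ k, (S k).Nonempty) (hcard : ∀ k, (S k).card < 2 ^ 2 ^ k)

lemma edist_netNearest_le_of_mem_piece (k : ℕ) {x y : X}
    (hy : y ∈ (netAdmissible S hS T hcard V).piece (k + 2) x) :
    edist y (netNearest S hS k x) ≤ 2⁻¹ ^ netLevel S V k x * V := by
  obtain ⟨hyT, hkey⟩ := hy
  have hk := congrFun hkey ⟨k, by omega⟩
  simp only [netKey, Prod.mk.injEq] at hk
  rw [← hk.1, ← hk.2, ← infEDist_eq_edist_netNearest]
  exact infEDist_le_netLevel S (infEDist_le_of_tsum_le hV k hyT)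

lemma ediam_netAdmissible_piece_le (k : ℕ) (x : X) :
    ediam ((netAdmissible S hS T hcard V).piece (k + 2) x) ≤ 2 * (2⁻¹ ^ netLevel S V k x * V) := by
  refine ediam_le_iff.2 fun y hy z hz => ?_
  calc edist y z ≤ edist y (netNearest S hS k x) + edist z (netNearest S hS k x) :=
        edist_triangle_right _ _ _
    _ ≤ _ := add_le_add (edist_netNearest_le_of_mem_piece hV hS hcard k hy)
        (edist_netNearest_le_of_mem_piece hV hS hcard k hz)
    _ = _ := (two_mul _).symm

lemma sum_range_two_netAdmissible_le {x : X} (hx : x ∈ T) :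
    ∑ n ∈ Finset.range 2, (2 : ℝ≥0∞) ^ ((n : ℝ) / 2) *
      ediam ((netAdmissible S hS T hcard V).piece n x) ≤ 6 * V := by
  have hT : ∀ n, ediam ((netAdmissible S hS T hcard V).piece n x) ≤ 2 * V := fun n =>
    (ediam_mono ((netAdmissible S hS T hcard V).subset_base n x hx)).trans
      (ediam_le_of_tsum_le hV (hS 0) (hcard 0))
  have hsqrt2 : (2 : ℝ≥0∞) ^ ((1 : ℝ) / 2) ≤ 2 :=
    (ENNReal.rpow_le_rpow_of_exponent_le one_le_two (by norm_num)).trans_eq (ENNReal.rpow_one 2)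
  simp only [Finset.sum_range_succ, Finset.sum_range_zero, Nat.cast_zero, Nat.cast_one,
    zero_div, ENNReal.rpow_zero, zero_add, one_mul]
  calc _ ≤ 2 * V + 2 * (2 * V) := add_le_add (hT 0) (mul_le_mul' hsqrt2 (hT 1))
    _ = 6 * V := by ring

lemma tsum_netAdmissible_piece_add_two_le {x : X} (hx : x ∈ T) :
    ∑' k : ℕ, (2 : ℝ≥0∞) ^ (((k + 2 : ℕ) : ℝ) / 2) *
      ediam ((netAdmissible S hS T hcard V).piece (k + 2) x) ≤ 16 * V := by
  have hterm (k : ℕ) : (2 : ℝ≥0∞) ^ (((k + 2 : ℕ) : ℝ) / 2) *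
      ediam ((netAdmissible S hS T hcard V).piece (k + 2) x) ≤
        8 * ((2 : ℝ≥0∞) ^ ((k : ℝ) / 2) * infEDist x (S k)) + 4 * 2⁻¹ ^ k * V := by
    rw [two_rpow_half_add_two, mul_assoc]
    calc _ ≤ 2 * ((2 : ℝ≥0∞) ^ ((k : ℝ) / 2) * (2 * (2⁻¹ ^ netLevel S V k x * V))) := by
          gcongr; exact ediam_netAdmissible_piece_le hV hS hcard k x
      _ ≤ 2 * (4 * ((2 : ℝ≥0∞) ^ ((k : ℝ) / 2) * infEDist x (S k)) + 2 * (2⁻¹ ^ k * V)) := by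
          gcongr; exact two_rpow_half_mul_netLevel_le k x
      _ = _ := by ring
  calc _ ≤ ∑' k : ℕ, (8 * ((2 : ℝ≥0∞) ^ ((k : ℝ) / 2) * infEDist x (S k)) + 4 * 2⁻¹ ^ k * V) :=
        ENNReal.tsum_le_tsum hterm
    _ = 8 * ∑' k : ℕ, (2 : ℝ≥0∞) ^ ((k : ℝ) / 2) * infEDist x (S k) +
          4 * (∑' k : ℕ, (2⁻¹ : ℝ≥0∞) ^ k) * V := by
        rw [ENNReal.tsum_add, ENNReal.tsum_mul_left, ENNReal.tsum_mul_right, ENNReal.tsum_mul_left]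
    _ ≤ 8 * V + 4 * 2 * V := by rw [ENNReal.tsum_geometric_two]; gcongr; exact hV x hx
    _ = 16 * V := by ring

lemma tsum_netAdmissible_le {x : X} (hx : x ∈ T) :
    ∑' n : ℕ, (2 : ℝ≥0∞) ^ ((n : ℝ) / 2) * ediam ((netAdmissible S hS T hcard V).piece n x) ≤
      22 * V :=
  calc _ = ∑ n ∈ Finset.range 2, (2 : ℝ≥0∞) ^ ((n : ℝ) / 2) *
          ediam ((netAdmissible S hS T hcard V).piece n x) +
        ∑' k : ℕ, (2 : ℝ≥0∞) ^ (((k + 2 : ℕ) : ℝ) / 2) *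
          ediam ((netAdmissible S hS T hcard V).piece (k + 2) x) :=
        ENNReal.summable.sum_add_tsum_nat_add'.symm
    _ ≤ 6 * V + 16 * V := add_le_add (sum_range_two_netAdmissible_le hV hS hcard hx)
        (tsum_netAdmissible_piece_add_two_le hV hS hcard hx)
    _ = 22 * V := by ring

end NetEstimates

lemma gammaF_empty {X : Type*} (D : X → X → ℝ≥0∞) (α : ℝ) : gammaF D α 1 (∅ : Set X) = 0 := by
  rw [gammaF_one]
  refine le_antisymm ((iInf_le _ (Admissible.ofFibers (fun _ _ => ()) (fun _ _ _ _ => rfl)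
    fun _ => ⟨∅, by positivity, fun _ hx => hx.elim⟩)).trans (by simp)) zero_le

theorem gammaF_le_of_nets {X : Type*} [MetricSpace X] {T : Set X} {S : ℕ → Finset X}
    {V : ℝ≥0∞} (hS : ∀ k, (S k).Nonempty) (hcard : ∀ k, (S k).card < 2 ^ 2 ^ k)
    (hV : ∀ x ∈ T, ∑' k : ℕ, (2 : ℝ≥0∞) ^ ((k : ℝ) / 2) * infEDist x (S k) ≤ V) :
    gammaF (edist : X → X → ℝ≥0∞) 2 1 T ≤ 22 * V := by
  rw [gammaF_one]
  exact (iInf_le _ (netAdmissible S hS T hcard V)).trans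
    (iSup₂_le fun x hx => tsum_netAdmissible_le hV hS hcard hx)

theorem gammaF_le_mul_gammaStar {X : Type*} [MetricSpace X] (T : Set X) :
    gammaF (edist : X → X → ℝ≥0∞) 2 1 T ≤ 22 * gammaStar T := by
  rcases T.eq_empty_or_nonempty with rfl | ⟨x₀, hx₀⟩
  · simp [gammaF_empty]
  simp only [gammaStar, ENNReal.mul_iInf_of_ne (a := 22) (by norm_num) (by norm_num)]
  refine le_iInf₂ fun S hcard => ?_
  by_cases hS : ∀ k, (S k).Nonempty
  · exact gammaF_le_of_nets hS hcard fun x hx =>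
      le_iSup₂ (f := fun x _ => ∑' n : ℕ, (2 : ℝ≥0∞) ^ ((n : ℝ) / 2) * ⨅ y ∈ S n, edist x y) x hx
  obtain ⟨k, hk⟩ := not_forall.1 hS
  have hsup : (⨆ x ∈ T, ∑' n : ℕ, (2 : ℝ≥0∞) ^ ((n : ℝ) / 2) * ⨅ y ∈ S n, edist x y) = ∞ := by
    refine top_unique ((le_iSup₂_of_le x₀ hx₀ (ENNReal.le_tsum k)).trans' ?_)
    simp [Finset.not_nonempty_iff_eq_empty.1 hk]
  simp [hsup]

/-- The net-based and partition-based chaining functionals are equivalent: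
`γ₂*(T) ≤ γ₂(T)` and `γ₂(T) ≤ C·γ₂*(T)` for a universal constant `C`. -/
theorem gammaStar_equiv_gamma :
    ∃ C : ℝ≥0∞, 0 < C ∧ C ≠ ∞ ∧
      ∀ (X : Type u) [MetricSpace X] (T : Set X),
        gammaStar T ≤ gammaF (edist : X → X → ℝ≥0∞) 2 1 T ∧
        gammaF (edist : X → X → ℝ≥0∞) 2 1 T ≤ C * gammaStar T :=
  ⟨22, by norm_num, by norm_num, fun _ _ T => ⟨gammaStar_le_gammaF T, gammaF_le_mul_gammaStar T⟩⟩
end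
end

section
/- (Dudley-type inequality for chaining functionals.) Let (X,d) be a metric space, T ⊆ X, α > 0 and p ≥ 1. Then there is a constant C depending only on α such that γ_{α,p}(T) ≤ C · [ Σ_{n≥0} (2^{n/α} e_n(T))^p ]^{1/p}. -/
open scoped ENNReal NNReal
open EMetric Set

noncomputable section

universe u

/-!
Choose for each `n` a set `S n` of fewer than `2^(2^n)` points within `2 e_n(T)` of every point of
`T`, with a projection `π n` of `T` onto `S n`; such nets exist since the infimum defining `e_n(T)`
is attained up to a factor 2 (if `e_n(T) = 0`, then `T` itself has fewer than `2^(2^n)` points).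
Let `A_n(x)` be the set of points of `T` that no projection `π k`, `k < n`, separates from `x`.
These partitions are nested, `A_n` has at most `∏_{k<n} |S k| < 2^(2^n)` pieces, and two points of
`A_n(x)` share their projection onto `S (n-1)` (onto `S 0` if `n = 0`, since `|S 0| ≤ 1`), so that
`diam A_n(x) ≤ 4 e_{n-1}(T)`. The shift `n ↦ n - 1` costs the factor `1 + 2^(1/α)` in the
weighted `ℓ^p` norm.
-/

def seqNorm (p : ℝ) (f : ℕ → ℝ≥0∞) : ℝ≥0∞ :=
  (∑' n, f n ^ p) ^ p⁻¹

section SeqNorm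

variable {p : ℝ}

lemma seqNorm_const_mul (hp : 0 < p) (c : ℝ≥0∞) (f : ℕ → ℝ≥0∞) :
    seqNorm p (fun n => c * f n) = c * seqNorm p f := by
  simp only [seqNorm, ENNReal.mul_rpow_of_nonneg _ _ hp.le, ENNReal.tsum_mul_left,
    ENNReal.mul_rpow_of_nonneg _ _ (inv_nonneg.2 hp.le), ← ENNReal.rpow_mul,
    mul_inv_cancel₀ hp.ne', ENNReal.rpow_one]

lemma seqNorm_shift_le (hp : 1 ≤ p) {w a : ℕ → ℝ≥0∞} {c : ℝ≥0∞} (hw : ∀ n, w (n + 1) ≤ c * w n) :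
    seqNorm p (fun n => w n * a (n - 1)) ≤ (1 + c) * seqNorm p (fun n => w n * a n) := by
  have hp0 : 0 < p := zero_lt_one.trans_le hp
  set s := ∑' n, (w n * a n) ^ p
  have hsum : ∑' n, (w n * a (n - 1)) ^ p ≤ (1 + c ^ p) * s := by
    have hstep : ∀ n, (w (n + 1) * a n) ^ p ≤ c ^ p * (w n * a n) ^ p := fun n => by
      rw [← ENNReal.mul_rpow_of_nonneg _ _ hp0.le, ← mul_assoc]
      gcongr
      exact hw n
    rw [tsum_eq_zero_add' ENNReal.summable, add_mul, one_mul, ← ENNReal.tsum_mul_left]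
    exact add_le_add (ENNReal.le_tsum (f := fun n => (w n * a n) ^ p) 0)
      (ENNReal.tsum_le_tsum hstep)
  calc seqNorm p (fun n => w n * a (n - 1)) ≤ ((1 + c ^ p) * s) ^ p⁻¹ := by
        unfold seqNorm; gcongr
    _ = (1 + c ^ p) ^ p⁻¹ * seqNorm p (fun n => w n * a n) :=
        ENNReal.mul_rpow_of_nonneg _ _ (inv_nonneg.2 hp0.le)
    _ ≤ (1 + c) * seqNorm p (fun n => w n * a n) := by
        gcongr
        calc (1 + c ^ p) ^ p⁻¹ ≤ 1 ^ p⁻¹ + (c ^ p) ^ p⁻¹ :=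
              ENNReal.rpow_add_le_add_rpow _ _ (inv_nonneg.2 hp0.le) (inv_le_one_of_one_le₀ hp)
          _ = 1 + c := by
              rw [ENNReal.one_rpow, ← ENNReal.rpow_mul, mul_inv_cancel₀ hp0.ne', ENNReal.rpow_one]

end SeqNorm

lemma prod_lt_two_pow_two_pow {c : ℕ → ℕ} (hc : ∀ k, c k < 2 ^ 2 ^ k) (n : ℕ) :
    ∏ k ∈ Finset.range n, c k < 2 ^ 2 ^ n := by
  induction n with
  | zero => simp
  | succ n ih =>
    rw [Finset.prod_range_succ, pow_succ, pow_mul, sq]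
    exact Nat.mul_lt_mul'' ih (hc n)

lemma eDiam_le_two_mul {X : Type u} [PseudoEMetricSpace X] {A : Set X} {f : X → X} {r : ℝ≥0∞}
    (hf : ∀ y ∈ A, edist y (f y) ≤ r) (hA : ∀ y ∈ A, ∀ z ∈ A, f y = f z) :
    eDiam edist A ≤ 2 * r :=
  iSup₂_le fun y hy => iSup₂_le fun z hz =>
    calc edist y z ≤ edist y (f y) + edist z (f z) := by
          rw [hA y hy z hz, edist_comm z]; exact edist_triangle _ _ _
      _ ≤ 2 * r := by rw [two_mul]; exact add_le_add (hf y hy) (hf z hz)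

section Nets

variable {X : Type u} {T : Set X} {S : ℕ → Finset X} {π : ℕ → X → X}

def netPiece (T : Set X) (π : ℕ → X → X) (n : ℕ) (x : X) : Set X :=
  {y ∈ T | ∀ k < n, π k y = π k x}

lemma setOf_netPiece_subset (hπS : ∀ n, ∀ x ∈ T, π n x ∈ S n) (n : ℕ) :
    {A | ∃ x ∈ T, netPiece T π n x = A} ⊆
      (fun f : Fin n → X => {y ∈ T | ∀ k : Fin n, π k y = f k}) ''
        Fintype.piFinset fun k : Fin n => S k := by
  rintro _ ⟨x, hx, rfl⟩
  refine ⟨fun k => π k x, Fintype.mem_piFinset.2 fun k => hπS k x hx, ?_⟩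
  ext y
  exact and_congr_right fun _ => ⟨fun h k hk => h ⟨k, hk⟩, fun h k => h k k.2⟩

lemma finite_setOf_netPiece (hπS : ∀ n, ∀ x ∈ T, π n x ∈ S n) (n : ℕ) :
    {A | ∃ x ∈ T, netPiece T π n x = A}.Finite :=
  ((Fintype.piFinset fun k : Fin n => S k).finite_toSet.image _).subset
    (setOf_netPiece_subset hπS n)

lemma ncard_setOf_netPiece_lt (hS : ∀ n, (S n).card < 2 ^ 2 ^ n)
    (hπS : ∀ n, ∀ x ∈ T, π n x ∈ S n) (n : ℕ) :
    {A | ∃ x ∈ T, netPiece T π n x = A}.ncard < 2 ^ 2 ^ n :=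
  calc {A | ∃ x ∈ T, netPiece T π n x = A}.ncard
      ≤ (Fintype.piFinset fun k : Fin n => S k).card := by
        grw [Set.ncard_le_ncard (setOf_netPiece_subset hπS n)
          ((Fintype.piFinset _).finite_toSet.image _), Set.ncard_image_le
          (Fintype.piFinset _).finite_toSet, Set.ncard_coe_finset]
    _ = ∏ k ∈ Finset.range n, (S k).card := by
        rw [Fintype.card_piFinset, Fin.prod_univ_eq_prod_range (fun k => (S k).card)]
    _ < 2 ^ 2 ^ n := prod_lt_two_pow_two_pow hS n

variable (T S π) in
def Admissible.ofNets (hS : ∀ n, (S n).card < 2 ^ 2 ^ n) (hπS : ∀ n, ∀ x ∈ T, π n x ∈ S n) :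
    Admissible T where
  piece := netPiece T π
  self_mem _ _ hx := ⟨hx, fun _ _ => rfl⟩
  subset_base _ _ _ _ hy := hy.1
  partition n x _ y _ hyx := by
    ext z
    exact and_congr_right fun _ =>
      forall₂_congr fun k hk => ⟨fun h => h.trans (hyx.2 k hk), fun h => h.trans (hyx.2 k hk).symm⟩
  finite_pieces := finite_setOf_netPiece hπS
  card_pieces := ncard_setOf_netPiece_lt hS hπS
  nested n _ _ _ hy := ⟨hy.1, fun k hk => hy.2 k (hk.trans n.lt_succ_self)⟩

lemma map_pred_eq_of_mem_netPiece (hS : ∀ n, (S n).card < 2 ^ 2 ^ n)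
    (hπS : ∀ n, ∀ x ∈ T, π n x ∈ S n) {n : ℕ} {x y z : X} (hy : y ∈ netPiece T π n x)
    (hz : z ∈ netPiece T π n x) : π (n - 1) y = π (n - 1) z := by
  cases n with
  | zero =>
    have hS0 : (S 0).card ≤ 1 := Nat.lt_succ_iff.1 (hS 0)
    exact Finset.card_le_one.1 hS0 _ (hπS 0 y hy.1) _ (hπS 0 z hz.1)
  | succ m => exact (hy.2 m m.lt_succ_self).trans (hz.2 m m.lt_succ_self).symm

lemma gammaF_le_of_nets_s2 [PseudoEMetricSpace X] {α p : ℝ} (hp : 1 ≤ p)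
    (hS : ∀ n, (S n).card < 2 ^ 2 ^ n) {r : ℕ → ℝ≥0∞}
    (hπ : ∀ n, ∀ x ∈ T, π n x ∈ S n ∧ edist x (π n x) ≤ r n) :
    gammaF edist α p T ≤
      2 * (1 + 2 ^ (1 / α)) * seqNorm p (fun n => 2 ^ ((n : ℝ) / α) * r n) := by
  have hp0 : 0 < p := zero_lt_one.trans_le hp
  have hπS n x hx := (hπ n x hx).1
  have hdiam : ∀ n, ∀ x ∈ T, eDiam edist (netPiece T π n x) ≤ 2 * r (n - 1) := fun n x hx =>
    eDiam_le_two_mul (fun y hy => (hπ (n - 1) y hy.1).2)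
      fun y hy z hz => map_pred_eq_of_mem_netPiece hS hπS hy hz
  have hweight : ∀ n : ℕ, (2 : ℝ≥0∞) ^ (((n + 1 : ℕ) : ℝ) / α) ≤
      2 ^ (1 / α) * 2 ^ ((n : ℝ) / α) := fun n => by
    rw [← ENNReal.rpow_add _ _ two_ne_zero ENNReal.ofNat_ne_top, Nat.cast_succ, add_div, add_comm]
  calc gammaF edist α p T
      ≤ seqNorm p (fun n => 2 ^ ((n : ℝ) / α) * (2 * r (n - 1))) := by
        refine (iInf_le _ (Admissible.ofNets T S π hS hπS)).trans ?_
        unfold seqNorm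
        gcongr
        exact iSup₂_le fun x hx => ENNReal.tsum_le_tsum fun n => by
          gcongr; exact mul_le_mul_right (hdiam n x hx) _
    _ = 2 * seqNorm p (fun n => 2 ^ ((n : ℝ) / α) * r (n - 1)) := by
        simp_rw [mul_left_comm _ (2 : ℝ≥0∞)]; exact seqNorm_const_mul hp0 _ _
    _ ≤ 2 * ((1 + 2 ^ (1 / α)) * seqNorm p (fun n => 2 ^ ((n : ℝ) / α) * r n)) := by
        gcongr; exact seqNorm_shift_le hp hweight
    _ = _ := (mul_assoc _ _ _).symm

end Nets

section Entropy

variable {X : Type u} {T : Set X} {n : ℕ}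

lemma exists_net_of_entN_lt [PseudoEMetricSpace X] {r : ℝ≥0∞} (h : entN edist n T < r) :
    ∃ S : Finset X, S.card < 2 ^ 2 ^ n ∧ ∃ π : X → X, ∀ x ∈ T, π x ∈ S ∧ edist x (π x) < r := by
  obtain ⟨S, hS, hSr⟩ : ∃ S : Finset X, S.card < 2 ^ 2 ^ n ∧ ⨆ x ∈ T, ⨅ y ∈ S, edist x y < r := by
    simpa only [entN, iInf_lt_iff, exists_prop] using h
  have hnear : ∀ x ∈ T, ∃ y ∈ S, edist x y < r := fun x hx => by
    simpa only [iInf_lt_iff, exists_prop] using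
      (le_iSup₂ (f := fun x (_ : x ∈ T) => ⨅ y ∈ S, edist x y) x hx).trans_lt hSr
  classical
  refine ⟨S, hS, fun x => if h : ∃ y ∈ S, edist x y < r then h.choose else x, fun x hx => ?_⟩
  dsimp only
  rw [dif_pos (hnear x hx)]
  exact (hnear x hx).choose_spec

/-- Two distinct points of `F` cannot share their projection onto a net of mesh less than half
the minimal distance in `F`. -/
lemma card_lt_of_entN_eq_zero [EMetricSpace X] (h : entN edist n T = 0) {F : Finset X}
    (hF : ↑F ⊆ T) : F.card < 2 ^ 2 ^ n := by
  set δ := F.offDiag.inf fun q => edist q.1 q.2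
  have hδ : δ ≠ 0 := by
    refine (Finset.lt_inf_iff ENNReal.zero_lt_top).2 (fun q hq => ?_) |>.ne'
    obtain ⟨-, -, hne⟩ := Finset.mem_offDiag.1 hq
    exact edist_pos.2 hne
  obtain ⟨S, hS, π, hπ⟩ := exists_net_of_entN_lt (h ▸ ENNReal.half_pos hδ)
  by_contra! hcard
  obtain ⟨x, hx, y, hy, hxy, hπxy⟩ :=
    Finset.exists_ne_map_eq_of_card_lt_of_maps_to (hS.trans_le hcard) fun x hx => (hπ x (hF hx)).1
  have hδxy : δ ≤ edist x y :=
    Finset.inf_le (f := fun q : X × X => edist q.1 q.2) (b := (x, y))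
      (Finset.mem_offDiag.2 ⟨hx, hy, hxy⟩)
  have : edist x y < δ :=
    calc edist x y ≤ edist x (π x) + edist y (π y) := by
          rw [hπxy, edist_comm y]; exact edist_triangle _ _ _
      _ < δ / 2 + δ / 2 := ENNReal.add_lt_add (hπ x (hF hx)).2 (hπ y (hF hy)).2
      _ = δ := ENNReal.add_halves δ
  exact this.not_ge hδxy

lemma exists_finset_superset_of_entN_eq_zero [EMetricSpace X] (h : entN edist n T = 0) :
    ∃ S : Finset X, S.card < 2 ^ 2 ^ n ∧ T ⊆ S := by
  have hT : T.Finite := by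
    by_contra hT
    obtain ⟨F, hF, hcard⟩ := Set.Infinite.exists_subset_card_eq hT (2 ^ 2 ^ n)
    exact (card_lt_of_entN_eq_zero h hF).ne hcard
  exact ⟨hT.toFinset, card_lt_of_entN_eq_zero h (by simp), by simp⟩

lemma exists_net_two_mul_entN [EMetricSpace X] (T : Set X) (n : ℕ) :
    ∃ S : Finset X, S.card < 2 ^ 2 ^ n ∧
      ∃ π : X → X, ∀ x ∈ T, π x ∈ S ∧ edist x (π x) ≤ 2 * entN edist n T := by
  by_cases h0 : entN edist n T = 0
  · obtain ⟨S, hS, hTS⟩ := exists_finset_superset_of_entN_eq_zero h0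
    exact ⟨S, hS, id, fun x hx => ⟨hTS hx, by simp⟩⟩
  by_cases htop : entN edist n T = ∞
  · rcases T.eq_empty_or_nonempty with rfl | ⟨x₀, -⟩
    · exact ⟨∅, by positivity, id, fun _ => False.elim⟩
    · exact ⟨{x₀}, by simp, fun _ => x₀, by simp [htop]⟩
  obtain ⟨S, hS, π, hπ⟩ :=
    exists_net_of_entN_lt (two_mul (entN edist n T) ▸ ENNReal.lt_add_right htop h0)
  exact ⟨S, hS, π, fun x hx => ⟨(hπ x hx).1, (hπ x hx).2.le⟩⟩

end Entropy

theorem dudley_inequality_general (α : ℝ) :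
    ∃ C : ℝ≥0∞, 0 < C ∧ C ≠ ∞ ∧
      ∀ (X : Type u) [MetricSpace X] (T : Set X) (p : ℝ), 1 ≤ p →
        gammaF (edist : X → X → ℝ≥0∞) α p T ≤
          C * (∑' n : ℕ,
            ((2 : ℝ≥0∞) ^ ((n : ℝ) / α) * entN (edist : X → X → ℝ≥0∞) n T) ^ p) ^ p⁻¹ := by
  refine ⟨4 * (1 + 2 ^ (1 / α)), by positivity, by finiteness, fun X _ T p hp => ?_⟩
  choose S hS π hπ using exists_net_two_mul_entN T
  calc gammaF edist α p T
      ≤ 2 * (1 + 2 ^ (1 / α)) * seqNorm p (fun n => 2 ^ ((n : ℝ) / α) * (2 * entN edist n T)) :=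
        gammaF_le_of_nets_s2 hp hS hπ
    _ = 4 * (1 + 2 ^ (1 / α)) * seqNorm p (fun n => 2 ^ ((n : ℝ) / α) * entN edist n T) := by
        simp_rw [mul_left_comm _ (2 : ℝ≥0∞), seqNorm_const_mul (zero_lt_one.trans_le hp)]
        ring

/-- **Dudley-type inequality** (Lemma 4.3): `γ_{α,p}(T) ≤ C [Σ_n (2^{n/α} e_n(T))^p]^{1/p}`
with `C` depending only on `α`. -/
theorem dudley_inequality (α : ℝ) (hα : 0 < α) :
    ∃ C : ℝ≥0∞, 0 < C ∧ C ≠ ∞ ∧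
      ∀ (X : Type u) [MetricSpace X] (T : Set X) (p : ℝ), 1 ≤ p →
        gammaF (edist : X → X → ℝ≥0∞) α p T ≤
          C * (∑' n : ℕ,
            ((2 : ℝ≥0∞) ^ ((n : ℝ) / α) * entN (edist : X → X → ℝ≥0∞) n T) ^ p) ^ p⁻¹ :=
  dudley_inequality_general α
end
end

section
/- (Local form of Dudley's inequality.) Let (X,d) be a metric space, T ⊆ X, α > 0 and p ≥ 1. There exist constants C > 0 and a > 0 depending only on α such that γ_{α,p}(T) ≤ C · [ sup_{x∈T} Σ_{n≥0} (2^{n/α} e_n^{a,x}(T))^p ]^{1/p}, where e_n^{a,x}(T) := sup{ r ≥ 0 : e_n(T ∩ B(x, r/a)) > r } is the local entropy number and B(x,s) := {y ∈ X : d(x,y) ≤ s}. -/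
open scoped ENNReal NNReal
open EMetric Set

noncomputable section

universe u

/-- The local entropy number `e_n^{a,x}(T) = sup{ r ≥ 0 : e_n(T ∩ B(x, r/a)) > r }`. -/
def locEnt {X : Type u} [MetricSpace X] (n : ℕ) (a : ℝ≥0) (x : X) (T : Set X) : ℝ≥0∞ :=
  sSup {r : ℝ≥0∞ | r < entN (edist : X → X → ℝ≥0∞) n (T ∩ EMetric.closedBall x (r / a))}

/-!
The partitions are built greedily. A piece `A` of the `n`-th partition is split along a net of
fewer than `2^(2^n)` points at scale `r ≈ max (a · diam A) (inf_{z ∈ A} e_n^{a,z}(T))`: `A` lies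
in the ball of radius `r / a` around a near-minimiser `c` of the local entropy, and since
`e_n^{a,c}(T) < r` that ball has `n`-th entropy number at most `r`. So the diameters `D_n` of the
pieces containing `x` obey `D_{n+1} ≤ 2a D_n + 2 e_n^{a,x}(T) + (slack)`, while
`D_0 ≤ 2 e_0^{a,x}(T) / a` because `a < 1/2`. For `a` so small that `2^{1/α} · 2a ≤ 1/2`, the
weighted diameters `2^{n/α} D_n` are at most half their predecessor plus a forcing term, and
convexity of `t ↦ t^p` turns this recursion into the `ℓ^p` bound.
-/

open Metric

section Refinement

variable {X : Type u} {ι : Type*} {T : Set X} {label : ℕ → Set X → X → ι} {n : ℕ} {x y : X}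

variable (T label) in
def refinementPiece : ℕ → X → Set X
  | 0, _ => T
  | n + 1, x =>
      {z ∈ refinementPiece n x |
        label n (refinementPiece n x) z = label n (refinementPiece n x) x}

namespace refinementPiece

theorem succ_subset : refinementPiece T label (n + 1) x ⊆ refinementPiece T label n x :=
  sep_subset _ _

theorem subset : refinementPiece T label n x ⊆ T := by
  induction n with
  | zero => exact subset_rfl
  | succ n ih => exact succ_subset.trans ih

theorem mem_self (hx : x ∈ T) : x ∈ refinementPiece T label n x := by
  induction n with
  | zero => exact hx
  | succ n ih => exact ⟨ih, rfl⟩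

theorem eq_of_mem (hy : y ∈ refinementPiece T label n x) :
    refinementPiece T label n y = refinementPiece T label n x := by
  induction n with
  | zero => rfl
  | succ n ih =>
    obtain ⟨hy, hlabel⟩ := hy
    simp only [refinementPiece, ih hy, hlabel]

theorem image_succ_subset :
    refinementPiece T label (n + 1) '' T ⊆
      ⋃ A ∈ refinementPiece T label n '' T,
        (fun w => {z ∈ A | label n A z = w}) '' range (label n A) := by
  rintro _ ⟨x, hx, rfl⟩
  exact mem_biUnion (mem_image_of_mem _ hx) (mem_image_of_mem _ (mem_range_self x))

theorem encard_image_lt (hlabel : ∀ n A, (range (label n A)).encard ≤ 2 ^ 2 ^ n) (n : ℕ) :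
    (refinementPiece T label n '' T).encard < 2 ^ 2 ^ n := by
  induction n with
  | zero =>
    refine (encard_le_one_iff.mpr ?_).trans_lt (by norm_num)
    rintro _ _ ⟨x, -, rfl⟩ ⟨y, -, rfl⟩
    rfl
  | succ n ih =>
    have hfin := encard_lt_top_iff.mp (ih.trans_le le_top)
    have hcover := encard_le_encard (image_succ_subset (T := T) (label := label) (n := n))
    rw [← hfin.coe_toFinset] at hcover
    calc (refinementPiece T label (n + 1) '' T).encard
        ≤ ∑ A ∈ hfin.toFinset,
            ((fun w => {z ∈ A | label n A z = w}) '' range (label n A)).encard :=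
          hcover.trans (hfin.toFinset.set_encard_biUnion_le _)
      _ ≤ ∑ A ∈ hfin.toFinset, (2 ^ 2 ^ n : ℕ∞) :=
          Finset.sum_le_sum fun A _ => (encard_image_le _ _).trans (hlabel n A)
      _ = (refinementPiece T label n '' T).encard * 2 ^ 2 ^ n := by
          rw [Finset.sum_const, nsmul_eq_mul, hfin.encard_eq_coe_toFinset_card]
      _ < 2 ^ 2 ^ n * 2 ^ 2 ^ n := by
          rw [← hfin.cast_ncard_eq] at ih ⊢
          norm_cast at ih ⊢
          exact Nat.mul_lt_mul_of_pos_right ih (by positivity)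
      _ = 2 ^ 2 ^ (n + 1) := by rw [← pow_add, pow_succ, mul_two]

end refinementPiece

variable (T label) in
open refinementPiece in
def Admissible.ofRefinement
    (hlabel : ∀ n A, (range (label n A)).encard ≤ 2 ^ 2 ^ n) : Admissible T where
  piece := refinementPiece T label
  self_mem _ _ hx := mem_self hx
  subset_base _ _ _ := subset
  partition _ _ _ _ _ hy := eq_of_mem hy
  finite_pieces n := encard_lt_top_iff.mp ((encard_image_lt (T := T) hlabel n).trans_le le_top)
  card_pieces n := by
    have h := encard_image_lt (T := T) hlabel n
    rw [← (encard_lt_top_iff.mp (h.trans_le le_top)).cast_ncard_eq] at h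
    exact_mod_cast h
  nested _ _ _ := succ_subset

end Refinement

section Entropy

variable {X : Type u}

theorem entN_mono {D : X → X → ℝ≥0∞} {n : ℕ} {A B : Set X} (h : A ⊆ B) :
    entN D n A ≤ entN D n B :=
  iInf₂_mono fun _ _ => biSup_mono fun _ hz => h hz

theorem exists_finset_of_entN_lt {D : X → X → ℝ≥0∞} {n : ℕ} {A : Set X} {r : ℝ≥0∞}
    (h : entN D n A < r) : ∃ S : Finset X, S.card < 2 ^ 2 ^ n ∧ ∀ z ∈ A, ∃ w ∈ S, D z w < r := by
  simp only [entN, iInf_lt_iff] at h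
  obtain ⟨S, hS, hlt⟩ := h
  refine ⟨S, hS, fun z hz => ?_⟩
  simpa only [iInf_lt_iff, exists_prop] using
    (le_iSup₂ (f := fun z _ => ⨅ w ∈ S, D z w) z hz).trans_lt hlt

theorem edist_le_two_mul_entN_zero [PseudoEMetricSpace X] {A : Set X} {x y : X}
    (hx : x ∈ A) (hy : y ∈ A) : edist x y ≤ 2 * entN edist 0 A := by
  rw [mul_comm, ← ENNReal.div_le_iff_le_mul (.inl two_ne_zero) (.inl ENNReal.ofNat_ne_top)]
  refine le_iInf₂ fun S hS => ENNReal.div_le_of_le_mul ?_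
  have hxM := le_iSup₂ (f := fun z _ => ⨅ w ∈ S, edist z w) x hx
  have hyM := le_iSup₂ (f := fun z _ => ⨅ w ∈ S, edist z w) y hy
  rcases S.eq_empty_or_nonempty with rfl | ⟨w, hw⟩
  · simp_all
  obtain rfl : S = {w} := Finset.eq_singleton_iff_unique_mem.mpr
    ⟨hw, fun v hv => Finset.card_le_one_iff.mp (by simpa using hS) hv hw⟩
  simp only [Finset.mem_singleton, iInf_iInf_eq_left] at hxM hyM ⊢
  calc edist x y ≤ edist x w + edist y w := edist_triangle_right x y w
    _ ≤ _ := by rw [mul_two]; exact add_le_add hxM hyM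

end Entropy

section LocalEntropy

variable {X : Type u} [MetricSpace X] {T A : Set X} {n : ℕ} {a : ℝ≥0} {x y : X} {r : ℝ≥0∞}

theorem entN_le_of_locEnt_lt (h : locEnt n a x T < r) :
    entN edist n (T ∩ closedEBall x (r / a)) ≤ r :=
  not_lt.mp fun hlt => h.not_ge (le_sSup hlt)

theorem mul_edist_le_locEnt_zero (ha : (a : ℝ≥0∞) < 2⁻¹) (hx : x ∈ T) (hy : y ∈ T) :
    a * edist x y ≤ locEnt 0 a x T := by
  rcases eq_or_ne (a * edist x y) 0 with h0 | h0
  · exact h0 ▸ zero_le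
  obtain ⟨ha0, hd0⟩ := mul_ne_zero_iff.mp h0
  refine le_sSup ?_
  change _ < entN _ _ (T ∩ closedEBall x _)
  rw [mul_comm (a : ℝ≥0∞), ENNReal.mul_div_cancel_right ha0 ENNReal.coe_ne_top]
  have hpair := edist_le_two_mul_entN_zero (A := T ∩ closedEBall x (edist x y))
    ⟨hx, mem_closedEBall_self⟩ ⟨hy, by rw [mem_closedEBall, edist_comm]⟩
  calc edist x y * a < edist x y * 2⁻¹ := ENNReal.mul_lt_mul_right hd0 (edist_ne_top x y) ha
    _ ≤ 2 * entN edist 0 (T ∩ closedEBall x (edist x y)) * 2⁻¹ := by gcongr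
    _ = _ := by
        rw [mul_comm, ← mul_assoc, ENNReal.inv_mul_cancel two_ne_zero ENNReal.ofNat_ne_top, one_mul]

theorem ediam_le_of_locEnt_zero (ha0 : a ≠ 0) (ha : (a : ℝ≥0∞) < 2⁻¹) (hx : x ∈ T) :
    ediam T ≤ 2 / a * locEnt 0 a x T := by
  have hball : ∀ y ∈ T, edist x y ≤ locEnt 0 a x T / a := fun y hy =>
    (ENNReal.le_div_iff_mul_le (.inl (by exact_mod_cast ha0)) (.inl ENNReal.coe_ne_top)).mpr
      (mul_comm (edist x y) a ▸ mul_edist_le_locEnt_zero ha hx hy)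
  refine ediam_le fun z hz w hw => ?_
  calc edist z w ≤ edist x z + edist x w := edist_triangle_left z w x
    _ ≤ locEnt 0 a x T / a + locEnt 0 a x T / a := add_le_add (hball z hz) (hball w hw)
    _ = 2 / a * locEnt 0 a x T := by
        rw [ENNReal.div_add_div_same, ← two_mul, ENNReal.mul_div_right_comm]

end LocalEntropy

section LocalNets

variable {X : Type u} [MetricSpace X] {T A : Set X} {a : ℝ≥0} {ε : ℕ → ℝ≥0∞} {n : ℕ} {x z : X}

variable (T a ε) in
def coverRadius (n : ℕ) (A : Set X) : ℝ≥0∞ :=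
  max (a * ediam A) (⨅ z ∈ A, locEnt n a z T) + 2 * ε n

theorem exists_net_of_coverRadius_ne_top (hAT : A ⊆ T) (hε : ε n ≠ 0)
    (hρ : coverRadius T a ε n A ≠ ∞) :
    ∃ S : Finset X, S.card < 2 ^ 2 ^ n ∧ ∀ z ∈ A, ∃ w ∈ S, edist z w < coverRadius T a ε n A := by
  set m := max (a * ediam A) (⨅ z ∈ A, locEnt n a z T)
  have hr : m < m + ε n := ENNReal.lt_add_right (ENNReal.add_ne_top.mp hρ).1 hε
  have hrρ : m + ε n < coverRadius T a ε n A := by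
    rw [coverRadius, two_mul, ← add_assoc] at hρ ⊢
    exact ENNReal.lt_add_right (ENNReal.add_ne_top.mp hρ).1 hε
  obtain ⟨c, hcA, hc⟩ : ∃ c ∈ A, locEnt n a c T < m + ε n := by
    simpa only [iInf_lt_iff, exists_prop] using (le_max_right _ _).trans_lt hr
  have hA : A ⊆ T ∩ closedEBall c ((m + ε n) / a) := fun z hz =>
    ⟨hAT hz, (edist_le_ediam_of_mem hz hcA).trans <|
      (ENNReal.le_div_iff_mul_le (.inr (zero_le.trans_lt hr).ne') (.inl ENNReal.coe_ne_top)).mpr <|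
        mul_comm (ediam A) a ▸ (le_max_left _ _).trans hr.le⟩
  exact exists_finset_of_entN_lt ((entN_mono hA).trans (entN_le_of_locEnt_lt hc) |>.trans_lt hrρ)

open Classical in
variable (T a ε) in
def net (n : ℕ) (A : Set X) : Finset X :=
  if h : ∃ S : Finset X, S.card < 2 ^ 2 ^ n ∧
      ∀ z ∈ A, ∃ w ∈ S, edist z w < coverRadius T a ε n A then h.choose else ∅

-- `none` is only taken on points of `A` when `coverRadius T a ε n A = ∞`.
open Classical in
variable (T a ε) in
def netLabel (n : ℕ) (A : Set X) (z : X) : Option X :=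
  if h : ∃ w ∈ net T a ε n A, edist z w < coverRadius T a ε n A then some h.choose else none

theorem encard_range_netLabel_le : (range (netLabel T a ε n A)).encard ≤ 2 ^ 2 ^ n := by
  have hcard : (net T a ε n A).card < 2 ^ 2 ^ n := by
    unfold net
    split_ifs with h
    · exact h.choose_spec.1
    · exact Nat.one_le_two_pow
  have hrange : range (netLabel T a ε n A) ⊆ (net T a ε n A).insertNone := by
    rintro _ ⟨z, rfl⟩
    rw [Finset.mem_coe, Finset.mem_insertNone]
    unfold netLabel
    split_ifs with h
    · exact fun w hw => Option.some_injective _ hw ▸ h.choose_spec.1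
    · exact fun w hw => nomatch hw
  calc (range (netLabel T a ε n A)).encard ≤ ((net T a ε n A).insertNone.card : ℕ∞) :=
        (encard_le_encard hrange).trans_eq (encard_coe_eq_coe_finsetCard _)
    _ ≤ 2 ^ 2 ^ n := by
        rw [Finset.card_insertNone]
        exact_mod_cast hcard

theorem exists_netLabel_eq_some (hAT : A ⊆ T) (hε : ε n ≠ 0) (hρ : coverRadius T a ε n A ≠ ∞)
    (hz : z ∈ A) : ∃ w, netLabel T a ε n A z = some w ∧ edist z w < coverRadius T a ε n A := by
  have hnet : ∃ w ∈ net T a ε n A, edist z w < coverRadius T a ε n A := by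
    have hS := exists_net_of_coverRadius_ne_top hAT hε hρ
    rw [net, dif_pos hS]
    exact hS.choose_spec.2 z hz
  rw [netLabel, dif_pos hnet]
  exact ⟨_, rfl, hnet.choose_spec.2⟩

theorem ediam_netLabel_fiber_le (hAT : A ⊆ T) (hε : ε n ≠ 0) (hx : x ∈ A) :
    ediam {z ∈ A | netLabel T a ε n A z = netLabel T a ε n A x} ≤
      2 * coverRadius T a ε n A := by
  by_cases hρ : coverRadius T a ε n A = ∞
  · simp [hρ]
  obtain ⟨w, hxw, -⟩ := exists_netLabel_eq_some hAT hε hρ hx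
  refine (ediam_mono fun z hz => ?_).trans (ediam_closedEBall_le (x := w))
  obtain ⟨hz, hzx⟩ := hz
  obtain ⟨w', hzw', hlt⟩ := exists_netLabel_eq_some hAT hε hρ hz
  rw [hzx, hxw, Option.some_inj] at hzw'
  exact mem_closedEBall.mpr (hzw' ▸ hlt.le)

variable (T a ε) in
def localAdmissible : Admissible T :=
  .ofRefinement T (netLabel T a ε) fun _ _ => encard_range_netLabel_le

theorem ediam_localAdmissible_succ_le (hε : ε n ≠ 0) (hx : x ∈ T) :
    ediam ((localAdmissible T a ε).piece (n + 1) x) ≤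
      2 * a * ediam ((localAdmissible T a ε).piece n x) + 2 * locEnt n a x T + 4 * ε n := by
  set A := (localAdmissible T a ε).piece n x
  have hxA : x ∈ A := (localAdmissible T a ε).self_mem n x hx
  have hmax : max (a * ediam A) (⨅ z ∈ A, locEnt n a z T) ≤ a * ediam A + locEnt n a x T :=
    max_le le_self_add ((iInf₂_le x hxA).trans le_add_self)
  calc ediam ((localAdmissible T a ε).piece (n + 1) x) ≤ 2 * coverRadius T a ε n A :=
        ediam_netLabel_fiber_le ((localAdmissible T a ε).subset_base n x hx) hε hxA
    _ ≤ 2 * (a * ediam A + locEnt n a x T + 2 * ε n) := by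
        unfold coverRadius
        gcongr
    _ = 2 * a * ediam A + 2 * locEnt n a x T + 4 * ε n := by ring

end LocalNets

section Summation

variable {p : ℝ}

theorem tsum_rpow_le_of_le_half_add {V g : ℕ → ℝ≥0∞} (hp : 1 ≤ p)
    (h : ∀ n, V (n + 1) ≤ 2⁻¹ * V n + g n) :
    ∑' n, V n ^ p ≤ 2 * V 0 ^ p + ∑' n, (2 * g n) ^ p := by
  set G := ∑' n, (2 * g n) ^ p
  have hhalf : (2 : ℝ≥0∞)⁻¹ * 2 = 1 := ENNReal.inv_mul_cancel two_ne_zero ENNReal.ofNat_ne_top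
  have hstep n : V (n + 1) ^ p ≤ 2⁻¹ * V n ^ p + 2⁻¹ * (2 * g n) ^ p := by
    have hV : V (n + 1) ≤ 2⁻¹ * V n + 2⁻¹ * (2 * g n) := by
      rw [← mul_assoc, hhalf, one_mul]; exact h n
    exact (ENNReal.rpow_le_rpow hV (by linarith)).trans
      (ENNReal.rpow_arith_mean_le_arith_mean2_rpow _ _ _ _ ENNReal.inv_two_add_inv_two hp)
  -- `S_{N+1} ≤ V 0 ^ p + S_N / 2 + G / 2` preserves the bound `S_N ≤ 2 V 0 ^ p + G`, so no
  -- finiteness of the series is needed.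
  rw [ENNReal.tsum_eq_iSup_nat]
  refine iSup_le fun N => ?_
  induction N with
  | zero => simp
  | succ N ih =>
    calc ∑ n ∈ Finset.range (N + 1), V n ^ p
        = V 0 ^ p + ∑ n ∈ Finset.range N, V (n + 1) ^ p := by
          rw [Finset.sum_range_succ', add_comm]
      _ ≤ V 0 ^ p + ∑ n ∈ Finset.range N, (2⁻¹ * V n ^ p + 2⁻¹ * (2 * g n) ^ p) := by
          gcongr with n; exact hstep n
      _ = V 0 ^ p + 2⁻¹ * ∑ n ∈ Finset.range N, V n ^ p +
            2⁻¹ * ∑ n ∈ Finset.range N, (2 * g n) ^ p := by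
          rw [Finset.sum_add_distrib, ← Finset.mul_sum, ← Finset.mul_sum, add_assoc]
      _ ≤ V 0 ^ p + 2⁻¹ * (2 * V 0 ^ p + G) + 2⁻¹ * G := by
          gcongr; exact ENNReal.sum_le_tsum _
      _ = 2 * V 0 ^ p + G := by
          rw [mul_add, ← mul_assoc, hhalf, one_mul, add_assoc, add_assoc, ← add_mul,
            ENNReal.inv_two_add_inv_two, one_mul, ← add_assoc, ← two_mul]

theorem tsum_mul_inv_two_pow_rpow_le (δ : ℝ≥0∞) (hp : 1 ≤ p) :
    ∑' n : ℕ, (δ * 2⁻¹ ^ n) ^ p ≤ 2 * δ ^ p := by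
  calc ∑' n : ℕ, (δ * 2⁻¹ ^ n) ^ p ≤ ∑' n : ℕ, δ ^ p * 2⁻¹ ^ n := by
        gcongr with n
        rw [ENNReal.mul_rpow_of_nonneg _ _ (by linarith)]
        gcongr
        exact ENNReal.rpow_le_self_of_le_one (pow_le_one₀ zero_le (by norm_num)) hp
    _ = 2 * δ ^ p := by
        rw [ENNReal.tsum_mul_left, ENNReal.tsum_geometric, ENNReal.one_sub_inv_two, inv_inv,
          mul_comm]

theorem tsum_mul_add_rpow_le (c : ℝ≥0∞) (u v : ℕ → ℝ≥0∞) (hp : 1 ≤ p) :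
    ∑' n, (c * (u n + v n)) ^ p ≤ (2 * c) ^ p * (∑' n, u n ^ p + ∑' n, v n ^ p) := by
  have hp0 : 0 ≤ p := by linarith
  have hterm n : (c * (u n + v n)) ^ p ≤ (2 * c) ^ p * (u n ^ p + v n ^ p) := by
    rw [ENNReal.mul_rpow_of_nonneg _ _ hp0, ENNReal.mul_rpow_of_nonneg _ _ hp0, mul_comm (2 ^ p),
      mul_assoc]
    gcongr
    calc (u n + v n) ^ p ≤ 2 ^ (p - 1) * (u n ^ p + v n ^ p) :=
          ENNReal.rpow_add_le_mul_rpow_add_rpow _ _ hp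
      _ ≤ 2 ^ p * (u n ^ p + v n ^ p) := by gcongr <;> [exact one_le_two; linarith]
  calc ∑' n, (c * (u n + v n)) ^ p ≤ ∑' n, (2 * c) ^ p * (u n ^ p + v n ^ p) :=
        ENNReal.tsum_le_tsum hterm
    _ = _ := by rw [ENNReal.tsum_mul_left, ENNReal.tsum_add]

end Summation

section Chaining

variable {p : ℝ}

theorem tsum_rpow_le_of_diam_recursion {D L e w : ℕ → ℝ≥0∞} {a k : ℝ≥0∞} (hp : 1 ≤ p)
    (hw0 : w 0 = 1) (hw : ∀ n, w (n + 1) = k * w n) (hk : k * (2 * a) ≤ 2⁻¹)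
    (hD0 : D 0 ≤ 2 / a * L 0) (hD : ∀ n, D (n + 1) ≤ 2 * a * D n + 2 * L n + 4 * e n) :
    ∑' n, (w n * D n) ^ p ≤
      (4 / a + 16 * k) ^ p * (∑' n, (w n * L n) ^ p + ∑' n, (w n * e n) ^ p) := by
  have hp0 : 0 ≤ p := by linarith
  set S := ∑' n, (w n * L n) ^ p
  set E := ∑' n, (w n * e n) ^ p
  have hrec n : w (n + 1) * D (n + 1) ≤
      2⁻¹ * (w n * D n) + k * (2 * (w n * L n) + 4 * (w n * e n)) :=
    calc w (n + 1) * D (n + 1) ≤ k * w n * (2 * a * D n + 2 * L n + 4 * e n) := by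
          rw [hw]; gcongr; exact hD n
      _ = k * (2 * a) * (w n * D n) + k * (2 * (w n * L n) + 4 * (w n * e n)) := by ring
      _ ≤ _ := by gcongr
  have hbase : 2 * (w 0 * D 0) ^ p ≤ (4 / a) ^ p * S :=
    calc 2 * (w 0 * D 0) ^ p ≤ 2 ^ p * (2 / a * L 0) ^ p := by
          rw [hw0, one_mul]
          gcongr
          exact ENNReal.le_rpow_self_of_one_le one_le_two hp
      _ = (4 / a) ^ p * (w 0 * L 0) ^ p := by
          rw [hw0, one_mul, ← ENNReal.mul_rpow_of_nonneg _ _ hp0,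
            ← ENNReal.mul_rpow_of_nonneg _ _ hp0, ← mul_assoc, ← mul_div_assoc]
          norm_num
      _ ≤ (4 / a) ^ p * S := by gcongr; exact ENNReal.le_tsum 0
  have hforcing : ∑' n, (2 * (k * (2 * (w n * L n) + 4 * (w n * e n)))) ^ p ≤
      (16 * k) ^ p * (S + E) :=
    calc _ ≤ ∑' n, (8 * k * (w n * L n + w n * e n)) ^ p := by
          refine ENNReal.tsum_le_tsum fun n => ENNReal.rpow_le_rpow ?_ hp0
          calc 2 * (k * (2 * (w n * L n) + 4 * (w n * e n)))
              = k * (4 * (w n * L n) + 8 * (w n * e n)) := by ring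
            _ ≤ k * (8 * (w n * L n) + 8 * (w n * e n)) := by gcongr; norm_num
            _ = 8 * k * (w n * L n + w n * e n) := by ring
      _ ≤ (2 * (8 * k)) ^ p * (S + E) := tsum_mul_add_rpow_le _ _ _ hp
      _ = (16 * k) ^ p * (S + E) := by rw [← mul_assoc]; norm_num
  calc ∑' n, (w n * D n) ^ p
      ≤ 2 * (w 0 * D 0) ^ p + ∑' n, (2 * (k * (2 * (w n * L n) + 4 * (w n * e n)))) ^ p :=
        tsum_rpow_le_of_le_half_add hp hrec
    _ ≤ (4 / a) ^ p * (S + E) + (16 * k) ^ p * (S + E) :=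
        add_le_add (hbase.trans (by gcongr; exact le_self_add)) hforcing
    _ ≤ (4 / a + 16 * k) ^ p * (S + E) := by
        rw [← add_mul]; gcongr; exact ENNReal.add_rpow_le_rpow_add _ _ hp

end Chaining

section LocalDudley

variable {X : Type u} [MetricSpace X] {T : Set X} {a : ℝ≥0} {α p : ℝ} {δ : ℝ≥0∞} {x : X}

-- Chosen so that the weighted slacks `2^{n/α} ε_n = δ 2^{-n}` are `ℓ^p`-summable to `≤ 2 δ^p`.
def chainingSlack (α : ℝ) (δ : ℝ≥0∞) (n : ℕ) : ℝ≥0∞ :=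
  δ * 2⁻¹ ^ n / 2 ^ ((n : ℝ) / α)

theorem two_rpow_mul_chainingSlack (n : ℕ) :
    2 ^ ((n : ℝ) / α) * chainingSlack α δ n = δ * 2⁻¹ ^ n :=
  ENNReal.mul_div_cancel (by simp) (by simp)

theorem chainingSlack_ne_zero (hδ : δ ≠ 0) (n : ℕ) : chainingSlack α δ n ≠ 0 := by
  simp [chainingSlack, hδ]

theorem tsum_ediam_localAdmissible_le (hp : 1 ≤ p) (ha0 : a ≠ 0) (ha : (a : ℝ≥0∞) < 2⁻¹)
    (hk : 2 ^ (1 / α) * (2 * (a : ℝ≥0∞)) ≤ 2⁻¹) (hδ : δ ≠ 0) (hx : x ∈ T) :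
    ∑' n : ℕ, ((2 : ℝ≥0∞) ^ ((n : ℝ) / α) *
        ediam ((localAdmissible T a (chainingSlack α δ)).piece n x)) ^ p ≤
      (4 / a + 16 * 2 ^ (1 / α)) ^ p *
        (∑' n : ℕ, ((2 : ℝ≥0∞) ^ ((n : ℝ) / α) * locEnt n a x T) ^ p + 2 * δ ^ p) := by
  set P := localAdmissible T a (chainingSlack α δ)
  have hw n : (2 : ℝ≥0∞) ^ (((n + 1 : ℕ) : ℝ) / α) = 2 ^ (1 / α) * 2 ^ ((n : ℝ) / α) := by
    rw [Nat.cast_succ, add_div, ENNReal.rpow_add _ _ two_ne_zero ENNReal.ofNat_ne_top, mul_comm]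
  refine (tsum_rpow_le_of_diam_recursion (D := fun n => ediam (P.piece n x))
    (L := fun n => locEnt n a x T) (e := chainingSlack α δ)
    (w := fun n : ℕ => (2 : ℝ≥0∞) ^ ((n : ℝ) / α)) hp (by simp) hw hk
    (ediam_le_of_locEnt_zero ha0 ha hx)
    fun n => ediam_localAdmissible_succ_le (chainingSlack_ne_zero hδ n) hx).trans ?_
  simp_rw [two_rpow_mul_chainingSlack]
  gcongr
  exact tsum_mul_inv_two_pow_rpow_le δ hp

theorem gammaF_le_mul_add (hp : 1 ≤ p) (ha0 : a ≠ 0) (ha : (a : ℝ≥0∞) < 2⁻¹)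
    (hk : 2 ^ (1 / α) * (2 * (a : ℝ≥0∞)) ≤ 2⁻¹) (hδ : δ ≠ 0) :
    gammaF edist α p T ≤ (4 / a + 16 * 2 ^ (1 / α)) *
      ((⨆ x ∈ T, ∑' n : ℕ, ((2 : ℝ≥0∞) ^ ((n : ℝ) / α) * locEnt n a x T) ^ p) ^ p⁻¹ + 2 * δ) := by
  set C : ℝ≥0∞ := 4 / a + 16 * 2 ^ (1 / α)
  set S := ⨆ x ∈ T, ∑' n : ℕ, ((2 : ℝ≥0∞) ^ ((n : ℝ) / α) * locEnt n a x T) ^ p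
  have hp0 : 0 < p := by linarith
  have hpinv : 0 ≤ p⁻¹ := inv_nonneg.mpr hp0.le
  calc gammaF edist α p T
      ≤ (⨆ x ∈ T, ∑' n : ℕ, ((2 : ℝ≥0∞) ^ ((n : ℝ) / α) *
          eDiam edist ((localAdmissible T a (chainingSlack α δ)).piece n x)) ^ p) ^ p⁻¹ :=
        iInf_le _ (localAdmissible T a (chainingSlack α δ))
    _ ≤ (C ^ p * (S + 2 * δ ^ p)) ^ p⁻¹ := by
        gcongr
        refine iSup₂_le fun x hx => (tsum_ediam_localAdmissible_le hp ha0 ha hk hδ hx).trans ?_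
        gcongr
        exact le_iSup₂ (f := fun x (_ : x ∈ T) =>
          ∑' n : ℕ, ((2 : ℝ≥0∞) ^ ((n : ℝ) / α) * locEnt n a x T) ^ p) x hx
    _ = C * (S + 2 * δ ^ p) ^ p⁻¹ := by
        rw [ENNReal.mul_rpow_of_nonneg _ _ hpinv, ← ENNReal.rpow_mul, mul_inv_cancel₀ hp0.ne',
          ENNReal.rpow_one]
    _ ≤ C * (S ^ p⁻¹ + 2 * δ) := by
        gcongr
        refine (ENNReal.rpow_add_le_add_rpow _ _ hpinv (inv_le_one_of_one_le₀ hp)).trans ?_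
        rw [ENNReal.mul_rpow_of_nonneg _ _ hpinv, ← ENNReal.rpow_mul, mul_inv_cancel₀ hp0.ne',
          ENNReal.rpow_one]
        gcongr
        exact (ENNReal.rpow_le_rpow_of_exponent_le one_le_two (inv_le_one_of_one_le₀ hp)).trans_eq
          (ENNReal.rpow_one 2)

end LocalDudley

theorem exists_chaining_scale (α : ℝ) :
    ∃ a : ℝ≥0, a ≠ 0 ∧ (a : ℝ≥0∞) < 2⁻¹ ∧ 2 ^ (1 / α) * (2 * (a : ℝ≥0∞)) ≤ 2⁻¹ := by
  set k : ℝ≥0 := 2 ^ (1 / α)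
  have hk : ((k : ℝ≥0) : ℝ≥0∞) = 2 ^ (1 / α) := by simp [k, ENNReal.coe_rpow_of_ne_zero]
  refine ⟨(4 * (1 + k))⁻¹, by positivity, ?_, ?_⟩
  · have : (4 * (1 + k))⁻¹ < (2⁻¹ : ℝ≥0) := by
      rw [← NNReal.coe_lt_coe]; push_cast
      rw [inv_lt_inv₀ (by positivity) (by norm_num)]; nlinarith [k.2]
    exact ENNReal.coe_inv_two ▸ ENNReal.coe_lt_coe.mpr this
  · have : k * (2 * (4 * (1 + k))⁻¹) ≤ (2⁻¹ : ℝ≥0) := by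
      rw [← NNReal.coe_le_coe]; push_cast
      field_simp
      nlinarith [k.2]
    rw [← hk, ← ENNReal.coe_inv_two]; exact_mod_cast this

theorem local_dudley_general (α : ℝ) :
    ∃ (C : ℝ≥0∞) (a : ℝ≥0), 0 < C ∧ C ≠ ∞ ∧ 0 < a ∧
      ∀ (X : Type u) [MetricSpace X] (T : Set X) (p : ℝ), 1 ≤ p →
        gammaF (edist : X → X → ℝ≥0∞) α p T ≤
          C * (⨆ x ∈ T, ∑' n : ℕ,
            ((2 : ℝ≥0∞) ^ ((n : ℝ) / α) * locEnt n a x T) ^ p) ^ p⁻¹ := by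
  obtain ⟨a, ha0, ha, hk⟩ := exists_chaining_scale α
  set C : ℝ≥0∞ := 4 / a + 16 * 2 ^ (1 / α)
  have hC0 : C ≠ 0 := by simp [C, ENNReal.div_eq_zero_iff]
  have hCtop : C ≠ ∞ := ENNReal.add_ne_top.mpr
    ⟨ENNReal.div_ne_top (by norm_num) (by exact_mod_cast ha0),
      ENNReal.mul_ne_top (by norm_num) (by simp)⟩
  have h2C0 : 2 * C ≠ 0 := mul_ne_zero two_ne_zero hC0
  have h2Ctop : 2 * C ≠ ∞ := ENNReal.mul_ne_top ENNReal.ofNat_ne_top hCtop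
  refine ⟨C, a, pos_of_ne_zero hC0, hCtop, pos_of_ne_zero ha0,
    fun X _ T p hp => ENNReal.le_of_forall_pos_le_add fun η hη _ => ?_⟩
  calc gammaF edist α p T
      ≤ C * ((⨆ x ∈ T, ∑' n : ℕ, ((2 : ℝ≥0∞) ^ ((n : ℝ) / α) * locEnt n a x T) ^ p) ^ p⁻¹ +
          2 * (η / (2 * C))) :=
        gammaF_le_mul_add hp ha0 ha hk (by simpa using ⟨hη.ne', h2Ctop⟩)
    _ = _ := by rw [mul_add, ← mul_assoc, mul_comm C 2, ENNReal.mul_div_cancel h2C0 h2Ctop]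

/-- **A local form of Dudley's inequality** (Lemma 4.4): there are constants `C, a`
depending only on `α` such that
`γ_{α,p}(T) ≤ C [sup_{x∈T} Σ_n (2^{n/α} e_n^{a,x}(T))^p]^{1/p}`. -/
theorem local_dudley (α : ℝ) (hα : 0 < α) :
    ∃ (C : ℝ≥0∞) (a : ℝ≥0), 0 < C ∧ C ≠ ∞ ∧ 0 < a ∧
      ∀ (X : Type u) [MetricSpace X] (T : Set X) (p : ℝ), 1 ≤ p →
        gammaF (edist : X → X → ℝ≥0∞) α p T ≤
          C * (⨆ x ∈ T, ∑' n : ℕ,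
            ((2 : ℝ≥0∞) ^ ((n : ℝ) / α) * locEnt n a x T) ^ p) ^ p⁻¹ :=
  local_dudley_general α
end
end

section
/- (Interpolation lemma.) Let (X,d) be a metric space, T ⊆ X, α > 0, and let f : X → [0,∞] be a penalty function. Define K(t,x) := inf_{y∈X} { f(y) + t·d(x,y) }, and assume that for every t ≥ 0 and x ∈ T a minimizer π_t(x) ∈ X of this infimum exists. Then there is a constant C depending only on α such that for every a > 0, sup_{x∈T} Σ_{n≥0} 2^{n/α} d(x, π_{a·2^{n/α}}(x)) ≤ C · (1/a) · sup_{x∈T} f(x). -/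
/-! Fix `x ∈ T`, let `t_n = a ρ^n` with `ρ = 2^{1/α}`, write `d_n = d(x, π_{t_n}(x))` and let
`K_n = f(π_{t_n}(x)) + t_n d_n`, so that `K_n ≤ f(x)` (compare with `y = x`). Comparing the minimizer
at `t_n` with `y = π_{t_{n+1}}(x)` gives `K_n + (t_{n+1} - t_n) d_{n+1} ≤ K_{n+1}`; since
`t_{n+1} - t_n = (1 - ρ⁻¹) t_{n+1}`, the sums `(1 - ρ⁻¹) Σ_{k ≤ n} t_k d_k` stay below `K_n ≤ f(x)`.
Dividing by `a` gives the claim with `C = (1 - 2^{-1/α})⁻¹`. -/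

open scoped ENNReal NNReal
open EMetric Set

noncomputable section

universe u

theorem ENNReal.mul_tsum_le_of_telescoping {K g : ℕ → ℝ≥0∞} {b M : ℝ≥0∞}
    (h_zero : b * g 0 ≤ K 0) (h_step : ∀ n, K n + b * g (n + 1) ≤ K (n + 1))
    (hK : ∀ n, K n ≤ M) : b * ∑' n, g n ≤ M := by
  have h_partial : ∀ N, ∑ n ∈ Finset.range (N + 1), b * g n ≤ K N := by
    intro N
    induction N with
    | zero => simpa using h_zero
    | succ N ih =>
      rw [Finset.sum_range_succ]
      exact (add_le_add_left ih _).trans (h_step N)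
  rw [← ENNReal.tsum_mul_left]
  refine ENNReal.tsum_le_of_sum_range_le fun N => ?_
  cases N with
  | zero => simp
  | succ N => exact (h_partial N).trans (hK N)

theorem NNReal.geometric_add_sub_inv_mul (a : ℝ≥0) {ρ : ℝ≥0} (hρ : 1 ≤ ρ) (n : ℕ) :
    a * ρ ^ n + (1 - ρ⁻¹) * (a * ρ ^ (n + 1)) = a * ρ ^ (n + 1) := by
  have hρ₀ : ρ ≠ 0 := (zero_lt_one.trans_le hρ).ne'
  have h_gap : (1 - ρ⁻¹) * ρ = ρ - 1 := by rw [tsub_mul, one_mul, inv_mul_cancel₀ hρ₀]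
  calc a * ρ ^ n + (1 - ρ⁻¹) * (a * ρ ^ (n + 1))
      = a * ρ ^ n * (1 + (1 - ρ⁻¹) * ρ) := by ring
    _ = a * ρ ^ (n + 1) := by rw [h_gap, add_tsub_cancel_of_le hρ, pow_succ, mul_assoc]

theorem mul_tsum_mul_edist_minimizer_le {X : Type*} [PseudoEMetricSpace X] {f : X → ℝ≥0∞}
    {π : ℝ≥0 → X → X} {x : X}
    (hmin : ∀ (t : ℝ≥0) (y : X), f (π t x) + t * edist x (π t x) ≤ f y + t * edist x y)
    {t : ℕ → ℝ≥0} {b : ℝ≥0∞} (hb : b ≤ 1) (ht : ∀ n, (t n : ℝ≥0∞) + b * t (n + 1) ≤ t (n + 1)) :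
    b * ∑' n, (t n : ℝ≥0∞) * edist x (π (t n) x) ≤ f x := by
  set d : ℕ → ℝ≥0∞ := fun n => edist x (π (t n) x)
  refine ENNReal.mul_tsum_le_of_telescoping (K := fun n => f (π (t n) x) + t n * d n) ?_ ?_
    fun n => by simpa using hmin (t n) x
  · exact (mul_le_of_le_one_left' hb).trans le_add_self
  · intro n
    calc f (π (t n) x) + t n * d n + b * (t (n + 1) * d (n + 1))
        ≤ f (π (t (n + 1)) x) + t n * d (n + 1) + b * (t (n + 1) * d (n + 1)) :=
          add_le_add_left (hmin (t n) _) _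
      _ = f (π (t (n + 1)) x) + (t n + b * t (n + 1)) * d (n + 1) := by ring
      _ ≤ f (π (t (n + 1)) x) + t (n + 1) * d (n + 1) := by gcongr; exact ht n

/-- **Interpolation lemma** (Lemma 4.6): if `π_t(x)` minimizes `y ↦ f(y) + t·d(x,y)`
for every `t ≥ 0`, `x ∈ T`, then
`sup_{x∈T} Σ_n 2^{n/α} d(x, π_{a·2^{n/α}}(x)) ≤ C (1/a) sup_{x∈T} f(x)`
for every `a > 0`, with `C` depending only on `α`. -/
theorem interpolation_lemma (α : ℝ) (hα : 0 < α) :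
    ∃ C : ℝ≥0∞, 0 < C ∧ C ≠ ∞ ∧
      ∀ (X : Type u) [MetricSpace X] (T : Set X) (f : X → ℝ≥0∞) (π : ℝ≥0 → X → X),
        (∀ (t : ℝ≥0), ∀ x ∈ T, ∀ y : X,
            f (π t x) + (t : ℝ≥0∞) * edist x (π t x) ≤ f y + (t : ℝ≥0∞) * edist x y) →
        ∀ a : ℝ≥0, 0 < a →
          (⨆ x ∈ T, ∑' n : ℕ,
              (2 : ℝ≥0∞) ^ ((n : ℝ) / α) *
                edist x (π (a * (2 : ℝ≥0) ^ ((n : ℝ) / α)) x)) ≤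
            C * (a : ℝ≥0∞)⁻¹ * ⨆ x ∈ T, f x := by
  set ρ : ℝ≥0 := 2 ^ α⁻¹
  have hρ : 1 < ρ := NNReal.one_lt_rpow one_lt_two (inv_pos.2 hα)
  have hpow : ∀ n : ℕ, (2 : ℝ≥0) ^ ((n : ℝ) / α) = ρ ^ n := fun n => by
    rw [div_eq_mul_inv, mul_comm, NNReal.rpow_mul_natCast]
  set b : ℝ≥0 := 1 - ρ⁻¹
  have hb : b ≠ 0 := (tsub_pos_of_lt (inv_lt_one_of_one_lt₀ hρ)).ne'
  refine ⟨(b : ℝ≥0∞)⁻¹, ENNReal.inv_pos.2 ENNReal.coe_ne_top,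
    ENNReal.inv_ne_top.2 (ENNReal.coe_ne_zero.2 hb), ?_⟩
  intro X _ T f π hmin a ha
  refine iSup₂_le fun x hx => ?_
  have h_sum := mul_tsum_mul_edist_minimizer_le (fun t y => hmin t x hx y) (t := fun n => a * ρ ^ n)
    (b := b) (ENNReal.coe_le_one_iff.2 tsub_le_self) fun n => by
      exact_mod_cast (NNReal.geometric_add_sub_inv_mul a hρ.le n).le
  rw [ENNReal.mul_le_iff_le_inv (ENNReal.coe_ne_zero.2 hb) ENNReal.coe_ne_top] at h_sum
  have ha' : (a : ℝ≥0∞) ≠ 0 := ENNReal.coe_ne_zero.2 ha.ne'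
  calc ∑' n : ℕ, (2 : ℝ≥0∞) ^ ((n : ℝ) / α) * edist x (π (a * (2 : ℝ≥0) ^ ((n : ℝ) / α)) x)
      = (a : ℝ≥0∞)⁻¹ * ∑' n, ((a * ρ ^ n : ℝ≥0) : ℝ≥0∞) * edist x (π (a * ρ ^ n) x) := by
        rw [← ENNReal.tsum_mul_left]
        refine tsum_congr fun n => ?_
        rw [← ENNReal.coe_ofNat, ← ENNReal.coe_rpow_of_ne_zero two_ne_zero, hpow, ENNReal.coe_mul,
          ENNReal.coe_pow, ← mul_assoc, ← mul_assoc, ENNReal.inv_mul_cancel ha' ENNReal.coe_ne_top,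
          one_mul]
    _ ≤ (a : ℝ≥0∞)⁻¹ * ((b : ℝ≥0∞)⁻¹ * f x) := by gcongr
    _ ≤ (b : ℝ≥0∞)⁻¹ * (a : ℝ≥0∞)⁻¹ * ⨆ x ∈ T, f x := by
        rw [mul_left_comm, ← mul_assoc]
        exact mul_le_mul_right (le_iSup₂ (f := fun x _ => f x) x hx) _
end
end

section
/- (Basic interpolation bound.) Let (X,d) be a metric space, T ⊆ X, α > 0, and let f : X → [0,∞] be a penalty function with interpolation functional K(t,x) := inf_{y∈X} { f(y) + t·d(x,y) }, minimizers π_t(x) (assumed to exist), and interpolation sets K_t := { π_t(x) : x ∈ T }. Then there is a constant C depending only on α such that for every a > 0, γ_α(T) ≤ C · ( (1/a)·sup_{x∈T} f(x) + Σ_{n≥0} 2^{n/α} e_n(K_{a·2^{n/α}}) ). -/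
open scoped ENNReal NNReal
open EMetric Set

noncomputable section

universe u

/-!
With `w n = 2 ^ (n / α)` and `t n = a * w n`, comparing the minimality of `π (t n) x` with the
competitors `x` and `π (t (n + 1)) x` and summing by parts gives
`∑ n, w n * d(x, π (t n) x) ≤ C a⁻¹ f x`. The rest is chaining: for any maps `p n`, covering
`p n '' T` by nets of size `< 2 ^ 2 ^ n` and splitting `T` according to the net points and the
dyadic size of the approximation errors at the earlier scales gives an admissible sequence with
`∑ n, w n * diam (A n x) ≲ ∑ n, w n * (d(x, p n x) + e_n (p n '' T))`.
-/

open Finset in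
lemma prod_range_lt_two_pow_two_pow {N : ℕ → ℕ} (hN : ∀ k, N k ≤ 2 ^ 2 ^ (k + 1)) (m : ℕ) :
    ∏ k ∈ range m, N k < 2 ^ 2 ^ (m + 1) := by
  induction m with
  | zero => simp
  | succ m ih =>
    rw [prod_range_succ, pow_succ 2 (m + 1), mul_two, pow_add]
    exact Nat.mul_lt_mul_of_lt_of_le ih (hN m) (by positivity)

lemma succ_mul_two_pow_two_pow_le (k : ℕ) : (k + 1) * 2 ^ 2 ^ k ≤ 2 ^ 2 ^ (k + 1) := by
  rw [pow_succ 2 k, mul_two, pow_add]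
  gcongr
  calc k + 1 ≤ 2 ^ k := Nat.lt_two_pow_self
    _ ≤ 2 ^ 2 ^ k := Nat.pow_le_pow_right two_pos Nat.lt_two_pow_self.le

lemma two_rpow_div_eq_pow (α : ℝ) (n : ℕ) :
    (2 : ℝ≥0∞) ^ ((n : ℝ) / α) = ((2 : ℝ≥0∞) ^ (1 / α)) ^ n := by
  rw [← ENNReal.rpow_natCast, ← ENNReal.rpow_mul, one_div_mul_eq_div]

lemma two_rpow_ne_top (y : ℝ) : (2 : ℝ≥0∞) ^ y ≠ ⊤ := by
  simp [ENNReal.rpow_eq_top_iff]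

lemma two_rpow_ne_zero (y : ℝ) : (2 : ℝ≥0∞) ^ y ≠ 0 := by
  simp [ENNReal.rpow_eq_zero_iff]

lemma ENNReal.one_le_div_tsub_one {b : ℝ≥0∞} (hb0 : b ≠ 0) (hb : b ≠ ⊤) : 1 ≤ b / (b - 1) := by
  rw [ENNReal.le_div_iff_mul_le (Or.inr hb0) (Or.inr hb), one_mul]
  exact tsub_le_self

theorem ENNReal.tsum_mul_le_of_summation_by_parts {b F : ℝ≥0∞} (hb : 1 < b) (hb' : b ≠ ⊤)
    {u d g : ℕ → ℝ≥0∞} (hu : ∀ n, u (n + 1) = b * u n) (hF : ∀ n, g n + u n * d n ≤ F)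
    (hstep : ∀ n, g n + u n * d n ≤ g (n + 1) + u n * d (n + 1)) :
    ∑' n, u n * d n ≤ b / (b - 1) * F := by
  set c := b / (b - 1)
  have hb1 : b - 1 ≠ 0 := (tsub_pos_of_lt hb).ne'
  have hb1' : b - 1 ≠ ⊤ := ne_top_of_le_ne_top hb' tsub_le_self
  have hcb : c + b = c * b := by
    rw [← tsub_add_cancel_of_le hb.le, mul_add, mul_one, ENNReal.div_mul_cancel hb1 hb1',
      tsub_add_cancel_of_le hb.le, add_comm]
  have hc : 1 ≤ c := ENNReal.one_le_div_tsub_one (zero_lt_one.trans hb).ne' hb'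
  -- Abel summation: `c + b = c * b` is what carries this bound from `N` to `N + 1`.
  have key : ∀ N, ∑ n ∈ Finset.range (N + 1), u n * d n + c * g 0 ≤ c * (g N + u N * d N) := by
    intro N
    induction N with
    | zero =>
      rw [Finset.sum_range_one, mul_add, add_comm (u 0 * d 0)]
      exact add_le_add le_rfl (le_mul_of_one_le_left' hc)
    | succ N ih =>
      calc ∑ n ∈ Finset.range (N + 2), u n * d n + c * g 0
          = (∑ n ∈ Finset.range (N + 1), u n * d n + c * g 0) + u (N + 1) * d (N + 1) := by
            rw [Finset.sum_range_succ]; ring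
        _ ≤ c * (g (N + 1) + u N * d (N + 1)) + u (N + 1) * d (N + 1) := by
            gcongr
            exact ih.trans (mul_le_mul_right (hstep N) c)
        _ = c * g (N + 1) + (c + b) * (u N * d (N + 1)) := by rw [hu N]; ring
        _ = c * (g (N + 1) + u (N + 1) * d (N + 1)) := by rw [hcb, hu N]; ring
  refine ENNReal.tsum_le_of_sum_range_le fun N => ?_
  rcases N with _ | N
  · simp
  · exact (le_self_add.trans (key N)).trans (by gcongr; exact hF N)

lemma tsum_mul_edist_le_of_isMinimizer {X : Type u} [PseudoEMetricSpace X] {f : X → ℝ≥0∞}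
    {π : ℝ≥0 → X → X} {x : X}
    (hmin : ∀ (t : ℝ≥0) (y : X), f (π t x) + t * edist x (π t x) ≤ f y + t * edist x y)
    {b : ℝ≥0∞} (hb : 1 < b) (hb' : b ≠ ⊤) {w : ℕ → ℝ≥0∞} (hw : ∀ n, w (n + 1) = b * w n)
    {a : ℝ≥0} (ha : a ≠ 0) {t : ℕ → ℝ≥0} (ht : ∀ n, (t n : ℝ≥0∞) = a * w n) :
    ∑' n, w n * edist x (π (t n) x) ≤ (a : ℝ≥0∞)⁻¹ * (b / (b - 1) * f x) := by
  have habel : (a : ℝ≥0∞) * ∑' n, w n * edist x (π (t n) x) ≤ b / (b - 1) * f x := by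
    rw [← ENNReal.tsum_mul_left]
    simp_rw [← mul_assoc, ← ht]
    exact ENNReal.tsum_mul_le_of_summation_by_parts hb hb' (fun n => by rw [ht, ht, hw]; ring)
      (fun n => by simpa using hmin (t n) x) (fun n => hmin (t n) _)
  calc _ = (a : ℝ≥0∞)⁻¹ * ((a : ℝ≥0∞) * ∑' n, w n * edist x (π (t n) x)) :=
        (ENNReal.inv_mul_cancel_left (ENNReal.coe_ne_zero.mpr ha) ENNReal.coe_ne_top).symm
    _ ≤ _ := by gcongr

lemma eDiam_le {X : Type u} {D : X → X → ℝ≥0∞} {A : Set X} {c : ℝ≥0∞}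
    (h : ∀ y ∈ A, ∀ z ∈ A, D y z ≤ c) : eDiam D A ≤ c :=
  iSup₂_le fun y hy => iSup₂_le (h y hy)

lemma gammaF_one_le {X : Type u} (D : X → X → ℝ≥0∞) (α : ℝ) {T : Set X} (P : Admissible T) :
    gammaF D α 1 T ≤ ⨆ x ∈ T, ∑' n : ℕ, (2 : ℝ≥0∞) ^ ((n : ℝ) / α) * eDiam D (P.piece n x) :=
  (iInf_le _ P).trans_eq (by simp)

lemma exists_finset_lt_of_entN_lt {X : Type u} {D : X → X → ℝ≥0∞} {n : ℕ} {A : Set X}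
    {r : ℝ≥0∞} (h : entN D n A < r) :
    ∃ S : Finset X, S.card < 2 ^ 2 ^ n ∧ ∀ x ∈ A, ∃ y ∈ S, D x y < r := by
  simp only [entN, iInf_lt_iff] at h
  obtain ⟨S, hS, hlt⟩ := h
  refine ⟨S, hS, fun x hx => ?_⟩
  simpa only [iInf_lt_iff, exists_prop] using
    (le_iSup₂ (f := fun x (_ : x ∈ A) => ⨅ y ∈ S, D x y) x hx).trans_lt hlt

/-- Splitting a set according to this index makes the values `u ≤ B` in one piece comparable,
up to an error `B * 2⁻¹ ^ k`. -/
def dyadicLevel (B u : ℝ≥0∞) (k : ℕ) : ℕ :=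
  Nat.findGreatest (fun j => u ≤ B * 2⁻¹ ^ j) k

lemma dyadicLevel_le (B u : ℝ≥0∞) (k : ℕ) : dyadicLevel B u k ≤ k :=
  Nat.findGreatest_le k

lemma le_two_mul_add_of_dyadicLevel_eq {B u w : ℝ≥0∞} {k : ℕ} (hw : w ≤ B)
    (h : dyadicLevel B w k = dyadicLevel B u k) : w ≤ 2 * u + B * 2⁻¹ ^ k := by
  set j := dyadicLevel B w k
  have hwj : w ≤ B * 2⁻¹ ^ j :=
    Nat.findGreatest_spec (P := fun j => w ≤ B * 2⁻¹ ^ j) (Nat.zero_le k) (by simpa using hw)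
  rcases (dyadicLevel_le B w k).eq_or_lt with hjk | hjk
  · rw [← hjk]
    exact hwj.trans le_add_self
  · have hu : B * 2⁻¹ ^ (j + 1) < u := not_le.mp <|
      Nat.findGreatest_is_greatest (P := fun j => u ≤ B * 2⁻¹ ^ j)
        (by rw [← dyadicLevel, ← h]; omega) hjk
    calc w ≤ B * 2⁻¹ ^ j := hwj
      _ = B * 2⁻¹ ^ j * (2 * 2⁻¹) := by
        rw [ENNReal.mul_inv_cancel two_ne_zero ENNReal.ofNat_ne_top, mul_one]
      _ = 2 * (B * 2⁻¹ ^ (j + 1)) := by ring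
      _ ≤ 2 * u := by gcongr
      _ ≤ 2 * u + B * 2⁻¹ ^ k := le_self_add

namespace Admissible

variable {X : Type u} {β : Type*}

lemma setOf_labelPiece_subset (T : Set X) (ℓ : ℕ → X → β) (M : ℕ)
    (hfin : ∀ k, (ℓ k '' T).Finite) :
    {A : Set X | ∃ x ∈ T, {y ∈ T | ∀ k < M, ℓ k y = ℓ k x} = A} ⊆
      (fun κ : Fin M → β => {y ∈ T | ∀ k : Fin M, ℓ k y = κ k}) ''
        Fintype.piFinset fun k : Fin M => (hfin k).toFinset := by
  rintro A ⟨x, hx, rfl⟩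
  refine ⟨fun k => ℓ k x, ?_, ?_⟩
  · simp only [Finset.mem_coe, Fintype.mem_piFinset, Set.Finite.mem_toFinset]
    exact fun k => Set.mem_image_of_mem _ hx
  · ext y
    simp [Fin.forall_iff]

def ofLabels (T : Set X) (ℓ : ℕ → X → β) (m : ℕ → ℕ) (hm : Monotone m)
    (hfin : ∀ k, (ℓ k '' T).Finite)
    (hcard : ∀ n, ∏ k ∈ Finset.range (m n), (ℓ k '' T).ncard < 2 ^ 2 ^ n) : Admissible T where
  piece n x := {y ∈ T | ∀ k < m n, ℓ k y = ℓ k x}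
  self_mem _ _ hx := ⟨hx, fun _ _ => rfl⟩
  subset_base _ _ _ _ hy := hy.1
  partition n x _ y _ hy := by
    ext z
    exact and_congr_right fun _ => forall₂_congr fun k hk => by rw [hy.2 k hk]
  finite_pieces n :=
    (Set.toFinite _ |>.image _).subset (setOf_labelPiece_subset T ℓ (m n) hfin)
  card_pieces n := by
    classical
    calc _ ≤ _ := Set.ncard_le_ncard (setOf_labelPiece_subset T ℓ (m n) hfin) (Set.toFinite _)
      _ ≤ (Fintype.piFinset fun k : Fin (m n) => (hfin k).toFinset).card :=
        (Set.ncard_image_le (Set.toFinite _)).trans_eq (Set.ncard_coe_finset _)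
      _ = ∏ k ∈ Finset.range (m n), (ℓ k '' T).ncard := by
        rw [Fintype.card_piFinset, ← Fin.prod_univ_eq_prod_range]
        exact Finset.prod_congr rfl fun k _ => (Set.ncard_eq_toFinset_card _ (hfin k)).symm
      _ < 2 ^ 2 ^ n := hcard n
  nested n _ _ _ hy := ⟨hy.1, fun k hk => hy.2 k (hk.trans_le (hm n.le_succ))⟩

end Admissible

def chainingConst (α : ℝ) : ℝ≥0∞ := 2 + 2 * 2 ^ (1 / α) + 8 * (2 ^ (1 / α)) ^ 2

lemma chainingConst_ne_zero (α : ℝ) : chainingConst α ≠ 0 := by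
  simp [chainingConst]

lemma chainingConst_ne_top (α : ℝ) : chainingConst α ≠ ⊤ := by
  simp [chainingConst, ENNReal.mul_eq_top]

section Chaining

variable {X : Type u} [PseudoEMetricSpace X]

theorem gammaF_le_chainingConst_mul_iSup_tsum {α : ℝ} {T : Set X} {S : ℕ → Finset X}
    (hS : ∀ n, (S n).card < 2 ^ 2 ^ n) {v : ℕ → X → X} (hv : ∀ n, ∀ x ∈ T, v n x ∈ S n) :
    gammaF edist α 1 T ≤
      chainingConst α * ⨆ x ∈ T, ∑' n : ℕ, (2 : ℝ≥0∞) ^ ((n : ℝ) / α) * edist x (v n x) := by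
  set b : ℝ≥0∞ := 2 ^ (1 / α)
  have hb0 : b ≠ 0 := two_rpow_ne_zero _
  have hbtop : b ≠ ⊤ := two_rpow_ne_top _
  simp only [two_rpow_div_eq_pow]
  set M := ⨆ x ∈ T, ∑' n : ℕ, b ^ n * edist x (v n x)
  rcases eq_or_ne M ⊤ with hM | hM
  · rw [hM, ENNReal.mul_top (chainingConst_ne_zero α)]
    exact le_top
  have hdist : ∀ n, ∀ x ∈ T, edist x (v n x) ≤ M / b ^ n := fun n x hx => by
    rw [ENNReal.le_div_iff_mul_le (Or.inl (pow_ne_zero _ hb0))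
      (Or.inl (ENNReal.pow_ne_top hbtop)), mul_comm]
    exact (ENNReal.le_tsum n).trans
      (le_iSup₂ (f := fun x _ => ∑' n, b ^ n * edist x (v n x)) x hx)
  let ℓ : ℕ → X → X × ℕ := fun k x => (v k x, dyadicLevel (M / b ^ k) (edist x (v k x)) k)
  have hℓ : ∀ k, ℓ k '' T ⊆ ↑(S k ×ˢ Finset.range (k + 1)) := by
    rintro k _ ⟨x, hx, rfl⟩
    simpa [ℓ, Nat.lt_succ_iff] using ⟨hv k x hx, dyadicLevel_le _ _ k⟩
  have hℓcard : ∀ k, (ℓ k '' T).ncard ≤ 2 ^ 2 ^ (k + 1) := fun k =>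
    calc (ℓ k '' T).ncard ≤ (S k ×ˢ Finset.range (k + 1)).card :=
          (Set.ncard_le_ncard (hℓ k) (Finset.finite_toSet _)).trans_eq (Set.ncard_coe_finset _)
      _ ≤ (k + 1) * 2 ^ 2 ^ k := by
          rw [Finset.card_product, Finset.card_range, mul_comm]
          exact Nat.mul_le_mul_left _ (hS k).le
      _ ≤ 2 ^ 2 ^ (k + 1) := succ_mul_two_pow_two_pow_le k
  -- the `n`-th partition uses the labels of the scales `k ≤ n - 2` only, so that it has at most
  -- `∏ k < n - 1, (k + 1) * 2 ^ 2 ^ k < 2 ^ 2 ^ n` pieces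
  let P := Admissible.ofLabels T ℓ (· - 1) (fun _ _ h => Nat.sub_le_sub_right h 1)
    (fun k => (Finset.finite_toSet _).subset (hℓ k)) fun n => by
      rcases n with _ | n
      · simp
      · exact prod_range_lt_two_pow_two_pow hℓcard n
  have hv₀ : ∀ y ∈ T, ∀ z ∈ T, v 0 y = v 0 z := fun y hy z hz =>
    Finset.card_le_one.mp (Nat.lt_succ_iff.mp (hS 0)) _ (hv 0 y hy) _ (hv 0 z hz)
  have hdiam : ∀ n x, eDiam edist (P.piece n x) ≤ 2 * M := fun n x =>
    eDiam_le fun y hy z hz => calc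
      edist y z ≤ edist y (v 0 y) + edist z (v 0 z) := by
        rw [hv₀ y hy.1 z hz.1]; exact edist_triangle_right _ _ _
      _ ≤ M / b ^ 0 + M / b ^ 0 := add_le_add (hdist 0 y hy.1) (hdist 0 z hz.1)
      _ = 2 * M := by rw [pow_zero, div_one, two_mul]
  have hclose : ∀ k x, ∀ y ∈ P.piece (k + 2) x,
      v k y = v k x ∧ edist y (v k y) ≤ 2 * edist x (v k x) + M / b ^ k * 2⁻¹ ^ k := by
    intro k x y hy
    obtain ⟨hv, hlevel⟩ := Prod.ext_iff.mp (hy.2 k (by dsimp only; omega))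
    exact ⟨hv, le_two_mul_add_of_dyadicLevel_eq (hdist k y hy.1) hlevel⟩
  have hdiam_succ_succ : ∀ k x, eDiam edist (P.piece (k + 2) x) ≤
      4 * edist x (v k x) + 2 * (M / b ^ k * 2⁻¹ ^ k) := fun k x =>
    eDiam_le fun y hy z hz => by
      obtain ⟨hvy, hdy⟩ := hclose k x y hy
      obtain ⟨hvz, hdz⟩ := hclose k x z hz
      calc edist y z ≤ edist y (v k y) + edist z (v k z) := by
            rw [hvy, hvz]; exact edist_triangle_right _ _ _
        _ ≤ _ := add_le_add hdy hdz
        _ = _ := by ring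
  refine (gammaF_one_le _ α P).trans (iSup₂_le fun x hx => ?_)
  simp only [two_rpow_div_eq_pow]
  have hweight : ∀ k, b ^ (k + 2) * (4 * edist x (v k x) + 2 * (M / b ^ k * 2⁻¹ ^ k)) =
      b ^ 2 * (4 * (b ^ k * edist x (v k x)) + 2 * M * 2⁻¹ ^ k) := fun k => by
    have hbM : b ^ k * (M / b ^ k) = M :=
      ENNReal.mul_div_cancel' (fun h => absurd h (pow_ne_zero _ hb0))
        (fun h => absurd h (ENNReal.pow_ne_top hbtop))
    calc _ = b ^ 2 * (4 * (b ^ k * edist x (v k x)) + 2 * (b ^ k * (M / b ^ k)) * 2⁻¹ ^ k) := by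
          ring
      _ = _ := by rw [hbM]
  have hsum : ∑' k : ℕ, b ^ k * edist x (v k x) ≤ M :=
    le_iSup₂ (f := fun x _ => ∑' n, b ^ n * edist x (v n x)) x hx
  calc ∑' n : ℕ, b ^ n * eDiam edist (P.piece n x)
      = ∑ n ∈ Finset.range 2, b ^ n * eDiam edist (P.piece n x)
          + ∑' k : ℕ, b ^ (k + 2) * eDiam edist (P.piece (k + 2) x) :=
        ENNReal.summable.sum_add_tsum_nat_add'.symm
    _ ≤ (2 * M + b * (2 * M)) +
          ∑' k : ℕ, b ^ 2 * (4 * (b ^ k * edist x (v k x)) + 2 * M * 2⁻¹ ^ k) := by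
        simp only [Finset.sum_range_succ, Finset.sum_range_zero, zero_add, pow_zero, one_mul,
          pow_one, ← hweight]
        gcongr with k
        exacts [hdiam 0 x, hdiam 1 x, hdiam_succ_succ k x]
    _ = 2 * M + 2 * b * M + b ^ 2 * (4 * ∑' k : ℕ, b ^ k * edist x (v k x) + 2 * M * 2) := by
        rw [ENNReal.tsum_mul_left, ENNReal.tsum_add, ENNReal.tsum_mul_left, ENNReal.tsum_mul_left,
          ENNReal.tsum_geometric, ENNReal.one_sub_inv_two, inv_inv]
        ring
    _ ≤ 2 * M + 2 * b * M + b ^ 2 * (4 * M + 2 * M * 2) := by gcongr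
    _ = chainingConst α * M := by
        rw [chainingConst]
        ring

theorem gammaF_le_chainingConst_mul_add_entN {α : ℝ} (T : Set X) (p : ℕ → X → X) :
    gammaF edist α 1 T ≤ chainingConst α *
      ((⨆ x ∈ T, ∑' n : ℕ, (2 : ℝ≥0∞) ^ ((n : ℝ) / α) * edist x (p n x)) +
        ∑' n : ℕ, (2 : ℝ≥0∞) ^ ((n : ℝ) / α) * entN edist n (p n '' T)) := by
  set w : ℕ → ℝ≥0∞ := fun n => 2 ^ ((n : ℝ) / α)
  set C := chainingConst α
  set E := ∑' n : ℕ, w n * entN edist n (p n '' T)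
  refine ENNReal.le_of_forall_pos_le_add fun ε hε hlt => ?_
  have hE : E ≠ ⊤ := fun h =>
    hlt.ne (by rw [h, add_top, ENNReal.mul_top (chainingConst_ne_zero α)])
  have hentN : ∀ n, entN edist n (p n '' T) ≠ ⊤ := fun n h =>
    ENNReal.ne_top_of_tsum_ne_top hE n (ENNReal.mul_eq_top.mpr (Or.inl ⟨two_rpow_ne_zero _, h⟩))
  obtain ⟨δ, hδpos, hδsum⟩ := ENNReal.exists_pos_sum_of_countable
    (ENNReal.div_pos (ENNReal.coe_ne_zero.mpr hε.ne') (chainingConst_ne_top α)).ne' ℕ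
  have hnet : ∀ n, ∃ S : Finset X, S.card < 2 ^ 2 ^ n ∧
      ∀ x ∈ T, ∃ y ∈ S, w n * edist (p n x) y ≤ w n * entN edist n (p n '' T) + δ n := by
    intro n
    have hw : w n * (δ n / w n) = δ n :=
      ENNReal.mul_div_cancel' (fun h => absurd h (two_rpow_ne_zero _))
        (fun h => absurd h (two_rpow_ne_top _))
    obtain ⟨S, hS, hSnet⟩ := exists_finset_lt_of_entN_lt (ENNReal.lt_add_right (hentN n)
      (ENNReal.div_pos (ENNReal.coe_ne_zero.mpr (hδpos n).ne') (two_rpow_ne_top _)).ne')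
    refine ⟨S, hS, fun x hx => ?_⟩
    obtain ⟨y, hyS, hy⟩ := hSnet (p n x) (Set.mem_image_of_mem _ hx)
    refine ⟨y, hyS, ?_⟩
    calc w n * edist (p n x) y ≤ w n * (entN edist n (p n '' T) + δ n / w n) := by gcongr
      _ = _ := by rw [mul_add, hw]
  choose S hS hnet using hnet
  choose! v hvS hv using hnet
  calc gammaF edist α 1 T ≤ C * ⨆ x ∈ T, ∑' n : ℕ, w n * edist x (v n x) :=
        gammaF_le_chainingConst_mul_iSup_tsum hS hvS
    _ ≤ C * ((⨆ x ∈ T, ∑' n : ℕ, w n * edist x (p n x)) + E + ε / C) := by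
        gcongr
        refine iSup₂_le fun x hx => ?_
        calc ∑' n : ℕ, w n * edist x (v n x)
            ≤ ∑' n : ℕ, (w n * edist x (p n x) + (w n * entN edist n (p n '' T) + δ n)) :=
              ENNReal.tsum_le_tsum fun n => calc
                w n * edist x (v n x) ≤ w n * (edist x (p n x) + edist (p n x) (v n x)) := by
                  gcongr; exact edist_triangle _ _ _
                _ ≤ _ := by rw [mul_add]; gcongr; exact hv n x hx
          _ = ∑' n : ℕ, w n * edist x (p n x) + E + ∑' n : ℕ, (δ n : ℝ≥0∞) := by
              rw [ENNReal.tsum_add, ENNReal.tsum_add, add_assoc]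
          _ ≤ (⨆ x ∈ T, ∑' n : ℕ, w n * edist x (p n x)) + E + ε / C := by
              gcongr
              exact le_iSup₂ (f := fun x _ => ∑' n : ℕ, w n * edist x (p n x)) x hx
    _ ≤ C * ((⨆ x ∈ T, ∑' n : ℕ, w n * edist x (p n x)) + E) + ε := by
        rw [mul_add]
        gcongr
        exact ENNReal.mul_div_le

end Chaining

/-- **Basic interpolation bound** (Theorem 4.7): if `π_t(x)` minimizes
`y ↦ f(y) + t·d(x,y)` for every `t ≥ 0`, `x ∈ T`, and `K_t = π_t(T)`, then
`γ_α(T) ≤ C ((1/a)·sup_{x∈T} f(x) + Σ_n 2^{n/α} e_n(K_{a·2^{n/α}}))`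
for every `a > 0`, with `C` depending only on `α`. -/
theorem interpolation_bound (α : ℝ) (hα : 0 < α) :
    ∃ C : ℝ≥0∞, 0 < C ∧ C ≠ ∞ ∧
      ∀ (X : Type u) [MetricSpace X] (T : Set X) (f : X → ℝ≥0∞) (π : ℝ≥0 → X → X),
        (∀ (t : ℝ≥0), ∀ x ∈ T, ∀ y : X,
            f (π t x) + (t : ℝ≥0∞) * edist x (π t x) ≤ f y + (t : ℝ≥0∞) * edist x y) →
        ∀ a : ℝ≥0, 0 < a →
          gammaF (edist : X → X → ℝ≥0∞) α 1 T ≤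
            C * ((a : ℝ≥0∞)⁻¹ * (⨆ x ∈ T, f x) +
              ∑' n : ℕ, (2 : ℝ≥0∞) ^ ((n : ℝ) / α) *
                entN (edist : X → X → ℝ≥0∞) n
                  ((π (a * (2 : ℝ≥0) ^ ((n : ℝ) / α))) '' T)) := by
  set b : ℝ≥0∞ := 2 ^ (1 / α)
  have hb : 1 < b := ENNReal.one_lt_rpow (by norm_num) (by positivity)
  have hb1 : b - 1 ≠ 0 := (tsub_pos_of_lt hb).ne'
  have hb1' : b - 1 ≠ ⊤ := ne_top_of_le_ne_top (two_rpow_ne_top _) tsub_le_self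
  refine ⟨chainingConst α * (b / (b - 1)),
    ENNReal.mul_pos (chainingConst_ne_zero α) (ENNReal.div_pos (two_rpow_ne_zero _) hb1').ne',
    ENNReal.mul_ne_top (chainingConst_ne_top α) (ENNReal.div_ne_top (two_rpow_ne_top _) hb1), ?_⟩
  intro X _ T f π hmin a ha
  set w : ℕ → ℝ≥0∞ := fun n => 2 ^ ((n : ℝ) / α)
  set t : ℕ → ℝ≥0 := fun n => a * 2 ^ ((n : ℝ) / α)
  have ht : ∀ n, (t n : ℝ≥0∞) = a * w n := fun n => by
    simp [t, w, ENNReal.coe_rpow_of_ne_zero]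
  have hw : ∀ n, w (n + 1) = b * w n := fun n => by
    simp only [w, two_rpow_div_eq_pow, pow_succ']
    rfl
  have hpath : ∀ x ∈ T, ∑' n, w n * edist x (π (t n) x) ≤
      b / (b - 1) * ((a : ℝ≥0∞)⁻¹ * ⨆ x ∈ T, f x) := fun x hx => calc
    _ ≤ (a : ℝ≥0∞)⁻¹ * (b / (b - 1) * f x) :=
        tsum_mul_edist_le_of_isMinimizer (fun t y => hmin t x hx y) hb (two_rpow_ne_top _) hw
          ha.ne' ht
    _ ≤ (a : ℝ≥0∞)⁻¹ * (b / (b - 1) * ⨆ x ∈ T, f x) := by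
        gcongr
        exact le_iSup₂ (f := fun x _ => f x) x hx
    _ = _ := by ring
  calc gammaF edist α 1 T
      ≤ chainingConst α * ((⨆ x ∈ T, ∑' n, w n * edist x (π (t n) x)) +
          ∑' n : ℕ, w n * entN edist n (π (t n) '' T)) :=
        gammaF_le_chainingConst_mul_add_entN T fun n => π (t n)
    _ ≤ chainingConst α * (b / (b - 1) * ((a : ℝ≥0∞)⁻¹ * ⨆ x ∈ T, f x) +
          b / (b - 1) * ∑' n : ℕ, w n * entN edist n (π (t n) '' T)) := by
        gcongr
        · exact iSup₂_le hpath
        · exact le_mul_of_one_le_left'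
            (ENNReal.one_le_div_tsub_one (two_rpow_ne_zero _) (two_rpow_ne_top _))
    _ = _ := by rw [← mul_add, mul_assoc]
end
end

section
/- (Projection property of interpolation minimizers.) Let (X,d) be a metric space, f : X → [0,∞] a penalty function, u ≥ 0, and suppose T = { x ∈ X : f(x) ≤ u }. Define K(t,x) := inf_{y∈X} { f(y) + t·d(x,y) } and assume minimizers exist for every t ≥ 0 and x ∈ T. Then for every t ≥ 0 the minimizers π_t(x) can be chosen so that: (i) K_t := { π_t(x) : x ∈ T } ⊆ T, and (ii) π_t(π_t(x)) = π_t(x) for every x ∈ T. -/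
/-! A minimizer `y` of `z ↦ f z + t·d(x, z)` is its own minimizer: if some `z` did better for
`y`, the triangle inequality `d(x, z) ≤ d(x, y) + d(y, z)` would let `z` beat `y` for `x`.
So one may choose `π_t(x) := x` whenever `x` minimizes for itself, which makes `π_t` idempotent,
and `f(π_t x) ≤ f(x)` (compare with `z = x`) keeps `π_t` inside the sublevel set `T`. -/

open scoped ENNReal NNReal

def IsInterpolationMinimizer {X : Type*} [PseudoMetricSpace X] (f : X → ℝ≥0∞) (t : ℝ≥0)
    (x y : X) : Prop :=
  ∀ z, f y + t * edist x y ≤ f z + t * edist x z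

namespace IsInterpolationMinimizer

variable {X : Type*} [PseudoMetricSpace X] {f : X → ℝ≥0∞} {t : ℝ≥0} {x y : X}

theorem le_apply (h : IsInterpolationMinimizer f t x y) : f y ≤ f x := by
  simpa using le_trans le_self_add (h x)

theorem self (h : IsInterpolationMinimizer f t x y) : IsInterpolationMinimizer f t y y := by
  intro z
  have hfin : (t : ℝ≥0∞) * edist x y ≠ ⊤ := ENNReal.mul_ne_top ENNReal.coe_ne_top (edist_ne_top x y)
  have : f y + t * edist x y ≤ f z + t * edist y z + t * edist x y :=
    calc f y + t * edist x y ≤ f z + t * edist x z := h z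
      _ ≤ f z + t * (edist x y + edist y z) := by gcongr; exact edist_triangle x y z
      _ = f z + t * edist y z + t * edist x y := by ring
  simpa using (ENNReal.add_le_add_iff_right hfin).mp this

end IsInterpolationMinimizer

theorem exists_idempotent_selection {α : Type*} {R : α → α → Prop} {S : Set α}
    (hR : ∀ x y, R x y → R y y) (hS : ∀ x ∈ S, ∃ y, R x y) :
    ∃ p : α → α, ∀ x ∈ S, R x (p x) ∧ p (p x) = p x := by
  classical
  let p : α → α := fun x => if h : x ∈ S ∧ ¬ R x x then (hS x h.1).choose else x
  have hp : ∀ x ∈ S, R x (p x) := by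
    intro x hx
    by_cases h : x ∈ S ∧ ¬ R x x
    · simpa only [p, dif_pos h] using (hS x h.1).choose_spec
    · simpa only [p, dif_neg h] using not_not.mp fun hxx => h ⟨hx, hxx⟩
  refine ⟨p, fun x hx => ⟨hp x hx, ?_⟩⟩
  have hfix : R (p x) (p x) := hR x (p x) (hp x hx)
  simp only [p, hfix, not_true_eq_false, and_false, dif_neg, not_false_eq_true]

/-- **Projection property of interpolation minimizers** (Lemma 4.8).
If `T = {x : f(x) ≤ u}` and for every `t ≥ 0` and `x ∈ T` a minimizer of
`y ↦ f(y) + t·d(x,y)` exists, then the minimizers `π_t` can be chosen so that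
`K_t = π_t(T) ⊆ T` and `π_t(π_t(x)) = π_t(x)` for all `x ∈ T`. -/
theorem projection_property (X : Type v) [MetricSpace X] (f : X → ℝ≥0∞) (u : ℝ≥0∞)
    (T : Set X) (hT : T = {x : X | f x ≤ u})
    (hmin : ∀ (t : ℝ≥0), ∀ x ∈ T, ∃ y : X, ∀ z : X,
      f y + (t : ℝ≥0∞) * edist x y ≤ f z + (t : ℝ≥0∞) * edist x z) :
    ∃ π : ℝ≥0 → X → X,
      (∀ (t : ℝ≥0), ∀ x ∈ T, ∀ z : X,
        f (π t x) + (t : ℝ≥0∞) * edist x (π t x) ≤ f z + (t : ℝ≥0∞) * edist x z) ∧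
      (∀ t : ℝ≥0, (π t) '' T ⊆ T) ∧
      (∀ t : ℝ≥0, ∀ x ∈ T, π t (π t x) = π t x) := by
  choose π hπ using fun t =>
    exists_idempotent_selection (fun _ _ => IsInterpolationMinimizer.self) (hmin t)
  refine ⟨π, fun t x hx => (hπ t x hx).1, ?_, fun t x hx => (hπ t x hx).2⟩
  rintro t _ ⟨x, hx, rfl⟩
  subst hT
  exact ((hπ t x hx).1.le_apply).trans hx
end

section
/- (q-interpolation lemma.) Let (X,d) be a metric space, T ⊆ X, α > 0, q ≥ 1, and let f : X → [0,∞] be a penalty function. Define K(t,x) := inf_{y∈X} { f(y) + t^q·d(x,y)^q } and assume that for every t ≥ 0 and x ∈ T a minimizer π_t(x) ∈ X exists. Then there is a constant C depending only on α such that for every a > 0, sup_{x∈T} Σ_{n≥0} ( 2^{n/α} d(x, π_{a·2^{n/α}}(x)) )^q ≤ C · (1/a^q) · sup_{x∈T} f(x). -/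
/-!
Fix `x ∈ T` and put `tₙ = a·2^{n/α}`, `gₙ = f(π_{tₙ} x)` and `vₙ = tₙ^q d(x, π_{tₙ} x)^q`.
Testing the minimality of `π_{tₙ} x` against the competitors `x` and `π_{tₙ₊₁} x` gives
`gₙ + vₙ ≤ f x` and `gₙ + vₙ ≤ gₙ₊₁ + ρ vₙ₊₁` with `ρ = 2^{-1/α} < 1`, since
`tₙ^q = 2^{-q/α} tₙ₊₁^q` and `q ≥ 1`. Summing the second inequality telescopes the `gₙ` away
and leaves `(1 - ρ) Σ vₙ ≤ f x`, so `C = (1 - 2^{-1/α})⁻¹` works.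
-/

open scoped ENNReal NNReal
open Finset

universe u

namespace ENNReal

section Descent

variable {g v : ℕ → ℝ≥0∞} {ρ F : ℝ≥0∞}

theorem sum_range_le_add_mul_sum_range_succ
    (hstep : ∀ n, g n + v n ≤ g (n + 1) + ρ * v (n + 1)) (N : ℕ) :
    ∑ n ∈ range N, v n ≤ g N + ρ * ∑ n ∈ range (N + 1), v n := by
  induction N with
  | zero => simp
  | succ N ih =>
    calc ∑ n ∈ range (N + 1), v n = ∑ n ∈ range N, v n + v N := sum_range_succ _ _
      _ ≤ g N + v N + ρ * ∑ n ∈ range (N + 1), v n := by rw [add_right_comm]; gcongr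
      _ ≤ g (N + 1) + ρ * v (N + 1) + ρ * ∑ n ∈ range (N + 1), v n :=
        add_le_add_left (hstep N) _
      _ = g (N + 1) + ρ * ∑ n ∈ range (N + 1 + 1), v n := by
        rw [sum_range_succ _ (N + 1)]; ring

theorem le_inv_one_sub_mul_of_le_add_mul {s : ℝ≥0∞} (hρ : ρ < 1) (hs : s ≠ ∞)
    (h : s ≤ F + ρ * s) : s ≤ (1 - ρ)⁻¹ * F := by
  have hρs : ρ * s ≠ ∞ := mul_ne_top (hρ.trans one_lt_top).ne hs
  have h' : (1 - ρ) * s ≤ F := by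
    rw [← ENNReal.add_le_add_iff_right hρs, ← add_mul, tsub_add_cancel_of_le hρ.le, one_mul]
    exact h
  exact (mul_le_iff_le_inv (tsub_pos_of_lt hρ).ne' (sub_ne_top one_ne_top)).1 h'

theorem tsum_le_inv_one_sub_mul (hρ : ρ < 1) (hF : ∀ n, g n + v n ≤ F)
    (hstep : ∀ n, g n + v n ≤ g (n + 1) + ρ * v (n + 1)) :
    ∑' n, v n ≤ (1 - ρ)⁻¹ * F := by
  refine tsum_le_of_sum_range_le fun N => ?_
  rcases eq_or_ne F ∞ with rfl | hFtop
  · rw [mul_top (ENNReal.inv_ne_zero.2 (sub_ne_top one_ne_top))]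
    exact le_top
  have hfin : ∑ n ∈ range N, v n ≠ ∞ :=
    sum_ne_top.2 fun n _ => ne_top_of_le_ne_top hFtop (le_add_self.trans (hF n))
  refine le_inv_one_sub_mul_of_le_add_mul hρ hfin ?_
  calc ∑ n ∈ range N, v n ≤ g N + ρ * (∑ n ∈ range N, v n + v N) := by
        simpa only [sum_range_succ] using sum_range_le_add_mul_sum_range_succ hstep N
    _ = g N + ρ * v N + ρ * ∑ n ∈ range N, v n := by ring
    _ ≤ g N + v N + ρ * ∑ n ∈ range N, v n := by gcongr; exact mul_le_of_le_one_left' hρ.le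
    _ ≤ F + ρ * ∑ n ∈ range N, v n := by gcongr; exact hF N

end Descent

theorem rpow_le_inv_mul_mul_rpow {b : ℝ≥0∞} {q : ℝ} (hb : 1 ≤ b) (hb' : b ≠ ∞) (hq : 1 ≤ q)
    (y : ℝ≥0∞) : y ^ q ≤ b⁻¹ * (b * y) ^ q := by
  have hb0 : b ≠ 0 := (zero_lt_one.trans_le hb).ne'
  rw [← mul_le_iff_le_inv hb0 hb', mul_rpow_of_nonneg _ _ (zero_le_one.trans hq)]
  gcongr
  simpa using rpow_le_rpow_of_exponent_le hb hq

theorem coe_mul_rpow_rpow_mul_rpow (a c : ℝ≥0) {s q : ℝ} (hs : 0 ≤ s) (hq : 0 ≤ q) (e : ℝ≥0∞) :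
    ((a * c ^ s : ℝ≥0) : ℝ≥0∞) ^ q * e ^ q = (a : ℝ≥0∞) ^ q * ((c : ℝ≥0∞) ^ s * e) ^ q := by
  rw [coe_mul, coe_rpow_of_nonneg _ hs, mul_rpow_of_nonneg _ _ hq, mul_rpow_of_nonneg _ _ hq,
    mul_assoc]

end ENNReal

open ENNReal in
theorem tsum_rpow_edist_minimizer_le {X : Type*} [PseudoEMetricSpace X] {f : X → ℝ≥0∞}
    {π : ℝ≥0 → X → X} {x : X} {α q : ℝ} {c : ℝ≥0} (hα : 0 < α) (hc : 1 < c) (hq : 1 ≤ q)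
    (hmin : ∀ (t : ℝ≥0) (y : X),
      f (π t x) + (t : ℝ≥0∞) ^ q * edist x (π t x) ^ q ≤ f y + (t : ℝ≥0∞) ^ q * edist x y ^ q)
    (a : ℝ≥0) :
    (a : ℝ≥0∞) ^ q * ∑' n : ℕ,
        ((c : ℝ≥0∞) ^ ((n : ℝ) / α) * edist x (π (a * c ^ ((n : ℝ) / α)) x)) ^ q ≤
      (1 - ((c : ℝ≥0∞) ^ (1 / α))⁻¹)⁻¹ * f x := by
  set b : ℝ≥0∞ := (c : ℝ≥0∞) ^ (1 / α)
  have hb : 1 < b := one_lt_rpow (by exact_mod_cast hc) (by positivity)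
  have hq0 : 0 ≤ q := zero_le_one.trans hq
  set t : ℕ → ℝ≥0 := fun n => a * c ^ ((n : ℝ) / α)
  set d : ℕ → ℝ≥0∞ := fun n => edist x (π (t n) x)
  have hcost (n : ℕ) (y : X) : (t n : ℝ≥0∞) ^ q * edist x y ^ q =
      (a : ℝ≥0∞) ^ q * ((c : ℝ≥0∞) ^ ((n : ℝ) / α) * edist x y) ^ q :=
    coe_mul_rpow_rpow_mul_rpow a c (by positivity) hq0 _
  have hbc : b ≠ ∞ := rpow_ne_top_of_nonneg (by positivity) coe_ne_top
  have hscale (n : ℕ) :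
      b * (c : ℝ≥0∞) ^ ((n : ℝ) / α) = (c : ℝ≥0∞) ^ (((n + 1 : ℕ) : ℝ) / α) := by
    rw [← rpow_add _ _ (by exact_mod_cast (zero_lt_one.trans hc).ne') coe_ne_top]
    congr 1; push_cast; ring
  rw [← ENNReal.tsum_mul_left]
  refine tsum_le_inv_one_sub_mul (g := fun n => f (π (t n) x)) (ENNReal.inv_lt_one.2 hb)
    (fun n => ?_) (fun n => ?_)
  · simpa [hcost, edist_self, zero_rpow_of_pos (zero_lt_one.trans_le hq)] using hmin (t n) x
  · calc f (π (t n) x) + (a : ℝ≥0∞) ^ q * ((c : ℝ≥0∞) ^ ((n : ℝ) / α) * d n) ^ q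
        ≤ f (π (t (n + 1)) x) +
          (a : ℝ≥0∞) ^ q * ((c : ℝ≥0∞) ^ ((n : ℝ) / α) * d (n + 1)) ^ q := by
          simpa only [hcost] using hmin (t n) (π (t (n + 1)) x)
      _ ≤ f (π (t (n + 1)) x) +
          (a : ℝ≥0∞) ^ q * (b⁻¹ * (b * ((c : ℝ≥0∞) ^ ((n : ℝ) / α) * d (n + 1))) ^ q) := by
          gcongr; exact rpow_le_inv_mul_mul_rpow hb.le hbc hq _
      _ = _ := by rw [← mul_assoc b, hscale]; ring

/-- **q-interpolation lemma** (Lemma 5.8). If `π_t(x)` minimizes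
`y ↦ f(y) + t^q·d(x,y)^q` for every `t ≥ 0`, `x ∈ T`, then for every `a > 0`,
`sup_{x∈T} Σ_n (2^{n/α} d(x, π_{a·2^{n/α}}(x)))^q ≤ C (1/a^q) sup_{x∈T} f(x)`,
with `C` depending only on `α`. -/
theorem q_interpolation_lemma (α : ℝ) (hα : 0 < α) :
    ∃ C : ℝ≥0∞, 0 < C ∧ C ≠ ∞ ∧
      ∀ (X : Type u) [MetricSpace X] (T : Set X) (q : ℝ), 1 ≤ q →
        ∀ (f : X → ℝ≥0∞) (π : ℝ≥0 → X → X),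
          (∀ (t : ℝ≥0), ∀ x ∈ T, ∀ y : X,
              f (π t x) + (t : ℝ≥0∞) ^ q * edist x (π t x) ^ q ≤
                f y + (t : ℝ≥0∞) ^ q * edist x y ^ q) →
          ∀ a : ℝ≥0, 0 < a →
            (⨆ x ∈ T, ∑' n : ℕ,
                ((2 : ℝ≥0∞) ^ ((n : ℝ) / α) *
                  edist x (π (a * (2 : ℝ≥0) ^ ((n : ℝ) / α)) x)) ^ q) ≤
              C * ((a : ℝ≥0∞) ^ q)⁻¹ * ⨆ x ∈ T, f x := by
  have hρ : ((2 : ℝ≥0∞) ^ (1 / α))⁻¹ < 1 :=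
    ENNReal.inv_lt_one.2 (ENNReal.one_lt_rpow (by norm_num) (by positivity))
  refine ⟨_, ENNReal.inv_pos.2 (ENNReal.sub_ne_top ENNReal.one_ne_top),
    ENNReal.inv_ne_top.2 (tsub_pos_of_lt hρ).ne', fun X _ T q hq f π hmin a ha => ?_⟩
  refine iSup₂_le fun x hx => ?_
  have haq : (a : ℝ≥0∞) ^ q ≠ 0 :=
    (ENNReal.rpow_pos (ENNReal.coe_pos.2 ha) ENNReal.coe_ne_top).ne'
  have haq' : (a : ℝ≥0∞) ^ q ≠ ∞ :=
    ENNReal.rpow_ne_top_of_nonneg (zero_le_one.trans hq) ENNReal.coe_ne_top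
  have hx_bound := tsum_rpow_edist_minimizer_le (c := 2) hα one_lt_two hq
    (fun t y => hmin t x hx y) a
  rw [ENNReal.mul_le_iff_le_inv haq haq', ← mul_assoc, mul_comm _⁻¹] at hx_bound
  push_cast at hx_bound
  exact hx_bound.trans (by gcongr; exact le_iSup₂ (f := fun x _ => f x) x hx)
end

section
/- (Gaussian interpolation lemma.) Let T be a finite set, (X_x)_{x∈T} a centered Gaussian process with natural metric d and Gaussian width functional G, and define K(t,x) := inf_{s≥0} { t·s + G(T) − G(B(x,s)) } where B(x,s) := { y ∈ T : d(x,y) ≤ s }; let s(t,x) ≥ 0 denote a minimizer (which exists since s ↦ G(B(x,s)) is upper-semicontinuous). Then there is a universal constant C such that for every a > 0, sup_{x∈T} Σ_{n≥0} 2^{n/2} s(a·2^{n/2}, x) ≤ C · G(T)/a. -/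
open scoped ENNReal NNReal ProbabilityTheory
open MeasureTheory ProbabilityTheory Set

noncomputable section

universe u v

/-- The natural metric of the process: `d(x,y) = (E|X_x − X_y|²)^{1/2}`. -/
def natDist {Ω : Type u} {ι : Type v} [MeasureSpace Ω] (X : ι → Ω → ℝ) (x y : ι) : ℝ :=
  Real.sqrt (∫ ω, (X x ω - X y ω) ^ 2)

/-- The Gaussian width `G(A) = E[sup_{x∈A} X_x]`. -/
def gWidth {Ω : Type u} {ι : Type v} [MeasureSpace Ω] (X : ι → Ω → ℝ) (A : Set ι) : ℝ :=
  ∫ ω, sSup ((fun x => X x ω) '' A)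

/-- `X` is a centered Gaussian process: every finite linear combination of the
`X_x` is a centered Gaussian random variable. -/
def IsCenteredGaussianProcess {Ω : Type u} {ι : Type v} [MeasureSpace Ω] [Fintype ι]
    (X : ι → Ω → ℝ) : Prop :=
  (∀ x, Measurable (X x)) ∧
    ∀ c : ι → ℝ, ∃ v : ℝ≥0,
      Measure.map (fun ω => ∑ x, c x * X x ω) ℙ = gaussianReal 0 v

/-!
Write `t_n = a 2^{n/2}`, `u_n = s(t_n, x)` and `g_n = G(B(x, u_n))`, so that
`0 = E X_x ≤ g_n ≤ G(T)`. Comparing the minimizer `u_n` with the competitors `0` and `u_{n+1}`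
gives `t_n u_n ≤ G(T)` and `t_n (u_n - u_{n+1}) ≤ g_n - g_{n+1}`. Since `t_{n+1} = √2 t_n`, summing
the second inequality telescopes, and the shifted sum `∑ t_n u_{n+1}` is `1/√2` times the original
one up to one boundary term; hence `(√2 - 1) ∑ t_n u_n ≤ (√2 + 1) G(T)`, i.e.
`∑ t_n u_n ≤ (1 + √2)² G(T)`.
-/

theorem sub_one_mul_sum_range_le {q G : ℝ} {t u g : ℕ → ℝ} (hq : 0 ≤ q)
    (ht : ∀ n, 0 ≤ t n) (ht_succ : ∀ n, t (n + 1) = q * t n) (hu : ∀ n, 0 ≤ u n)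
    (hg : ∀ n, 0 ≤ g n) (hg_zero : g 0 ≤ G) (hbound : ∀ n, t n * u n ≤ G)
    (hstep : ∀ n, t n * (u n - u (n + 1)) ≤ g n - g (n + 1)) (N : ℕ) :
    (q - 1) * ∑ n ∈ Finset.range N, t n * u n ≤ (q + 1) * G := by
  set P := ∑ n ∈ Finset.range N, t n * u n
  set Q := ∑ n ∈ Finset.range N, t n * u (n + 1)
  have h_telescope : P - Q ≤ G := by
    have : P - Q ≤ g 0 - g N := by
      rw [← Finset.sum_range_sub', ← Finset.sum_sub_distrib]
      exact Finset.sum_le_sum fun n _ => by simpa only [mul_sub] using hstep n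
    linarith [hg N]
  have h_shift : q * Q ≤ P + G := by
    have h_eq : q * Q + t 0 * u 0 = P + t N * u N := by
      rw [Finset.mul_sum, ← Finset.sum_range_succ, Finset.sum_range_succ']
      simp only [ht_succ, mul_assoc]
    linarith [mul_nonneg (ht 0) (hu 0), hbound N]
  linarith [mul_le_mul_of_nonneg_left h_telescope hq]

theorem sum_range_rpow_mul_le_of_isMinOn {φ : ℝ → ℝ} {G : ℝ}
    (hφ : MapsTo φ (Ici 0) (Icc 0 G)) {s : ℝ → ℝ}
    (hs : ∀ t, 0 < t → s t ∈ Ici 0 ∧ IsMinOn (fun σ => t * σ - φ σ) (Ici 0) (s t))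
    {a : ℝ} (ha : 0 < a) (N : ℕ) :
    ∑ n ∈ Finset.range N, (2 : ℝ) ^ ((n : ℝ) / 2) * s (a * (2 : ℝ) ^ ((n : ℝ) / 2)) ≤
      (1 + √2) ^ 2 * G / a := by
  set t : ℕ → ℝ := fun n => a * (2 : ℝ) ^ ((n : ℝ) / 2)
  set u : ℕ → ℝ := fun n => s (t n)
  have ht : ∀ n, 0 < t n := fun n => by positivity
  have hu : ∀ n, 0 ≤ u n := fun n => (hs (t n) (ht n)).1
  have ht_succ : ∀ n, t (n + 1) = √2 * t n := fun n => by
    simp only [t, Real.sqrt_eq_rpow, Nat.cast_succ, add_div, Real.rpow_add two_pos]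
    ring
  have hbound : ∀ n, t n * u n ≤ G := fun n => by
    have := isMinOn_iff.1 (hs (t n) (ht n)).2 0 self_mem_Ici
    linarith [(hφ self_mem_Ici).1, (hφ (hu n)).2]
  have hstep : ∀ n, t n * (u n - u (n + 1)) ≤ φ (u n) - φ (u (n + 1)) := fun n => by
    have := isMinOn_iff.1 (hs (t n) (ht n)).2 (u (n + 1)) (hu (n + 1))
    linarith
  have hsum := sub_one_mul_sum_range_le (Real.sqrt_nonneg 2) (fun n => (ht n).le) ht_succ hu
    (fun n => (hφ (hu n)).1) (hφ (hu 0)).2 hbound hstep N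
  have h_sqrt : (√2 + 1) * (√2 - 1) = 1 := by
    nlinarith [Real.sq_sqrt (zero_le_two (α := ℝ))]
  rw [le_div_iff₀ ha, Finset.sum_mul]
  have hP : ∑ n ∈ Finset.range N, t n * u n ≤ (1 + √2) ^ 2 * G :=
    calc ∑ n ∈ Finset.range N, t n * u n
        = (√2 + 1) * ((√2 - 1) * ∑ n ∈ Finset.range N, t n * u n) := by
          rw [← mul_assoc, h_sqrt, one_mul]
      _ ≤ (√2 + 1) * ((√2 + 1) * G) := mul_le_mul_of_nonneg_left hsum (by positivity)
      _ = (1 + √2) ^ 2 * G := by ring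
  refine le_of_eq_of_le (Finset.sum_congr rfl fun n _ => ?_) hP
  simp only [t, u]
  ring

theorem tsum_ofReal_rpow_mul_le_of_isMinOn {φ : ℝ → ℝ} {G : ℝ}
    (hφ : MapsTo φ (Ici 0) (Icc 0 G)) {s : ℝ → ℝ}
    (hs : ∀ t, 0 < t → s t ∈ Ici 0 ∧ IsMinOn (fun σ => t * σ - φ σ) (Ici 0) (s t))
    {a : ℝ} (ha : 0 < a) :
    ∑' n : ℕ, ENNReal.ofReal ((2 : ℝ) ^ ((n : ℝ) / 2) * s (a * (2 : ℝ) ^ ((n : ℝ) / 2))) ≤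
      ENNReal.ofReal ((1 + √2) ^ 2 * G / a) := by
  refine ENNReal.tsum_le_of_sum_range_le fun N => ?_
  rw [← ENNReal.ofReal_sum_of_nonneg fun n _ =>
    mul_nonneg (by positivity) (mem_Ici.1 (hs _ (by positivity)).1)]
  exact ENNReal.ofReal_le_ofReal (sum_range_rpow_mul_le_of_isMinOn hφ hs ha N)

theorem integrable_sSup_image {α ι : Type*} [MeasurableSpace α] {μ : Measure α} {f : ι → α → ℝ}
    {A : Set ι} (hA : A.Finite) (hA_ne : A.Nonempty) (hf : ∀ i ∈ A, Integrable (f i) μ) :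
    Integrable (fun ω => sSup ((f · ω) '' A)) μ := by
  have hne : hA.toFinset.Nonempty := by simpa using hA_ne
  have h := Finset.sup'_induction hne f (p := fun g => Integrable g μ)
    (fun _ h₁ _ h₂ => h₁.sup h₂) (by simpa using hf)
  convert h using 1
  ext ω
  rw [Finset.sup'_apply, Finset.sup'_eq_csSup_image, hA.coe_toFinset]

namespace IsCenteredGaussianProcess

variable {Ω : Type*} {ι : Type*} [MeasureSpace Ω] [Fintype ι] {X : ι → Ω → ℝ}

theorem exists_map_eq_gaussianReal (hX : IsCenteredGaussianProcess X) (y : ι) :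
    ∃ v : ℝ≥0, Measure.map (X y) ℙ = gaussianReal 0 v := by
  classical
  obtain ⟨v, hv⟩ := hX.2 (Pi.single y 1)
  exact ⟨v, by simpa [Pi.single_apply] using hv⟩

theorem integrable (hX : IsCenteredGaussianProcess X) (y : ι) : Integrable (X y) := by
  obtain ⟨v, hv⟩ := hX.exists_map_eq_gaussianReal y
  have h : Integrable id (Measure.map (X y) ℙ) := hv ▸ (memLp_id_gaussianReal 1).integrable le_rfl
  exact (integrable_map_measure aestronglyMeasurable_id (hX.1 y).aemeasurable).mp h

theorem integral_eq_zero (hX : IsCenteredGaussianProcess X) (y : ι) : ∫ ω, X y ω = 0 := by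
  obtain ⟨v, hv⟩ := hX.exists_map_eq_gaussianReal y
  have h := integral_map (μ := ℙ) (f := fun z : ℝ => z) (hX.1 y).aemeasurable aestronglyMeasurable_id
  rwa [hv, integral_id_gaussianReal, eq_comm] at h

theorem integrable_sSup_image (hX : IsCenteredGaussianProcess X) {A : Set ι}
    (hA : A.Nonempty) : Integrable (fun ω => sSup ((X · ω) '' A)) :=
  _root_.integrable_sSup_image A.toFinite hA fun y _ => hX.integrable y

theorem gWidth_mono (hX : IsCenteredGaussianProcess X) {A B : Set ι} (hA : A.Nonempty)
    (hAB : A ⊆ B) : gWidth X A ≤ gWidth X B :=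
  integral_mono (hX.integrable_sSup_image hA) (hX.integrable_sSup_image (hA.mono hAB)) fun _ =>
    csSup_le_csSup ((B.toFinite.image _).bddAbove) (hA.image _) (image_mono hAB)

theorem gWidth_nonneg (hX : IsCenteredGaussianProcess X) {A : Set ι} {x : ι} (hx : x ∈ A) :
    0 ≤ gWidth X A := by
  rw [← hX.integral_eq_zero x]
  exact integral_mono (hX.integrable x) (hX.integrable_sSup_image ⟨x, hx⟩) fun _ =>
    le_csSup ((A.toFinite.image _).bddAbove) (mem_image_of_mem _ hx)

theorem mapsTo_gWidth_closedBall (hX : IsCenteredGaussianProcess X) (x : ι) :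
    MapsTo (fun σ => gWidth X {y | natDist X x y ≤ σ}) (Ici 0) (Icc 0 (gWidth X univ)) := by
  intro σ hσ
  have hx : x ∈ {y | natDist X x y ≤ σ} := by simpa [natDist] using mem_Ici.1 hσ
  exact ⟨hX.gWidth_nonneg hx, hX.gWidth_mono ⟨x, hx⟩ (subset_univ _)⟩

end IsCenteredGaussianProcess

/-- **Gaussian interpolation lemma** (Lemma 6.3). Let `s(t,x)` minimize
`s ↦ t·s + G(T) − G(B(x,s))` over `s ≥ 0`. Then there is a universal constant `C`
such that `sup_{x∈T} Σ_n 2^{n/2} s(a·2^{n/2}, x) ≤ C·G(T)/a` for every `a > 0`. -/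
theorem gaussian_interpolation_lemma :
    ∃ C : ℝ, 0 < C ∧
      ∀ (Ω : Type u) (ι : Type v) [MeasureSpace Ω] [Fintype ι],
        ∀ _ : IsProbabilityMeasure (ℙ : Measure Ω),
        ∀ X : ι → Ω → ℝ, IsCenteredGaussianProcess X →
        ∀ s : ℝ → ι → ℝ,
          (∀ t : ℝ, 0 ≤ t → ∀ x : ι, 0 ≤ s t x ∧
            ∀ σ : ℝ, 0 ≤ σ →
              t * s t x + gWidth X univ - gWidth X {y | natDist X x y ≤ s t x} ≤
                t * σ + gWidth X univ - gWidth X {y | natDist X x y ≤ σ}) →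
        ∀ a : ℝ, 0 < a → ∀ x : ι,
          ∑' n : ℕ, ENNReal.ofReal
              ((2 : ℝ) ^ ((n : ℝ) / 2) * s (a * (2 : ℝ) ^ ((n : ℝ) / 2)) x) ≤
            ENNReal.ofReal (C * gWidth X univ / a) := by
  refine ⟨(1 + √2) ^ 2, by positivity, ?_⟩
  intro Ω ι _ _ _ X hX s hs a ha x
  refine tsum_ofReal_rpow_mul_le_of_isMinOn (hX.mapsTo_gWidth_closedBall x)
    (fun t ht => ⟨(hs t ht.le x).1, isMinOn_iff.2 fun σ hσ => ?_⟩) ha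
  linarith [(hs t ht.le x).2 σ hσ]
end
end

section
/- (Growth functional theorem.) Let (T,d) be a metric space and c, L > 0. Sets H₁,…,H_m ⊆ T are (b,c)-separated if there exist points x₁,…,x_m, y ∈ T with d(x_i,x_j) ≥ b for all i ≠ j, d(x_i,y) ≤ c·b for all i, and H_i ⊆ B(x_i, b/c) for all i, where B(x,s) := { z ∈ T : d(x,z) ≤ s }. Let (F_n)_{n≥0} be maps from subsets of T to [0,∞) that are increasing (H ⊆ H' implies F_n(H) ≤ F_n(H')) and decreasing in n (F_{n+1}(H) ≤ F_n(H)), and suppose they satisfy the growth condition: for every b > 0, n ≥ 1, and every collection H₁,…,H_N ⊆ T of N = 2^(2^n) sets that are (b,c)-separated, F_{n−1}(∪_{i≤N} H_i) ≥ L·2^{n/2}·b + min_{i≤N} F_n(H_i). Then there exist universal constants c₀ and C such that if c ≥ c₀, then γ₂(T) ≤ C·( (c/L)·F₀(T) + diam(T) ). -/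
open scoped ENNReal NNReal
open EMetric Set

noncomputable section

universe u

/-- Sets `H i` are `(b,c)`-separated: there are points `x i` that are `b`-separated,
all within distance `c·b` of a common point `y`, with `H i ⊆ B(x i, b/c)`. -/
def SeparatedFamily {T : Type u} [MetricSpace T] {N : ℕ} (b c : ℝ)
    (H : Fin N → Set T) : Prop :=
  ∃ (x : Fin N → T) (y : T),
    (∀ i j, i ≠ j → b ≤ dist (x i) (x j)) ∧
    (∀ i, dist (x i) y ≤ c * b) ∧
    (∀ i, H i ⊆ {z | dist (x i) z ≤ b / c})

/-!
Talagrand's greedy partitioning. Every piece `A` of the current partition carries a level `k`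
with `diam A ≤ r_k = R (2/c)^k`. At stage `n` the piece is split by choosing `2^(2^n) - 1`
centres one after another, each a near-maximiser, over the points not yet covered, of the local
potential `y ↦ F_n (A ∩ B(y, r_k/c²))`, and cutting off the balls `B(centre, r_k/c)`: these
pieces move to level `k + 1`, the leftover keeps level `k`. For `x` in the leftover, the centres
together with `x` form an `(r_k/c, c)`-separated family, so the growth condition yields
`(L/2) 2^(n/2) r_k/c + F_n (A ∩ B(x, r_k/c²)) ≤ F_(n-1) A`.

Along the chain of pieces containing `x`, the weights `2^(n/2) r_(k_n)` grow geometrically while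
the level is constant, so their sum is controlled by the weights at the last visit of each
level. A level entered by a jump costs a quarter of the previous one; a level left after a stall
is paid for by the drop of the local potential, and these drops telescope because three levels
later the whole piece lies in the ball of the earlier potential, which is where `c ≥ 16` enters.
-/

namespace GrowthFunctional

open Finset

section Chain

structure IsLevelSequence (k : ℕ → ℕ) : Prop where
  zero : k 0 = 0
  succ : ∀ n, k (n + 1) = k n ∨ k (n + 1) = k n + 1

/-- Junk value `0` when `k` does not take the value `j` up to time `M`. -/
def lastVisit (k : ℕ → ℕ) (M j : ℕ) : ℕ := Nat.findGreatest (fun n => k n = j) M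

variable {k : ℕ → ℕ} {t P : ℕ → ℝ} {a B R : ℝ} {M j n : ℕ}

lemma lastVisit_le : lastVisit k M j ≤ M := Nat.findGreatest_le M

lemma le_lastVisit (hn : n ≤ M) : n ≤ lastVisit k M (k n) := Nat.le_findGreatest hn rfl

namespace IsLevelSequence

variable (hk : IsLevelSequence k)
include hk

lemma monotone : Monotone k :=
  monotone_nat_of_le_succ fun n => by rcases hk.succ n with h | h <;> omega

lemma exists_eq_of_le : ∀ {M j : ℕ}, j ≤ k M → ∃ n ≤ M, k n = j
  | 0, _, hj => ⟨0, le_rfl, by have := hk.zero; omega⟩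
  | M + 1, j, hj => by
    rcases hj.eq_or_lt with rfl | hj
    · exact ⟨M + 1, le_rfl, rfl⟩
    · obtain ⟨n, hn, rfl⟩ := exists_eq_of_le (M := M) (j := j)
        (by rcases hk.succ M with h | h <;> omega)
      exact ⟨n, by omega, rfl⟩

lemma apply_lastVisit (hj : j ≤ k M) : k (lastVisit k M j) = j := by
  obtain ⟨n, hn, rfl⟩ := hk.exists_eq_of_le hj
  exact Nat.findGreatest_spec (P := fun m => k m = k n) hn rfl

lemma lastVisit_lt_lastVisit {j' : ℕ} (hjj' : j < j') (hj' : j' ≤ k M) :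
    lastVisit k M j < lastVisit k M j' := by
  by_contra! h
  have := hk.monotone h
  rw [hk.apply_lastVisit hj', hk.apply_lastVisit (by omega)] at this
  omega

lemma eq_sqrt_two_pow_mul (ht : ∀ n, k (n + 1) = k n → t (n + 1) = √2 * t n) {m : ℕ}
    (hnm : n ≤ m) (hkm : k m = k n) : t m = √2 ^ (m - n) * t n := by
  induction m, hnm using Nat.le_induction with
  | base => simp
  | succ m hnm ih =>
    have hm : k m = k n := le_antisymm (hkm ▸ hk.monotone m.le_succ) (hk.monotone hnm)
    rw [ht m (hkm.trans hm.symm), ih hm, Nat.succ_sub hnm, pow_succ]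
    ring

end IsLevelSequence

lemma geom_sum_inv_sqrt_two_le (n : ℕ) : ∑ i ∈ range n, (√2)⁻¹ ^ i ≤ 4 := by
  have h43 : (4 : ℝ) / 3 ≤ √2 := by
    rw [Real.le_sqrt (by norm_num) (by norm_num)]; norm_num
  have hinv : (√2)⁻¹ ≤ 3 / 4 := by
    rw [inv_le_comm₀ (by positivity) (by norm_num)]; linarith
  have h := geom_sum_Ico_le_of_lt_one (m := 0) (n := n) (by positivity : (0 : ℝ) ≤ (√2)⁻¹)
    (by linarith)
  rw [← range_eq_Ico, pow_zero] at h
  refine h.trans ?_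
  rw [div_le_iff₀ (by linarith)]
  linarith

lemma sum_range_le_sum_lastVisit (hk : IsLevelSequence k) (ht_nonneg : ∀ n, 0 ≤ t n)
    (ht : ∀ n, k (n + 1) = k n → t (n + 1) = √2 * t n) (M : ℕ) :
    ∑ n ∈ range (M + 1), t n ≤ 4 * ∑ j ∈ range (k M + 1), t (lastVisit k M j) := by
  have hmaps : ∀ n ∈ range (M + 1), k n ∈ range (k M + 1) := fun n hn => by
    simp only [Finset.mem_range] at hn ⊢
    exact Nat.lt_succ_of_le (hk.monotone (Nat.le_of_lt_succ hn))
  rw [← sum_fiberwise_of_maps_to hmaps, mul_sum]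
  refine sum_le_sum fun j _ => ?_
  set m := lastVisit k M j
  have hfiber : ∀ n ∈ (range (M + 1)).filter (k · = j),
      t n = (√2)⁻¹ ^ (m - n) * t m ∧ n ∈ range (m + 1) := by
    intro n hn
    simp only [mem_filter, Finset.mem_range] at hn
    obtain ⟨hnM, rfl⟩ := hn
    have hnm : n ≤ m := le_lastVisit (Nat.le_of_lt_succ hnM)
    have hkm : k m = k n := hk.apply_lastVisit (hk.monotone (Nat.le_of_lt_succ hnM))
    refine ⟨?_, Finset.mem_range.2 (Nat.lt_succ_of_le hnm)⟩
    rw [hk.eq_sqrt_two_pow_mul ht hnm hkm, ← mul_assoc, ← mul_pow,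
      inv_mul_cancel₀ (by positivity), one_pow, one_mul]
  calc ∑ n ∈ (range (M + 1)).filter (k · = j), t n
      = ∑ n ∈ (range (M + 1)).filter (k · = j), (√2)⁻¹ ^ (m - n) * t m :=
        sum_congr rfl fun n hn => (hfiber n hn).1
    _ ≤ ∑ n ∈ range (m + 1), (√2)⁻¹ ^ (m - n) * t m :=
        sum_le_sum_of_subset_of_nonneg (fun n hn => (hfiber n hn).2)
          fun n _ _ => mul_nonneg (by positivity) (ht_nonneg m)
    _ = (∑ i ∈ range (m + 1), (√2)⁻¹ ^ i) * t m := by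
        rw [sum_mul, ← sum_range_reflect]
        exact sum_congr rfl fun i hi => by
          rw [Nat.add_sub_cancel, Nat.sub_sub_self (Nat.le_of_lt_succ (Finset.mem_range.1 hi))]
    _ ≤ 4 * t m := mul_le_mul_of_nonneg_right (geom_sum_inv_sqrt_two_le _) (ht_nonneg m)

/-- At the last visit of level `j`, either that level was entered earlier and the last step was
a stall, whose gain is charged to the potential three levels below, or the level was entered
by a jump from the last visit of level `j - 1`, which costs a quarter of its weight. -/
lemma mul_apply_lastVisit_add_le (hk : IsLevelSequence k) (ha : 0 < a) (ht0 : t 0 ≤ R)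
    (ht_nonneg : ∀ n, 0 ≤ t n) (ht_jump : ∀ n, k (n + 1) = k n + 1 → 4 * t (n + 1) ≤ t n)
    (hP : Antitone P) (hPB : ∀ n, P n ≤ B)
    (hstall : ∀ n, k (n + 1) = k n → a * t (n + 1) + P (n + 1) ≤ B)
    (hcharge : ∀ m n, k (n + 1) = k n → m ≤ n → k m + 3 ≤ k (n + 1) →
      a * t (n + 1) + P (n + 1) ≤ P m) (hj : j ≤ k M) :
    a * t (lastVisit k M j) + P (lastVisit k M j) ≤
      (if j < 3 then B else P (lastVisit k M (j - 3))) +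
        a * (if j = 0 then R else t (lastVisit k M (j - 1)) / 4) := by
  have hkm : k (lastVisit k M j) = j := hk.apply_lastVisit hj
  have hlast : ∀ i < j, lastVisit k M i < lastVisit k M j := fun i hi =>
    hk.lastVisit_lt_lastVisit hi hj
  have hP_le : P (lastVisit k M j) ≤ if j < 3 then B else P (lastVisit k M (j - 3)) := by
    split_ifs
    · exact hPB _
    · exact hP (hlast _ (by omega)).le
  have he_nonneg : 0 ≤ a * (if j = 0 then R else t (lastVisit k M (j - 1)) / 4) := by
    refine mul_nonneg ha.le ?_
    split_ifs
    exacts [(ht_nonneg 0).trans ht0, div_nonneg (ht_nonneg _) zero_le_four]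
  rcases hm : lastVisit k M j with _ | n
  · rw [hm, hk.zero] at hkm
    rw [hm] at hP_le
    subst hkm
    simp only [if_true, Nat.ofNat_pos] at hP_le ⊢
    nlinarith
  rw [hm] at hkm hP_le hlast
  rcases hk.succ n with hstall_n | hjump_n
  · have : a * t (n + 1) + P (n + 1) ≤ if j < 3 then B else P (lastVisit k M (j - 3)) := by
      split_ifs
      · exact hstall n hstall_n
      · refine hcharge _ n hstall_n (Nat.le_of_lt_succ (hlast _ (by omega))) ?_
        rw [hk.apply_lastVisit (by omega)]
        omega
    linarith
  · have hn_le : n ≤ M := by have := lastVisit_le (k := k) (M := M) (j := j); omega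
    have hprev : lastVisit k M (j - 1) = n := by
      refine le_antisymm (Nat.le_of_lt_succ (hlast _ (by omega))) ?_
      have h := le_lastVisit (k := k) hn_le
      rwa [show k n = j - 1 by omega] at h
    rw [if_neg (show j ≠ 0 by omega), hprev]
    nlinarith [ht_jump n hjump_n]

lemma mul_sum_lastVisit_le (hk : IsLevelSequence k) (ha : 0 < a) (ht0 : t 0 ≤ R)
    (ht_nonneg : ∀ n, 0 ≤ t n) (ht_jump : ∀ n, k (n + 1) = k n + 1 → 4 * t (n + 1) ≤ t n)
    (hP : Antitone P) (hP_nonneg : ∀ n, 0 ≤ P n) (hPB : ∀ n, P n ≤ B)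
    (hstall : ∀ n, k (n + 1) = k n → a * t (n + 1) + P (n + 1) ≤ B)
    (hcharge : ∀ m n, k (n + 1) = k n → m ≤ n → k m + 3 ≤ k (n + 1) →
      a * t (n + 1) + P (n + 1) ≤ P m) (M : ℕ) :
    a * ∑ j ∈ range (k M + 1), t (lastVisit k M j) ≤ 4 * (B + a * R) := by
  set K := k M
  set u : ℕ → ℝ := fun j => t (lastVisit k M j)
  set Q : ℕ → ℝ := fun j => P (lastVisit k M j)
  set Q' : ℕ → ℝ := fun j => if j < 3 then B else Q (j - 3)
  have hB : 0 ≤ B := (hP_nonneg 0).trans (hPB 0)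
  have hlevel : ∑ j ∈ range (K + 1), (a * u j + Q j) ≤ ∑ j ∈ range (K + 1), Q' j +
      a * ∑ j ∈ range (K + 1), (if j = 0 then R else u (j - 1) / 4) := by
    rw [mul_sum, ← sum_add_distrib]
    exact sum_le_sum fun j hj => mul_apply_lastVisit_add_le hk ha ht0 ht_nonneg ht_jump hP
      hPB hstall hcharge (Nat.le_of_lt_succ (Finset.mem_range.1 hj))
  have hQ' : ∑ j ∈ range (K + 1), Q' j ≤ 3 * B + ∑ j ∈ range (K + 1), Q j := by
    calc ∑ j ∈ range (K + 1), Q' j ≤ ∑ j ∈ range (3 + (K + 1)), Q' j :=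
          sum_le_sum_of_subset_of_nonneg (range_subset_range.2 (by omega)) fun j _ _ => by
            simp only [Q']
            split_ifs
            exacts [hB, hP_nonneg _]
      _ = 3 * B + ∑ j ∈ range (K + 1), Q j := by
          rw [sum_range_add]
          simp [Q', sum_range_succ]
          ring
  have he : ∑ j ∈ range (K + 1), (if j = 0 then R else u (j - 1) / 4) ≤
      R + (∑ j ∈ range (K + 1), u j) / 4 := by
    rw [sum_range_succ', sum_div, sum_range_succ _ K]
    simp only [Nat.add_one_ne_zero, if_false, if_true, Nat.add_sub_cancel]
    have : 0 ≤ u K / 4 := div_nonneg (ht_nonneg _) zero_le_four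
    linarith
  have hR : 0 ≤ a * R := mul_nonneg ha.le ((ht_nonneg 0).trans ht0)
  rw [sum_add_distrib, ← mul_sum] at hlevel
  nlinarith [mul_le_mul_of_nonneg_left he ha.le]

theorem mul_sum_range_le_of_stall_bounds (hk : IsLevelSequence k) (ha : 0 < a) (ht0 : t 0 ≤ R)
    (ht_nonneg : ∀ n, 0 ≤ t n) (ht_stall : ∀ n, k (n + 1) = k n → t (n + 1) = √2 * t n)
    (ht_jump : ∀ n, k (n + 1) = k n + 1 → 4 * t (n + 1) ≤ t n)
    (hP : Antitone P) (hP_nonneg : ∀ n, 0 ≤ P n) (hPB : ∀ n, P n ≤ B)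
    (hstall : ∀ n, k (n + 1) = k n → a * t (n + 1) + P (n + 1) ≤ B)
    (hcharge : ∀ m n, k (n + 1) = k n → m ≤ n → k m + 3 ≤ k (n + 1) →
      a * t (n + 1) + P (n + 1) ≤ P m) (N : ℕ) :
    a * ∑ n ∈ range N, t n ≤ 16 * (B + a * R) :=
  calc a * ∑ n ∈ range N, t n ≤ a * ∑ n ∈ range (N + 1), t n :=
        mul_le_mul_of_nonneg_left (sum_le_sum_of_subset_of_nonneg
          (range_subset_range.2 N.le_succ) fun n _ _ => ht_nonneg n) ha.le
    _ ≤ a * (4 * ∑ j ∈ range (k N + 1), t (lastVisit k N j)) :=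
        mul_le_mul_of_nonneg_left (sum_range_le_sum_lastVisit hk ht_nonneg ht_stall N) ha.le
    _ = 4 * (a * ∑ j ∈ range (k N + 1), t (lastVisit k N j)) := by ring
    _ ≤ 4 * (4 * (B + a * R)) :=
        mul_le_mul_of_nonneg_left (mul_sum_lastVisit_le hk ha ht0 ht_nonneg ht_jump hP
          hP_nonneg hPB hstall hcharge N) zero_le_four
    _ = 16 * (B + a * R) := by ring

end Chain

lemma exists_forall_le_add_of_bddAbove {α : Type*} {f : α → ℝ} {s : Set α} (hs : s.Nonempty)
    (hf : BddAbove (f '' s)) {ε : ℝ} (hε : 0 < ε) : ∃ y ∈ s, ∀ z ∈ s, f z ≤ f y + ε := by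
  obtain ⟨_, ⟨y, hy, rfl⟩, hlt⟩ := exists_lt_of_lt_csSup (hs.image f) (sub_lt_self _ hε)
  exact ⟨y, hy, fun z hz => by linarith [le_csSup hf (mem_image_of_mem f hz)]⟩

lemma two_rpow_half (n : ℕ) : (2 : ℝ) ^ ((n : ℝ) / 2) = √2 ^ n := by
  rw [Real.rpow_div_two_eq_sqrt _ zero_le_two, Real.rpow_natCast]

lemma eDiam_le_ofReal {X : Type*} [PseudoMetricSpace X] {A : Set X} {r : ℝ}
    (h : ∀ y ∈ A, ∀ z ∈ A, dist y z ≤ r) : eDiam (edist : X → X → ℝ≥0∞) A ≤ ENNReal.ofReal r :=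
  iSup₂_le fun y hy => iSup₂_le fun z hz => by
    rw [edist_dist]
    exact ENNReal.ofReal_le_ofReal (h y hy z hz)

lemma dist_le_toReal_eDiam {X : Type*} [PseudoMetricSpace X]
    (h : eDiam (edist : X → X → ℝ≥0∞) univ ≠ ⊤) (x y : X) :
    dist x y ≤ (eDiam (edist : X → X → ℝ≥0∞) univ).toReal := by
  rw [dist_edist]
  exact ENNReal.toReal_mono h
    (le_iSup₂_of_le x (mem_univ x) (le_iSup₂_of_le y (mem_univ y) le_rfl))

def Admissible.trivial (X : Type u) : Admissible (univ : Set X) where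
  piece _ _ := univ
  self_mem _ x _ := mem_univ x
  subset_base _ _ _ := subset_rfl
  partition _ _ _ _ _ _ := rfl
  finite_pieces _ := (finite_singleton univ).subset <| by rintro _ ⟨_, _, rfl⟩; rfl
  card_pieces n := by
    calc _ ≤ ({univ} : Set (Set X)).ncard :=
          Set.ncard_le_ncard (by rintro _ ⟨_, _, rfl⟩; rfl) (finite_singleton _)
      _ = 1 := ncard_singleton _
      _ < 2 ^ 2 ^ n := Nat.one_lt_two_pow (by positivity)
  nested _ _ _ := subset_rfl

lemma gammaF_eq_zero_of_eDiam_eq_zero {X : Type u} {D : X → X → ℝ≥0∞} {α p : ℝ} (hp : 0 < p)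
    (h : eDiam D univ = 0) : gammaF D α p univ = 0 := by
  refine le_antisymm ((iInf_le _ (Admissible.trivial X)).trans ?_) bot_le
  simp [Admissible.trivial, h, hp]

structure GrowthData (T : Type u) [MetricSpace T] where
  c : ℝ
  L : ℝ
  R : ℝ
  F : ℕ → Set T → ℝ
  sixteen_le_c : 16 ≤ c
  L_pos : 0 < L
  R_pos : 0 < R
  dist_le : ∀ x y : T, dist x y ≤ R
  F_nonneg : ∀ n H, 0 ≤ F n H
  F_mono : ∀ (n : ℕ) (H H' : Set T), H ⊆ H' → F n H ≤ F n H'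
  F_succ_le : ∀ (n : ℕ) (H : Set T), F (n + 1) H ≤ F n H
  growth : ∀ b : ℝ, 0 < b → ∀ n : ℕ, 1 ≤ n →
    ∀ H : Fin (2 ^ 2 ^ n) → Set T, SeparatedFamily b c H →
      L * (2 : ℝ) ^ ((n : ℝ) / 2) * b + ⨅ i, F n (H i) ≤ F (n - 1) (⋃ i, H i)

namespace GrowthData

variable {T : Type u} [MetricSpace T] (G : GrowthData T)

lemma c_pos : 0 < G.c := by linarith [G.sixteen_le_c]

lemma F_antitone : Antitone G.F := antitone_nat_of_succ_le G.F_succ_le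

lemma F_le_F_zero_univ (n : ℕ) (A : Set T) : G.F n A ≤ G.F 0 univ :=
  (G.F_antitone n.zero_le A).trans (G.F_mono 0 A univ (subset_univ A))

def radius (k : ℕ) : ℝ := G.R * (2 / G.c) ^ k

def separation (k : ℕ) : ℝ := G.radius k / G.c

def smallRadius (k : ℕ) : ℝ := G.separation k / G.c

lemma radius_pos (k : ℕ) : 0 < G.radius k := by
  have := G.c_pos; have := G.R_pos; unfold radius; positivity

lemma separation_pos (k : ℕ) : 0 < G.separation k :=
  div_pos (G.radius_pos k) G.c_pos

lemma radius_succ (k : ℕ) : G.radius (k + 1) = 2 * G.separation k := by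
  simp only [radius, separation, pow_succ]
  ring

lemma radius_antitone : Antitone G.radius := by
  refine antitone_nat_of_succ_le fun k => ?_
  have hc := G.sixteen_le_c
  have hr := G.radius_pos k
  rw [radius_succ, separation, ← mul_div_assoc, div_le_iff₀ G.c_pos]
  nlinarith

lemma smallRadius_antitone : Antitone G.smallRadius := fun _ _ h => by
  unfold smallRadius separation
  gcongr
  · exact G.c_pos.le
  · exact G.c_pos.le
  · exact G.radius_antitone h

lemma radius_le_smallRadius {j k : ℕ} (h : j + 3 ≤ k) : G.radius k ≤ G.smallRadius j := by
  refine (G.radius_antitone h).trans ?_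
  have hc := G.sixteen_le_c
  have hr := G.radius_pos j
  have hc0 := G.c_pos
  have h3 : G.radius (j + 3) = G.radius j * (8 / G.c ^ 3) := by
    simp only [radius, pow_add]
    ring
  rw [h3, smallRadius, separation, div_div, ← mul_one_div (G.radius j)]
  refine mul_le_mul_of_nonneg_left ?_ hr.le
  rw [div_le_div_iff₀ (by positivity) (by positivity)]
  nlinarith

lemma four_mul_sqrt_two_mul_radius_succ_le (k : ℕ) :
    4 * (√2 * G.radius (k + 1)) ≤ G.radius k := by
  have hc := G.sixteen_le_c
  have hr := G.radius_pos k
  have hsqrt : √2 ≤ 3 / 2 := by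
    rw [Real.sqrt_le_left (by norm_num)]; norm_num
  calc 4 * (√2 * G.radius (k + 1)) = 8 * √2 / G.c * G.radius k := by
        rw [radius_succ, separation]; ring
    _ ≤ 1 * G.radius k := by
        gcongr
        rw [div_le_one G.c_pos]
        linarith
    _ = G.radius k := one_mul _

def potential (n k : ℕ) (A : Set T) (y : T) : ℝ :=
  G.F n (A ∩ Metric.closedBall y (G.smallRadius k))

/-- Half the gain granted by the growth condition at stage `n`, level `k`: near-maximisers up to
this slack always exist, and cost only a factor `2` in `L`. -/
def slack (n k : ℕ) : ℝ := G.L * √2 ^ n * G.separation k / 2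

lemma slack_pos (n k : ℕ) : 0 < G.slack n k := by
  have := G.L_pos; have := G.separation_pos k; unfold slack; positivity

lemma slack_eq (n k : ℕ) : G.slack n k = G.L / (2 * G.c) * (√2 ^ n * G.radius k) := by
  have := G.c_pos.ne'
  unfold slack separation
  field_simp

variable [Nonempty T]

def pick (n k : ℕ) (A S : Set T) : T :=
  Classical.epsilon fun y =>
    y ∈ S ∧ ∀ z ∈ S, G.potential n k A z ≤ G.potential n k A y + G.slack n k

lemma pick_spec {n k : ℕ} {A S : Set T} (hS : S.Nonempty) :
    G.pick n k A S ∈ S ∧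
      ∀ z ∈ S, G.potential n k A z ≤ G.potential n k A (G.pick n k A S) + G.slack n k :=
  Classical.epsilon_spec <| exists_forall_le_add_of_bddAbove hS
    ⟨G.F 0 univ, by rintro _ ⟨z, -, rfl⟩; exact G.F_le_F_zero_univ _ _⟩ (G.slack_pos n k)

def remainder (n k : ℕ) (A : Set T) : ℕ → Set T
  | 0 => A
  | l + 1 => remainder n k A l \
      Metric.closedBall (G.pick n k A (remainder n k A l)) (G.separation k)

lemma remainder_antitone (n k : ℕ) (A : Set T) : Antitone (G.remainder n k A) :=
  antitone_nat_of_succ_le fun _ => sdiff_subset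

lemma remainder_subset (n k : ℕ) (A : Set T) (l : ℕ) : G.remainder n k A l ⊆ A :=
  G.remainder_antitone n k A l.zero_le

open scoped Classical in
def chunkIndex (n k : ℕ) (A : Set T) (x : T) : ℕ :=
  Nat.findGreatest (fun l => x ∈ G.remainder n k A l) (2 ^ 2 ^ n - 1)

def chunk (n k : ℕ) (A : Set T) (l : ℕ) : Set T × ℕ :=
  if l = 2 ^ 2 ^ n - 1 then (G.remainder n k A l, k)
  else (G.remainder n k A l ∩
    Metric.closedBall (G.pick n k A (G.remainder n k A l)) (G.separation k), k + 1)

open scoped Classical in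
lemma chunkIndex_le (n k : ℕ) (A : Set T) (x : T) : G.chunkIndex n k A x ≤ 2 ^ 2 ^ n - 1 :=
  Nat.findGreatest_le _

lemma chunk_fst_subset (n k : ℕ) (A : Set T) (l : ℕ) :
    (G.chunk n k A l).1 ⊆ G.remainder n k A l := by
  unfold chunk
  split_ifs
  exacts [subset_rfl, inter_subset_left]

open scoped Classical in
lemma mem_chunk_iff {n k l : ℕ} {A : Set T} {x : T} (hx : x ∈ A) (hl : l ≤ 2 ^ 2 ^ n - 1) :
    x ∈ (G.chunk n k A l).1 ↔ G.chunkIndex n k A x = l := by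
  rw [chunkIndex, Nat.findGreatest_eq_iff]
  constructor
  · intro h
    refine ⟨hl, fun _ => G.chunk_fst_subset n k A l h, fun j hlj hj hxj => ?_⟩
    simp only [chunk, if_neg (show l ≠ 2 ^ 2 ^ n - 1 by omega)] at h
    exact (G.remainder_antitone n k A hlj hxj).2 h.2
  · rintro ⟨-, hrem, hgt⟩
    replace hrem : x ∈ G.remainder n k A l := by
      rcases l with _ | l
      exacts [hx, hrem l.succ_ne_zero]
    unfold chunk
    split_ifs with hlast
    · exact hrem
    · exact ⟨hrem, by_contra fun hball => hgt (Nat.lt_succ_self l) (by omega) ⟨hrem, hball⟩⟩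

def step (n : ℕ) (p : Set T × ℕ) (x : T) : Set T × ℕ :=
  G.chunk n p.2 p.1 (G.chunkIndex n p.2 p.1 x)

lemma step_fst_subset (n : ℕ) (p : Set T × ℕ) (x : T) : (G.step n p x).1 ⊆ p.1 :=
  (G.chunk_fst_subset _ _ _ _).trans (G.remainder_subset _ _ _ _)

lemma mem_step {n : ℕ} {p : Set T × ℕ} {x : T} (hx : x ∈ p.1) : x ∈ (G.step n p x).1 :=
  (G.mem_chunk_iff hx (G.chunkIndex_le _ _ _ _)).2 rfl

lemma step_eq_of_mem {n : ℕ} {p : Set T × ℕ} {x y : T} (hy : y ∈ (G.step n p x).1) :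
    G.step n p y = G.step n p x := by
  rw [step, (G.mem_chunk_iff (G.step_fst_subset n p x hy) (G.chunkIndex_le _ _ _ _)).1 hy]
  rfl

lemma step_snd (n : ℕ) (p : Set T × ℕ) (x : T) :
    (G.step n p x).2 = p.2 ∨ (G.step n p x).2 = p.2 + 1 := by
  unfold step chunk
  split_ifs
  exacts [Or.inl rfl, Or.inr rfl]

lemma mem_remainder_of_step_snd_eq {n : ℕ} {p : Set T × ℕ} {x : T} (hx : x ∈ p.1)
    (h : (G.step n p x).2 = p.2) : x ∈ G.remainder n p.2 p.1 (2 ^ 2 ^ n - 1) := by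
  have hmem := G.mem_step (n := n) hx
  unfold step chunk at h hmem
  split_ifs at h hmem with hlast
  · rwa [hlast] at hmem
  · omega

lemma dist_le_radius_step {n : ℕ} {p : Set T × ℕ} (x : T)
    (hp : ∀ y ∈ p.1, ∀ z ∈ p.1, dist y z ≤ G.radius p.2) :
    ∀ y ∈ (G.step n p x).1, ∀ z ∈ (G.step n p x).1, dist y z ≤ G.radius (G.step n p x).2 := by
  unfold step chunk
  split_ifs
  · exact fun y hy z hz => hp y (G.remainder_subset _ _ _ _ hy) z (G.remainder_subset _ _ _ _ hz)
  · rintro y ⟨-, hy⟩ z ⟨-, hz⟩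
    rw [G.radius_succ, two_mul]
    exact (dist_triangle_right y z _).trans (add_le_add hy hz)

def state (x : T) : ℕ → Set T × ℕ
  | 0 => (univ, 0)
  | n + 1 => G.step (n + 1) (state x n) x

def piece (x : T) (n : ℕ) : Set T := (G.state x n).1

def level (x : T) (n : ℕ) : ℕ := (G.state x n).2

lemma mem_piece (x : T) (n : ℕ) : x ∈ G.piece x n := by
  induction n with
  | zero => exact mem_univ x
  | succ n ih => exact G.mem_step ih

lemma piece_antitone (x : T) : Antitone (G.piece x) :=
  antitone_nat_of_succ_le fun _ => G.step_fst_subset _ _ _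

lemma level_succ (x : T) (n : ℕ) :
    G.level x (n + 1) = G.level x n ∨ G.level x (n + 1) = G.level x n + 1 :=
  G.step_snd _ _ _

lemma isLevelSequence_level (x : T) : IsLevelSequence (G.level x) := ⟨rfl, G.level_succ x⟩

lemma dist_le_radius (x : T) (n : ℕ) :
    ∀ y ∈ G.piece x n, ∀ z ∈ G.piece x n, dist y z ≤ G.radius (G.level x n) := by
  induction n with
  | zero => exact fun y _ z _ => by simpa [radius, level, state] using G.dist_le y z
  | succ n ih => exact G.dist_le_radius_step x ih

lemma state_eq_of_mem {x y : T} {n : ℕ} (h : y ∈ G.piece x n) : G.state y n = G.state x n := by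
  induction n with
  | zero => rfl
  | succ n ih =>
    change G.step (n + 1) (G.state y n) y = G.step (n + 1) (G.state x n) x
    rw [ih (G.piece_antitone x n.le_succ h)]
    exact G.step_eq_of_mem h

open scoped Classical in
def reachable : ℕ → Finset (Set T × ℕ)
  | 0 => {(univ, 0)}
  | n + 1 => (reachable n ×ˢ range (2 ^ 2 ^ (n + 1))).image
      fun q => G.chunk (n + 1) q.1.2 q.1.1 q.2

lemma state_mem_reachable (x : T) (n : ℕ) : G.state x n ∈ G.reachable n := by
  induction n with
  | zero => exact Finset.mem_singleton_self _
  | succ n ih =>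
    refine Finset.mem_image.2 ⟨(G.state x n, G.chunkIndex (n + 1) (G.level x n) (G.piece x n) x),
      mem_product.2 ⟨ih, Finset.mem_range.2 ?_⟩, rfl⟩
    have := G.chunkIndex_le (n + 1) (G.level x n) (G.piece x n) x
    have : 0 < 2 ^ 2 ^ (n + 1) := by positivity
    omega

lemma card_reachable_mul_four_le (n : ℕ) : (G.reachable n).card * 4 ≤ 2 ^ 2 ^ (n + 1) := by
  induction n with
  | zero => simp [reachable]
  | succ n ih =>
    calc (G.reachable (n + 1)).card * 4 ≤ (G.reachable n).card * 2 ^ 2 ^ (n + 1) * 4 := by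
          gcongr
          exact card_image_le.trans (by rw [card_product, card_range])
      _ = (G.reachable n).card * 4 * 2 ^ 2 ^ (n + 1) := by ring
      _ ≤ 2 ^ 2 ^ (n + 1) * 2 ^ 2 ^ (n + 1) := by gcongr
      _ = 2 ^ 2 ^ (n + 1 + 1) := by rw [← pow_add, ← two_mul, ← pow_succ']

lemma card_reachable_pred_lt (n : ℕ) : (G.reachable (n - 1)).card < 2 ^ 2 ^ n := by
  rcases n with _ | n
  · simp [reachable]
  · have h4 := G.card_reachable_mul_four_le n
    have hpos : 0 < 2 ^ 2 ^ (n + 1) := Nat.two_pow_pos _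
    show (G.reachable n).card < 2 ^ 2 ^ (n + 1)
    linarith

lemma pieces_subset (m : ℕ) :
    {A : Set T | ∃ x ∈ univ, G.piece x m = A} ⊆ Prod.fst '' (G.reachable m : Set (Set T × ℕ)) := by
  rintro A ⟨x, -, rfl⟩
  exact ⟨_, G.state_mem_reachable x m, rfl⟩

/-- Stage `n` has at most `2^(2^(n+1) - 2)` pieces, so it is used as the partition of index
`n + 1`; the partitions of index `0` and `1` are both `{univ}`. -/
def admissible : Admissible (univ : Set T) where
  piece n x := G.piece x (n - 1)
  self_mem n x _ := G.mem_piece x (n - 1)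
  subset_base _ _ _ := subset_univ _
  partition _ _ _ _ _ hy := congrArg Prod.fst (G.state_eq_of_mem hy)
  finite_pieces n := ((G.reachable (n - 1)).finite_toSet.image Prod.fst).subset (G.pieces_subset _)
  card_pieces n := by
    have hfin := (G.reachable (n - 1)).finite_toSet
    calc _ ≤ (Prod.fst '' (G.reachable (n - 1) : Set (Set T × ℕ))).ncard :=
          Set.ncard_le_ncard (G.pieces_subset _) (hfin.image _)
      _ ≤ (G.reachable (n - 1) : Set (Set T × ℕ)).ncard := Set.ncard_image_le hfin
      _ < 2 ^ 2 ^ n := by rw [Set.ncard_coe_finset]; exact G.card_reachable_pred_lt n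
  nested n x _ := G.piece_antitone x (by omega)

def greedyCenter (n k : ℕ) (A : Set T) (x : T) (i : ℕ) : T :=
  if i < 2 ^ 2 ^ n - 1 then G.pick n k A (G.remainder n k A i) else x

lemma greedyCenter_mem {n k i : ℕ} {A : Set T} {x : T}
    (hx : x ∈ G.remainder n k A (2 ^ 2 ^ n - 1)) (hi : i ≤ 2 ^ 2 ^ n - 1) :
    G.greedyCenter n k A x i ∈ G.remainder n k A i := by
  unfold greedyCenter
  split_ifs with h
  · exact (G.pick_spec ⟨x, G.remainder_antitone n k A hi hx⟩).1
  · rwa [show i = 2 ^ 2 ^ n - 1 by omega]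

lemma separation_lt_dist_greedyCenter {n k i j : ℕ} {A : Set T} {x : T}
    (hx : x ∈ G.remainder n k A (2 ^ 2 ^ n - 1)) (hij : i < j) (hj : j ≤ 2 ^ 2 ^ n - 1) :
    G.separation k < dist (G.greedyCenter n k A x i) (G.greedyCenter n k A x j) := by
  have hmem : G.greedyCenter n k A x j ∈ G.remainder n k A (i + 1) :=
    G.remainder_antitone n k A hij (G.greedyCenter_mem hx hj)
  have hi : G.greedyCenter n k A x i = G.pick n k A (G.remainder n k A i) := if_pos (by omega)
  rw [hi, dist_comm]
  exact not_le.1 hmem.2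

lemma potential_le_greedyCenter {n k i : ℕ} {A : Set T} {x : T}
    (hx : x ∈ G.remainder n k A (2 ^ 2 ^ n - 1)) (hi : i ≤ 2 ^ 2 ^ n - 1) :
    G.potential n k A x ≤ G.potential n k A (G.greedyCenter n k A x i) + G.slack n k := by
  have hxi : x ∈ G.remainder n k A i := G.remainder_antitone n k A hi hx
  unfold greedyCenter
  split_ifs
  · exact (G.pick_spec ⟨x, hxi⟩).2 x hxi
  · linarith [G.slack_pos n k]

lemma separatedFamily_greedyCenter {n k : ℕ} {A : Set T} {x : T}
    (hA : ∀ y ∈ A, ∀ z ∈ A, dist y z ≤ G.radius k)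
    (hx : x ∈ G.remainder n k A (2 ^ 2 ^ n - 1)) :
    SeparatedFamily (G.separation k) G.c fun i : Fin (2 ^ 2 ^ n) =>
      A ∩ Metric.closedBall (G.greedyCenter n k A x i) (G.smallRadius k) := by
  have hle : ∀ i : Fin (2 ^ 2 ^ n), (i : ℕ) ≤ 2 ^ 2 ^ n - 1 := fun i => by omega
  refine ⟨fun i => G.greedyCenter n k A x i, x, fun i j hij => ?_, fun i => ?_,
    fun i z hz => ?_⟩
  · rcases lt_or_gt_of_ne (Fin.val_ne_of_ne hij) with h | h
    · exact (G.separation_lt_dist_greedyCenter hx h (hle j)).le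
    · rw [dist_comm]
      exact (G.separation_lt_dist_greedyCenter hx h (hle i)).le
  · rw [separation, mul_div_cancel₀ _ G.c_pos.ne']
    exact hA _ (G.remainder_subset _ _ _ _ (G.greedyCenter_mem hx (hle i))) x
      (G.remainder_subset _ _ _ _ hx)
  · rw [mem_ofPred_eq, dist_comm]
    exact hz.2

lemma slack_add_potential_le {n k : ℕ} {A : Set T} {x : T}
    (hA : ∀ y ∈ A, ∀ z ∈ A, dist y z ≤ G.radius k)
    (hx : x ∈ G.remainder (n + 1) k A (2 ^ 2 ^ (n + 1) - 1)) :
    G.slack (n + 1) k + G.potential (n + 1) k A x ≤ G.F n A := by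
  set H : Fin (2 ^ 2 ^ (n + 1)) → Set T := fun i =>
    A ∩ Metric.closedBall (G.greedyCenter (n + 1) k A x i) (G.smallRadius k)
  have hgrowth := G.growth _ (G.separation_pos k) (n + 1) n.succ_pos H
    (G.separatedFamily_greedyCenter hA hx)
  have hinf : G.potential (n + 1) k A x - G.slack (n + 1) k ≤ ⨅ i, G.F (n + 1) (H i) := by
    have : Nonempty (Fin (2 ^ 2 ^ (n + 1))) := ⟨⟨0, Nat.two_pow_pos _⟩⟩
    exact le_ciInf fun i => by
      linarith [G.potential_le_greedyCenter hx (i := i) (by omega), show G.potential (n + 1) k A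
        (G.greedyCenter (n + 1) k A x i) = G.F (n + 1) (H i) from rfl]
  have hunion : G.F n (⋃ i, H i) ≤ G.F n A :=
    G.F_mono n _ _ (iUnion_subset fun _ => inter_subset_left)
  rw [Nat.add_sub_cancel, two_rpow_half] at hgrowth
  unfold slack at *
  linarith

def weight (x : T) (n : ℕ) : ℝ := √2 ^ n * G.radius (G.level x n)

lemma mul_weight_succ_add_potential_le {x : T} {n : ℕ} (h : G.level x (n + 1) = G.level x n) :
    G.L / (2 * G.c) * G.weight x (n + 1) +
      G.potential (n + 1) (G.level x (n + 1)) (G.piece x (n + 1)) x ≤ G.F n (G.piece x n) := by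
  have hpot : G.potential (n + 1) (G.level x (n + 1)) (G.piece x (n + 1)) x ≤
      G.potential (n + 1) (G.level x n) (G.piece x n) x := by
    rw [h]
    exact G.F_mono _ _ _ (inter_subset_inter_left _ (G.piece_antitone x n.le_succ))
  have := G.slack_add_potential_le (G.dist_le_radius x n)
    (G.mem_remainder_of_step_snd_eq (G.mem_piece x n) h)
  rw [slack_eq] at this
  rw [h] at hpot
  rw [weight, h]
  linarith

lemma sum_weight_le (x : T) (N : ℕ) :
    G.L / (2 * G.c) * ∑ n ∈ range N, G.weight x n ≤
      16 * (G.F 0 univ + G.L / (2 * G.c) * G.R) := by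
  have hc := G.c_pos
  have hL := G.L_pos
  refine mul_sum_range_le_of_stall_bounds (k := G.level x)
    (P := fun n => G.potential n (G.level x n) (G.piece x n) x) (G.isLevelSequence_level x)
    (by positivity) (by simp [radius, level, state])
    (fun n => mul_nonneg (by positivity) (G.radius_pos _).le) (fun n h => ?_) (fun n h => ?_)
    (antitone_nat_of_succ_le fun n => ?_) (fun _ => G.F_nonneg _ _)
    (fun _ => G.F_le_F_zero_univ _ _)
    (fun n h => (G.mul_weight_succ_add_potential_le h).trans (G.F_le_F_zero_univ _ _))
    (fun m n h hmn hlevel => (G.mul_weight_succ_add_potential_le h).trans ?_) N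
  · simp only [h, pow_succ]
    ring
  · have := G.four_mul_sqrt_two_mul_radius_succ_le (G.level x n)
    simp only [h, pow_succ]
    nlinarith [pow_nonneg (Real.sqrt_nonneg 2) n]
  · exact (G.F_succ_le n _).trans (G.F_mono n _ _ (inter_subset_inter
      (G.piece_antitone x n.le_succ) (Metric.closedBall_subset_closedBall
        (G.smallRadius_antitone (G.isLevelSequence_level x |>.monotone n.le_succ)))))
  · refine (G.F_antitone hmn _).trans (G.F_mono m _ _ fun y hy => ⟨G.piece_antitone x hmn hy, ?_⟩)
    rw [Metric.mem_closedBall]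
    exact (G.dist_le_radius x n y hy x (G.mem_piece x n)).trans
      (G.radius_le_smallRadius (h ▸ hlevel))

theorem gammaF_le :
    gammaF (edist : T → T → ℝ≥0∞) 2 1 univ ≤
      ENNReal.ofReal (48 * (G.c / G.L * G.F 0 univ + G.R)) := by
  refine (iInf_le _ G.admissible).trans ?_
  rw [inv_one, ENNReal.rpow_one]
  refine iSup₂_le fun x _ => ENNReal.tsum_le_of_sum_range_le fun N => ?_
  have hterm : ∀ n : ℕ, ((2 : ℝ≥0∞) ^ ((n : ℝ) / 2) *
      eDiam (edist : T → T → ℝ≥0∞) (G.admissible.piece n x)) ^ (1 : ℝ) ≤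
      ENNReal.ofReal (√2 ^ n * G.radius (G.level x (n - 1))) := fun n => by
    rw [ENNReal.rpow_one, ← ENNReal.ofReal_ofNat 2, ENNReal.ofReal_rpow_of_pos two_pos,
      two_rpow_half, ENNReal.ofReal_mul (by positivity)]
    gcongr
    exact eDiam_le_ofReal (G.dist_le_radius x (n - 1))
  have hsum := G.sum_weight_le x N
  have hS : ∑ n ∈ range N, G.weight x n ≤ 32 * (G.c / G.L * G.F 0 univ) + 16 * G.R := by
    have hc := G.c_pos
    have hL := G.L_pos
    refine le_of_mul_le_mul_left (hsum.trans_eq ?_) (by positivity : 0 < G.L / (2 * G.c))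
    field_simp
    ring
  have hS0 : 0 ≤ ∑ n ∈ range N, G.weight x n :=
    sum_nonneg fun n _ => mul_nonneg (by positivity) (G.radius_pos _).le
  have hsqrt : √2 ≤ 3 / 2 := by
    rw [Real.sqrt_le_left (by norm_num)]; norm_num
  have hQ : 0 ≤ G.c / G.L * G.F 0 univ :=
    mul_nonneg (div_nonneg G.c_pos.le G.L_pos.le) (G.F_nonneg 0 univ)
  calc _ ≤ ∑ n ∈ range (N + 1), ENNReal.ofReal (√2 ^ n * G.radius (G.level x (n - 1))) :=
        (sum_le_sum fun n _ => hterm n).trans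
          (sum_le_sum_of_subset (range_subset_range.2 N.le_succ))
    _ = ENNReal.ofReal (∑ n ∈ range (N + 1), √2 ^ n * G.radius (G.level x (n - 1))) :=
        (ENNReal.ofReal_sum_of_nonneg fun n _ =>
          mul_nonneg (by positivity) (G.radius_pos _).le).symm
    _ ≤ _ := by
        refine ENNReal.ofReal_le_ofReal ?_
        rw [sum_range_succ']
        simp only [Nat.add_sub_cancel, pow_succ', mul_assoc, ← mul_sum]
        change √2 * ∑ n ∈ range N, G.weight x n + 1 * G.radius 0 ≤ _
        simp only [radius, pow_zero, mul_one, one_mul]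
        nlinarith [G.R_pos]

end GrowthData

end GrowthFunctional

/-- **Growth functional theorem** (Theorem 6.12). If a decreasing sequence of
increasing functionals `(F_n)` satisfies the growth condition with parameters
`c, L > 0` and `c ≥ c₀`, then `γ₂(T) ≤ C ((c/L)·F₀(T) + diam T)` for universal
constants `c₀, C`. -/
theorem growth_functional_theorem :
    ∃ (c₀ : ℝ) (C : ℝ≥0∞), 0 < c₀ ∧ 0 < C ∧ C ≠ ∞ ∧
      ∀ (T : Type u) [MetricSpace T] (c L : ℝ) (F : ℕ → Set T → ℝ),
        c₀ ≤ c → 0 < L →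
        (∀ n H, 0 ≤ F n H) →
        (∀ (n : ℕ) (H H' : Set T), H ⊆ H' → F n H ≤ F n H') →
        (∀ (n : ℕ) (H : Set T), F (n + 1) H ≤ F n H) →
        (∀ b : ℝ, 0 < b → ∀ n : ℕ, 1 ≤ n →
          ∀ H : Fin (2 ^ 2 ^ n) → Set T, SeparatedFamily b c H →
            L * (2 : ℝ) ^ ((n : ℝ) / 2) * b + ⨅ i, F n (H i) ≤
              F (n - 1) (⋃ i, H i)) →
        gammaF (edist : T → T → ℝ≥0∞) 2 1 Set.univ ≤
          C * (ENNReal.ofReal (c / L * F 0 Set.univ) +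
            eDiam (edist : T → T → ℝ≥0∞) Set.univ) := by
  refine ⟨16, 48, by norm_num, by norm_num, by norm_num, ?_⟩
  intro T _ c L F hc hL hF0 hmono hdec hgrowth
  set Δ := eDiam (edist : T → T → ℝ≥0∞) univ
  rcases eq_or_ne Δ 0 with hΔ | hΔ
  · rw [GrowthFunctional.gammaF_eq_zero_of_eDiam_eq_zero one_pos hΔ]
    exact bot_le
  rcases eq_or_ne Δ ⊤ with hΔtop | hΔtop
  · simp [hΔtop]
  have : Nonempty T := by
    by_contra h
    rw [not_nonempty_iff] at h
    exact hΔ (by simp [Δ, eDiam])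
  let G : GrowthFunctional.GrowthData T := ⟨c, L, Δ.toReal, F, hc, hL,
    ENNReal.toReal_pos hΔ hΔtop, GrowthFunctional.dist_le_toReal_eDiam hΔtop, hF0, hmono, hdec,
    hgrowth⟩
  have hQ : 0 ≤ c / L * F 0 univ := mul_nonneg (div_nonneg (by linarith) hL.le) (hF0 0 univ)
  calc _ ≤ ENNReal.ofReal (48 * (c / L * F 0 univ + Δ.toReal)) := G.gammaF_le
    _ = 48 * (ENNReal.ofReal (c / L * F 0 univ) + Δ) := by
      rw [ENNReal.ofReal_mul (by norm_num), ENNReal.ofReal_add hQ ENNReal.toReal_nonneg,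
        ENNReal.ofReal_toReal hΔtop, ENNReal.ofReal_ofNat]
end
end

section
/- (Multiscale interpolation lemma for growth functionals.) Let (T,d) be a metric space, L, a > 0, and let (F_n)_{n≥0} be maps from subsets of T to [0,∞) that are increasing (H ⊆ H' implies F_n(H) ≤ F_n(H')) and decreasing in n (F_{n+1}(H) ≤ F_n(H)). Define K_n(t,x) := inf_{s≥0} { t·s + F₀(T) − F_n(B(x,s)) } where B(x,s) := { z ∈ T : d(x,z) ≤ s }. For each n ≥ 1 and x ∈ T choose s_n^a(x) ≥ 0 such that K_n(L·a·2^{n/2}, x) ≤ L·a·2^{n/2}·s_n^a(x) + F₀(T) − F_n(B(x, s_n^a(x))) ≤ K_n(L·a·2^{n/2}, x) + 2^{−n}·F₀(T). Then there is a universal constant C such that sup_{x∈T} Σ_{n≥1} 2^{n/2} s_n^a(x) ≤ C · F₀(T)/(L·a). -/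
/-!
Write `t_n = L a 2^{n/2}`, `u_n = t_n s_n` and `θ_n = F₀(T) - F_n(B(x, s_n))`. Testing the
infimum defining `K_n(t_n, x)` at the radius `s_{n+1}`, and using `F_{n+1} ≤ F_n` and
`t_n = 2^{-1/2} t_{n+1}`, near-minimality of `s_n` gives
`u_n + θ_n ≤ 2^{-1/2} u_{n+1} + θ_{n+1} + 2^{-n} F₀(T)`.
Summing, the `θ` terms telescope and the errors add up to at most `F₀(T)`; since each `u_n` is
at most `2 F₀(T)` (test `K_n` at radius `0`), `(1 - 2^{-1/2}) Σ u_n ≤ 4 F₀(T)`, so one can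
take `C = 16`.
-/

open scoped ENNReal NNReal
open Set

noncomputable section

universe u

/-- The multiscale interpolation functional
`K_n(t,x) = inf_{s ≥ 0} { t·s + F₀(T) − F_n(B(x,s)) }`. -/
def Kfun {T : Type u} [MetricSpace T] (F : ℕ → Set T → ℝ) (n : ℕ) (t : ℝ) (x : T) : ℝ :=
  sInf {v : ℝ | ∃ s : ℝ, 0 ≤ s ∧
    v = t * s + F 0 Set.univ - F n {z | dist x z ≤ s}}

open Finset

theorem mul_sum_range_le_of_le_mul_succ_add {u θ e : ℕ → ℝ} {r A M : ℝ} (hr : 0 ≤ r)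
    (hu : 0 ≤ u 0) (huA : ∀ k, u k ≤ A) (hθ : 0 ≤ θ 0) (hθM : ∀ k, θ k ≤ M)
    (hrec : ∀ k, u k + θ k ≤ r * u (k + 1) + θ (k + 1) + e k) (N : ℕ) :
    (1 - r) * ∑ k ∈ range N, u k ≤ M + ∑ k ∈ range N, e k + r * A := by
  have hsum : ∑ k ∈ range N, (u k - r * u (k + 1)) ≤ θ N - θ 0 + ∑ k ∈ range N, e k := by
    rw [← sum_range_sub θ N, ← sum_add_distrib]
    exact sum_le_sum fun k _ => by linarith [hrec k]
  have hshift : ∑ k ∈ range N, (u k - r * u (k + 1)) =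
      (1 - r) * ∑ k ∈ range N, u k + r * u 0 - r * u N := by
    have h := (sum_range_succ u N).symm.trans (sum_range_succ' u N)
    rw [sum_sub_distrib, ← mul_sum]
    linear_combination r * h
  nlinarith [huA N, hθM N]

theorem sum_range_inv_two_pow_succ_le_one (N : ℕ) :
    ∑ k ∈ range N, ((2 : ℝ) ^ (k + 1))⁻¹ ≤ 1 := by
  have h := sum_geometric_two_le N
  have heq : ∀ k : ℕ, ((2 : ℝ) ^ (k + 1))⁻¹ = 2⁻¹ * (1 / 2) ^ k := fun k => by
    rw [pow_succ, mul_inv, one_div, inv_pow, mul_comm]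
  rw [sum_congr rfl fun k _ => heq k, ← mul_sum]
  linarith

theorem two_rpow_add_one_div_two (x : ℝ) :
    (2 : ℝ) ^ ((x + 1) / 2) = √2 * 2 ^ (x / 2) := by
  rw [add_div, Real.rpow_add two_pos, Real.sqrt_eq_rpow, mul_comm]

section NearMinimizer

variable {T : Type u} [MetricSpace T] {F : ℕ → Set T → ℝ} {n : ℕ} {t s ε : ℝ} {x : T}

theorem Kfun_le (hF : ∀ s, F n {z | dist x z ≤ s} ≤ F 0 univ) (ht : 0 ≤ t) (hs : 0 ≤ s) :
    Kfun F n t x ≤ t * s + F 0 univ - F n {z | dist x z ≤ s} := by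
  refine csInf_le ⟨0, ?_⟩ ⟨s, hs, rfl⟩
  rintro v ⟨s', hs', rfl⟩
  nlinarith [hF s', mul_nonneg ht hs']

theorem near_minimizer_le_succ (hF : ∀ s, F n {z | dist x z ≤ s} ≤ F 0 univ)
    (hdec : ∀ H, F (n + 1) H ≤ F n H) (ht : 0 ≤ t) {s' : ℝ} (hs' : 0 ≤ s')
    (hnear : t * s + F 0 univ - F n {z | dist x z ≤ s} ≤ Kfun F n t x + ε) :
    t * s + F 0 univ - F n {z | dist x z ≤ s} ≤
      t * s' + F 0 univ - F (n + 1) {z | dist x z ≤ s'} + ε := by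
  linarith [Kfun_le hF ht hs', hdec {z | dist x z ≤ s'}]

theorem near_minimizer_mul_le (hF : ∀ s, F n {z | dist x z ≤ s} ≤ F 0 univ)
    (hF₀ : 0 ≤ F n {z | dist x z ≤ 0}) (ht : 0 ≤ t)
    (hnear : t * s + F 0 univ - F n {z | dist x z ≤ s} ≤ Kfun F n t x + ε) :
    t * s ≤ F 0 univ + ε := by
  linarith [Kfun_le hF ht le_rfl, hF s]

theorem sum_range_near_minimizer_le {c : ℝ} {s : ℕ → ℝ} (hc : 0 ≤ c)
    (hFnn : ∀ n H, 0 ≤ F n H) (hFle : ∀ n H, F n H ≤ F 0 univ)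
    (hdec : ∀ n H, F (n + 1) H ≤ F n H) (hs : ∀ n, 0 ≤ s (n + 1))
    (hnear : ∀ n : ℕ, c * 2 ^ (((n : ℝ) + 1) / 2) * s (n + 1) + F 0 univ -
        F (n + 1) {z | dist x z ≤ s (n + 1)} ≤
      Kfun F (n + 1) (c * 2 ^ (((n : ℝ) + 1) / 2)) x + ((2 : ℝ) ^ (n + 1))⁻¹ * F 0 univ)
    (N : ℕ) :
    ∑ k ∈ range N, c * 2 ^ (((k : ℝ) + 1) / 2) * s (k + 1) ≤ 16 * F 0 univ := by
  set t : ℕ → ℝ := fun k => c * 2 ^ (((k : ℝ) + 1) / 2)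
  have ht : ∀ k, 0 ≤ t k := fun k => by positivity
  have hF0 : 0 ≤ F 0 univ := hFnn 0 univ
  have ht_succ : ∀ k, t k = (√2)⁻¹ * t (k + 1) := fun k => by
    simp only [t, Nat.cast_add_one, two_rpow_add_one_div_two ((k : ℝ) + 1)]
    field_simp
  have hr : (√2)⁻¹ ≤ 3 / 4 := by
    rw [inv_le_comm₀ (by positivity) (by norm_num), Real.le_sqrt (by norm_num) (by norm_num)]
    norm_num
  have hu_le : ∀ k, t k * s (k + 1) ≤ 2 * F 0 univ := fun k => by
    have := near_minimizer_mul_le (fun _ => hFle _ _) (hFnn _ _) (ht k) (hnear k)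
    nlinarith [inv_le_one_of_one_le₀ (one_le_pow₀ one_le_two : (1 : ℝ) ≤ 2 ^ (k + 1))]
  have hrec : ∀ k, t k * s (k + 1) + (F 0 univ - F (k + 1) {z | dist x z ≤ s (k + 1)}) ≤
      (√2)⁻¹ * (t (k + 1) * s (k + 2)) + (F 0 univ - F (k + 2) {z | dist x z ≤ s (k + 2)}) +
        ((2 : ℝ) ^ (k + 1))⁻¹ * F 0 univ := fun k => by
    have := near_minimizer_le_succ (fun _ => hFle _ _) (hdec (k + 1)) (ht k) (hs (k + 1))
      (hnear k)
    rw [ht_succ k] at this ⊢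
    linarith
  have hmain := mul_sum_range_le_of_le_mul_succ_add
    (θ := fun k => F 0 univ - F (k + 1) {z | dist x z ≤ s (k + 1)}) (M := F 0 univ)
    (by positivity) (mul_nonneg (ht 0) (hs 0)) hu_le (by linarith [hFle 1 {z | dist x z ≤ s 1}])
    (fun k => by linarith [hFnn (k + 1) {z | dist x z ≤ s (k + 1)}]) hrec N
  have herr : ∑ k ∈ range N, ((2 : ℝ) ^ (k + 1))⁻¹ * F 0 univ ≤ F 0 univ := by
    rw [← sum_mul]
    exact mul_le_of_le_one_left hF0 (sum_range_inv_two_pow_succ_le_one N)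
  have hnn : 0 ≤ ∑ k ∈ range N, t k * s (k + 1) :=
    sum_nonneg fun k _ => mul_nonneg (ht k) (hs k)
  nlinarith

end NearMinimizer

theorem ENNReal.tsum_ofReal_le_of_sum_range_le {f : ℕ → ℝ} {c : ℝ} (hf : ∀ n, 0 ≤ f n)
    (h : ∀ N, ∑ n ∈ range N, f n ≤ c) : ∑' n, ENNReal.ofReal (f n) ≤ ENNReal.ofReal c :=
  ENNReal.tsum_le_of_sum_range_le fun N => by
    rw [← ENNReal.ofReal_sum_of_nonneg fun n _ => hf n]
    exact ENNReal.ofReal_le_ofReal (h N)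

/-- **Multiscale interpolation lemma for growth functionals** (Lemma 6.13).
If the `s_n^a(x)` are near-minimizers in the definition of `K_n(La2^{n/2},x)`
(up to additive error `2^{−n} F₀(T)`), then
`sup_{x∈T} Σ_{n≥1} 2^{n/2} s_n^a(x) ≤ C·F₀(T)/(L·a)` for a universal constant `C`. -/
theorem multiscale_interpolation_lemma :
    ∃ C : ℝ, 0 < C ∧
      ∀ (T : Type u) [MetricSpace T] (L a : ℝ) (F : ℕ → Set T → ℝ) (sa : ℕ → T → ℝ),
        0 < L → 0 < a →
        (∀ n H, 0 ≤ F n H) →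
        (∀ (n : ℕ) (H H' : Set T), H ⊆ H' → F n H ≤ F n H') →
        (∀ (n : ℕ) (H : Set T), F (n + 1) H ≤ F n H) →
        (∀ n : ℕ, 1 ≤ n → ∀ x : T, 0 ≤ sa n x ∧
          Kfun F n (L * a * (2 : ℝ) ^ ((n : ℝ) / 2)) x ≤
            L * a * (2 : ℝ) ^ ((n : ℝ) / 2) * sa n x + F 0 Set.univ -
              F n {z | dist x z ≤ sa n x} ∧
          L * a * (2 : ℝ) ^ ((n : ℝ) / 2) * sa n x + F 0 Set.univ -
              F n {z | dist x z ≤ sa n x} ≤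
            Kfun F n (L * a * (2 : ℝ) ^ ((n : ℝ) / 2)) x +
              ((2 : ℝ) ^ n)⁻¹ * F 0 Set.univ) →
        ∀ x : T,
          ∑' n : ℕ, ENNReal.ofReal
              ((2 : ℝ) ^ (((n : ℝ) + 1) / 2) * sa (n + 1) x) ≤
            ENNReal.ofReal (C * F 0 Set.univ / (L * a)) := by
  refine ⟨16, by norm_num, fun T _ L a F sa hL ha hFnn hmono hdec hsa x => ?_⟩
  have hLa : 0 < L * a := mul_pos hL ha
  have hFle : ∀ n H, F n H ≤ F 0 univ := fun n H =>
    (hmono n H univ (subset_univ H)).trans (antitone_nat_of_succ_le (f := F) hdec (Nat.zero_le n) univ)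
  have hs : ∀ n, 0 ≤ sa (n + 1) x := fun n => (hsa (n + 1) (by omega) x).1
  have hnear := fun n : ℕ => (hsa (n + 1) (by omega) x).2.2
  push_cast at hnear
  refine ENNReal.tsum_ofReal_le_of_sum_range_le (fun n => by have := hs n; positivity)
    fun N => ?_
  rw [le_div_iff₀ hLa, sum_mul]
  calc ∑ k ∈ range N, 2 ^ (((k : ℝ) + 1) / 2) * sa (k + 1) x * (L * a)
      = ∑ k ∈ range N, L * a * 2 ^ (((k : ℝ) + 1) / 2) * sa (k + 1) x :=
        sum_congr rfl fun k _ => by ring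
    _ ≤ 16 * F 0 univ :=
        sum_range_near_minimizer_le (s := (sa · x)) hLa.le hFnn hFle hdec hs hnear N
end
end
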